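/- arXiv:quant-ph/0607074 — 6 statements merged into one kernel-verified Lean document; each statement's English description precedes it below -/
import Mathlib

section
/- Fix an integer r ≥ 1. Let B be the formal power series in two commuting variables X and Y with integer coefficients whose coefficient of X^n Y^m is the number of noncrossing contractions with exactly m edges of the word (a^r a†)^n. Then B satisfies the functional equation B = (1 + X·B)·(1 + X·Y·B)^r. -/
/-- Two edges `(i,j)` and `(p,q)` cross if `i < p < j < q` or `p < i < q < j`. -/
def Crosses {N : ℕ} (e f : Fin N × Fin N) : Prop :=
  (e.1 < f.1 ∧ f.1 < e.2 ∧ e.2 < f.2) ∨ (f.1 < e.1 ∧ e.1 < f.2 ∧ f.2 < e.2)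

/-- A contraction of the word `w`: a set of edges `(i,j)` with `i < j`, `w i = false` (an `a`),
`w j = true` (an `a†`), whose endpoints are pairwise distinct. -/
def IsContraction {N : ℕ} (w : Fin N → Bool) (E : Finset (Fin N × Fin N)) : Prop :=
  (∀ e ∈ E, e.1 < e.2 ∧ w e.1 = false ∧ w e.2 = true) ∧
  (∀ e ∈ E, ∀ f ∈ E, e ≠ f → e.1 ≠ f.1 ∧ e.1 ≠ f.2 ∧ e.2 ≠ f.1 ∧ e.2 ≠ f.2)

/-- A set of edges is noncrossing if no two of its edges cross. -/
def IsNoncrossing {N : ℕ} (E : Finset (Fin N × Fin N)) : Prop :=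
  ∀ e ∈ E, ∀ f ∈ E, ¬ Crosses e f

/-- The number of noncrossing contractions of `w` with exactly `m` edges. -/
noncomputable def ncCount {N : ℕ} (w : Fin N → Bool) (m : ℕ) : ℕ :=
  Nat.card {E : Finset (Fin N × Fin N) //
    IsContraction w E ∧ IsNoncrossing E ∧ E.card = m}

/-- The word `(a^r a†)^n`, of length `(r+1)n`: `n` blocks of `r` copies of `a` (`false`)
followed by one `a†` (`true`). -/
def wordRA (r n : ℕ) : Fin ((r + 1) * n) → Bool := fun i => decide (i.val % (r + 1) = r)



/-!
Let `B_d` be the series whose coefficient of `X^n Y^m` counts the noncrossing contractions with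
`m` edges of `(a^r a†)^n` with its first `d` letters deleted, so that `B = B_0`. Classify the
contractions by the partner of the first letter. For `d < r` the first letter is an `a`: either
it stays unmatched, leaving `B_{d+1}`, or it is paired with the `a†` closing some block `j`; then
the contraction splits into a noncrossing contraction of the enclosed factor, which is a
`B_{d+1}`-word followed by `r` letters `a` that can never be matched, and one of the remaining
whole blocks, counted by `B_0`. Hence `B_d = B_{d+1} (1 + X Y B_0)`. For `d = r` the first letter
is an `a†`, which is never matched, so `B_r = 1 + X B_0`. Chaining the `r` steps gives
`B_0 = (1 + X B_0) (1 + X Y B_0)^r`.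
-/

open Finset

theorem card_filter_add_eq {γ δ : Type*} (s : Finset γ) (t : Finset δ) (u : γ → ℕ)
    (v : δ → ℕ) (m : ℕ) :
    #{p ∈ s ×ˢ t | u p.1 + v p.2 = m} =
      ∑ q ∈ antidiagonal m, #{x ∈ s | u x = q.1} * #{y ∈ t | v y = q.2} := by
  have hmaps : Set.MapsTo (fun p : γ × δ => (u p.1, v p.2))
      (({p ∈ s ×ˢ t | u p.1 + v p.2 = m} : Finset (γ × δ)) : Set (γ × δ))
      (antidiagonal m : Set (ℕ × ℕ)) :=
    fun p hp => HasAntidiagonal.mem_antidiagonal.2 (mem_filter.1 hp).2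
  rw [card_eq_sum_card_fiberwise hmaps]
  refine sum_congr rfl fun q hq => ?_
  rw [filter_filter, ← card_product, ← filter_product]
  congr 1
  refine filter_congr fun p _ => ?_
  rw [HasAntidiagonal.mem_antidiagonal] at hq
  rw [Prod.ext_iff]
  omega

section Contraction

variable {α β : Type*} [LinearOrder α] [LinearOrder β]

def EdgesCross (e f : α × α) : Prop :=
  (e.1 < f.1 ∧ f.1 < e.2 ∧ e.2 < f.2) ∨ (f.1 < e.1 ∧ e.1 < f.2 ∧ f.2 < e.2)

def EdgesCompatible (e f : α × α) : Prop :=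
  (e.1 ≠ f.1 ∧ e.1 ≠ f.2 ∧ e.2 ≠ f.1 ∧ e.2 ≠ f.2) ∧ ¬ EdgesCross e f

def IsContractionEdge (w : α → Bool) (e : α × α) : Prop :=
  e.1 < e.2 ∧ w e.1 = false ∧ w e.2 = true

structure IsNCContraction (w : α → Bool) (E : Finset (α × α)) : Prop where
  isEdge : ∀ e ∈ E, IsContractionEdge w e
  pairwise : (E : Set (α × α)).Pairwise EdgesCompatible

variable {w : α → Bool} {E F : Finset (α × α)}

instance : DecidableRel (EdgesCross (α := α)) := fun _ _ => by
  unfold EdgesCross; infer_instance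

instance : DecidableRel (EdgesCompatible (α := α)) := fun _ _ => by
  unfold EdgesCompatible; infer_instance

instance : DecidablePred (IsContractionEdge w) := fun _ => by
  unfold IsContractionEdge; infer_instance

instance : DecidablePred (IsNCContraction w) := fun E =>
  decidable_of_iff
    ((∀ e ∈ E, IsContractionEdge w e) ∧ (E : Set (α × α)).Pairwise EdgesCompatible)
    ⟨fun ⟨h₁, h₂⟩ => ⟨h₁, h₂⟩, fun ⟨h₁, h₂⟩ => ⟨h₁, h₂⟩⟩

theorem IsNCContraction.mono (hE : IsNCContraction w E) (hFE : F ⊆ E) : IsNCContraction w F :=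
  ⟨fun e he => hE.isEdge e (hFE he), hE.pairwise.mono (coe_subset.2 hFE)⟩

theorem isNCContraction_empty (w : α → Bool) : IsNCContraction w ∅ :=
  ⟨by simp, by simp⟩

theorem isContraction_and_isNoncrossing_iff {N : ℕ} {w : Fin N → Bool}
    {E : Finset (Fin N × Fin N)} :
    IsContraction w E ∧ IsNoncrossing E ↔ IsNCContraction w E := by
  constructor
  · rintro ⟨⟨hedge, hdisj⟩, hnc⟩
    exact ⟨hedge, fun e he f hf hef => ⟨hdisj e he f hf hef, hnc e he f hf⟩⟩
  · rintro ⟨hedge, hpw⟩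
    refine ⟨⟨hedge, fun e he f hf hef => (hpw he hf hef).1⟩, fun e he f hf => ?_⟩
    obtain rfl | hef := eq_or_ne e f
    · rintro (⟨h, -⟩ | ⟨h, -⟩) <;> exact lt_irrefl _ h
    · exact (hpw he hf hef).2

theorem isNCContraction_map_iff (f : α ↪o β) (w : β → Bool) (E : Finset (α × α)) :
    IsNCContraction w (E.map (f.toEmbedding.prodMap f.toEmbedding)) ↔
      IsNCContraction (w ∘ f) E := by
  set F := f.toEmbedding.prodMap f.toEmbedding
  have hedge : ∀ e, IsContractionEdge w (F e) ↔ IsContractionEdge (w ∘ f) e := by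
    simp [F, IsContractionEdge]
  have hcompat : Function.onFun EdgesCompatible F = EdgesCompatible := by
    ext e e'
    simp [F, EdgesCompatible, EdgesCross]
  have hpw : (E.map F : Set (β × β)).Pairwise EdgesCompatible ↔
      (E : Set (α × α)).Pairwise EdgesCompatible := by
    rw [coe_map, F.injective.injOn.pairwise_image, hcompat]
  exact ⟨fun ⟨h₁, h₂⟩ => ⟨fun e he => (hedge e).1 (h₁ _ (mem_map_of_mem F he)), hpw.1 h₂⟩,
    fun ⟨h₁, h₂⟩ => ⟨forall_mem_map.2 fun e he => (hedge e).2 (h₁ e he), hpw.2 h₂⟩⟩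

def ncSet (w : α → Bool) (s : Finset α) : Finset (Finset (α × α)) :=
  {E ∈ (s ×ˢ s).powerset | IsNCContraction w E}

def ncCard (w : α → Bool) (s : Finset α) (m : ℕ) : ℕ :=
  #{E ∈ ncSet w s | #E = m}

theorem mem_ncSet {s : Finset α} : E ∈ ncSet w s ↔ E ⊆ s ×ˢ s ∧ IsNCContraction w E := by
  rw [ncSet, mem_filter, mem_powerset]

theorem ncSet_map (f : α ↪o β) (w : β → Bool) (s : Finset α) :
    ncSet w (s.map f.toEmbedding) =
      (ncSet (w ∘ f) s).map (mapEmbedding (f.toEmbedding.prodMap f.toEmbedding)).toEmbedding := by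
  ext E
  simp only [mem_ncSet, mem_map, RelEmbedding.coe_toEmbedding, mapEmbedding_apply,
    ← prodMap_map_product, subset_map_iff]
  constructor
  · rintro ⟨⟨E₀, hE₀, rfl⟩, hE⟩
    exact ⟨E₀, ⟨hE₀, (isNCContraction_map_iff f w E₀).1 hE⟩, rfl⟩
  · rintro ⟨E₀, ⟨hE₀, hE⟩, rfl⟩
    exact ⟨⟨E₀, hE₀, rfl⟩, (isNCContraction_map_iff f w E₀).2 hE⟩

theorem ncCard_map (f : α ↪o β) (w : β → Bool) (s : Finset α) (m : ℕ) :
    ncCard w (s.map f.toEmbedding) m = ncCard (w ∘ f) s m := by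
  rw [ncCard, ncCard, ncSet_map, filter_map, card_map]
  congr 1
  exact filter_congr fun E _ => by simp

theorem ncCard_zero (w : α → Bool) (s : Finset α) : ncCard w s 0 = 1 := by
  rw [ncCard, card_eq_one]
  refine ⟨∅, eq_singleton_iff_unique_mem.2 ⟨?_, fun E hE => card_eq_zero.1 (mem_filter.1 hE).2⟩⟩
  simp [mem_filter, mem_ncSet, isNCContraction_empty]

theorem ncCard_empty_succ (w : α → Bool) (m : ℕ) : ncCard w ∅ (m + 1) = 0 := by
  rw [ncCard, card_eq_zero, filter_eq_empty_iff]
  intro E hE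
  rw [mem_ncSet, empty_product, subset_empty] at hE
  simp [hE.1]

theorem ncCount_eq_ncCard {N : ℕ} (w : Fin N → Bool) (m : ℕ) :
    ncCount w m = ncCard w univ m := by
  classical
  rw [ncCount, Nat.card_eq_fintype_card, Fintype.card_subtype, ncCard]
  congr 1
  ext E
  simp [mem_ncSet, ← isContraction_and_isNoncrossing_iff, and_assoc]

end Contraction

section Interval

variable {w : ℕ → Bool} {E E₁ E₂ : Finset (ℕ × ℕ)} {a b c : ℕ}

theorem ncCount_comp_val (w : ℕ → Bool) (N m : ℕ) :
    ncCount (fun i : Fin N => w i) m = ncCard w (Ico 0 N) m := by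
  have huniv : univ.map (Fin.valOrderEmb N).toEmbedding = Ico 0 N := by
    rw [Nat.Ico_zero_eq_range, ← Nat.Iio_eq_range]
    exact Fin.map_valEmbedding_univ
  rw [ncCount_eq_ncCard, ← huniv]
  exact (ncCard_map (Fin.valOrderEmb N) w univ m).symm

theorem ncCard_Ico_add (w : ℕ → Bool) (a b k m : ℕ) :
    ncCard w (Ico (a + k) (b + k)) m = ncCard (fun i => w (i + k)) (Ico a b) m := by
  rw [← map_add_right_Ico]
  exact ncCard_map (OrderEmbedding.addRight k) w (Ico a b) m

theorem mem_ncSet_Ico :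
    E ∈ ncSet w (Ico a b) ↔ IsNCContraction w E ∧ ∀ e ∈ E, a ≤ e.1 ∧ e.2 < b := by
  rw [mem_ncSet, and_comm, and_congr_right_iff]
  intro hE
  refine ⟨fun h e he => ?_, fun h e he => ?_⟩
  · have := mem_product.1 (h he)
    simp only [mem_Ico] at this
    omega
  · have := (hE.isEdge e he).1
    have := h e he
    simp only [mem_product, mem_Ico]
    omega

theorem filter_ncSet_Ico_unmatched :
    {E ∈ ncSet w (Ico a b) | ∀ e ∈ E, e.1 ≠ a} = ncSet w (Ico (a + 1) b) := by
  ext E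
  simp only [mem_filter, mem_ncSet_Ico]
  constructor
  · rintro ⟨⟨hE, hb⟩, ha⟩
    exact ⟨hE, fun e he => by have := hb e he; have := ha e he; omega⟩
  · rintro ⟨hE, hb⟩
    refine ⟨⟨hE, fun e he => ?_⟩, fun e he => ?_⟩ <;>
    · have := hb e he
      omega

theorem ncCard_Ico_of_black_head (ha : w a = true) (m : ℕ) :
    ncCard w (Ico a b) m = ncCard w (Ico (a + 1) b) m := by
  rw [ncCard, ncCard, ← filter_ncSet_Ico_unmatched]
  congr 2
  refine (filter_true_of_mem fun E hE e he hea => ?_).symm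
  have := ((mem_ncSet_Ico.1 hE).1.isEdge e he).2.1
  rw [hea, ha] at this
  cases this

theorem ncCard_Ico_of_white_tail (hcb : c ≤ b) (hw : ∀ i ∈ Ico c b, w i = false) (m : ℕ) :
    ncCard w (Ico a b) m = ncCard w (Ico a c) m := by
  rw [ncCard, ncCard]
  congr 2
  ext E
  simp only [mem_ncSet_Ico, and_congr_right_iff]
  intro hE
  refine forall₂_congr fun e he => and_congr_right fun _ => ⟨fun h => ?_, fun h => by omega⟩
  by_contra hc
  have := hw e.2 (mem_Ico.2 ⟨by omega, h⟩)
  rw [(hE.isEdge e he).2.2] at this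
  cases this

theorem IsNCContraction.union (hE₁ : IsNCContraction w E₁) (hE₂ : IsNCContraction w E₂)
    (h : ∀ e ∈ E₁, ∀ f ∈ E₂, e.2 < f.1) : IsNCContraction w (E₁ ∪ E₂) := by
  refine ⟨fun e he => ?_, ?_⟩
  · rcases mem_union.1 he with he | he
    exacts [hE₁.isEdge e he, hE₂.isEdge e he]
  · rw [coe_union, Set.pairwise_union]
    refine ⟨hE₁.pairwise, hE₂.pairwise, fun e he f hf _ => ?_⟩
    have := h e he f hf
    have := (hE₁.isEdge e he).1
    have := (hE₂.isEdge f hf).1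
    simp only [EdgesCompatible, EdgesCross]
    omega

theorem IsNCContraction.insert (hE : IsNCContraction w E) (hac : IsContractionEdge w (a, c))
    (h : ∀ e ∈ E, a < e.1 ∧ e.2 < c ∨ c < e.1) : IsNCContraction w (insert (a, c) E) := by
  refine ⟨forall_mem_insert _ _ _ |>.2 ⟨hac, hE.isEdge⟩, ?_⟩
  rw [coe_insert, Set.pairwise_insert]
  refine ⟨hE.pairwise, fun e he _ => ?_⟩
  have := h e he
  have := (hE.isEdge e he).1
  have := hac.1
  simp only [EdgesCompatible, EdgesCross]
  omega

theorem IsNCContraction.nested_or_right (hE : IsNCContraction w E) (hac : (a, c) ∈ E)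
    (ha : ∀ e ∈ E, a ≤ e.1) {e : ℕ × ℕ} (he : e ∈ E) (hne : e ≠ (a, c)) :
    a < e.1 ∧ e.2 < c ∨ c < e.1 := by
  have := hE.pairwise he hac hne
  have := (hE.isEdge e he).1
  have := (hE.isEdge _ hac).1
  have := ha e he
  simp only [EdgesCompatible, EdgesCross] at *
  omega

theorem filter_snd_lt_mem_ncSet_Ico (hE : E ∈ ncSet w (Ico a b)) (hac : (a, c) ∈ E) :
    {e ∈ E | e.2 < c} ∈ ncSet w (Ico (a + 1) c) := by
  obtain ⟨hE, hb⟩ := mem_ncSet_Ico.1 hE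
  refine mem_ncSet_Ico.2 ⟨hE.mono (filter_subset _ _), fun e he => ?_⟩
  obtain ⟨he, hec⟩ := mem_filter.1 he
  have hne : e ≠ (a, c) := by rintro rfl; exact lt_irrefl _ hec
  have := hE.nested_or_right hac (fun e he => (hb e he).1) he hne
  have := (hE.isEdge e he).1
  omega

theorem filter_lt_fst_mem_ncSet_Ico (hE : E ∈ ncSet w (Ico a b)) :
    {e ∈ E | c < e.1} ∈ ncSet w (Ico (c + 1) b) := by
  obtain ⟨hE, hb⟩ := mem_ncSet_Ico.1 hE
  refine mem_ncSet_Ico.2 ⟨hE.mono (filter_subset _ _), fun e he => ?_⟩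
  obtain ⟨he, hce⟩ := mem_filter.1 he
  exact ⟨hce, (hb e he).2⟩

theorem insert_filter_union_filter (hE : E ∈ ncSet w (Ico a b)) (hac : (a, c) ∈ E) :
    insert (a, c) ({e ∈ E | e.2 < c} ∪ {e ∈ E | c < e.1}) = E := by
  obtain ⟨hE, hb⟩ := mem_ncSet_Ico.1 hE
  ext e
  simp only [mem_insert, mem_union, mem_filter]
  constructor
  · rintro (rfl | ⟨he, -⟩ | ⟨he, -⟩) <;> assumption
  · intro he
    by_cases hne : e = (a, c)
    · exact Or.inl hne
    · rcases hE.nested_or_right hac (fun e he => (hb e he).1) he hne with h | h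
      exacts [Or.inr (Or.inl ⟨he, h.2⟩), Or.inr (Or.inr ⟨he, h⟩)]

theorem insert_union_mem_ncSet_Ico (h₁ : E₁ ∈ ncSet w (Ico (a + 1) c))
    (h₂ : E₂ ∈ ncSet w (Ico (c + 1) b)) (hac : IsContractionEdge w (a, c))
    (hcb : c < b) :
    insert (a, c) (E₁ ∪ E₂) ∈ ncSet w (Ico a b) := by
  obtain ⟨hE₁, hb₁⟩ := mem_ncSet_Ico.1 h₁
  obtain ⟨hE₂, hb₂⟩ := mem_ncSet_Ico.1 h₂
  have hsep : ∀ e ∈ E₁, ∀ f ∈ E₂, e.2 < f.1 := fun e he f hf => by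
    have := hb₁ e he; have := hb₂ f hf; omega
  refine mem_ncSet_Ico.2 ⟨(hE₁.union hE₂ hsep).insert hac fun e he => ?_, ?_⟩
  · rcases mem_union.1 he with he | he
    · have := hb₁ e he; omega
    · have := hb₂ e he; omega
  · refine forall_mem_insert _ _ _ |>.2 ⟨⟨le_rfl, hcb⟩, fun e he => ?_⟩
    rcases mem_union.1 he with he | he
    · have := hb₁ e he; omega
    · have := hb₂ e he; have := hac.1; omega

theorem filter_snd_lt_insert_union (h₁ : E₁ ∈ ncSet w (Ico (a + 1) c))
    (h₂ : E₂ ∈ ncSet w (Ico (c + 1) b)) :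
    {e ∈ insert (a, c) (E₁ ∪ E₂) | e.2 < c} = E₁ := by
  rw [filter_insert, if_neg (lt_irrefl c), filter_union, filter_true_of_mem, filter_false_of_mem,
    union_empty]
  · intro e he
    have := (mem_ncSet_Ico.1 h₂).2 e he
    have := ((mem_ncSet_Ico.1 h₂).1.isEdge e he).1
    omega
  · exact fun e he => ((mem_ncSet_Ico.1 h₁).2 e he).2

theorem filter_lt_fst_insert_union (h₁ : E₁ ∈ ncSet w (Ico (a + 1) c))
    (h₂ : E₂ ∈ ncSet w (Ico (c + 1) b)) (hac : a < c) :
    {e ∈ insert (a, c) (E₁ ∪ E₂) | c < e.1} = E₂ := by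
  rw [filter_insert, if_neg (by omega), filter_union, filter_false_of_mem, filter_true_of_mem,
    empty_union]
  · exact fun e he => ((mem_ncSet_Ico.1 h₂).2 e he).1
  · intro e he
    have := (mem_ncSet_Ico.1 h₁).2 e he
    have := ((mem_ncSet_Ico.1 h₁).1.isEdge e he).1
    omega

theorem card_insert_union (h₁ : E₁ ∈ ncSet w (Ico (a + 1) c))
    (h₂ : E₂ ∈ ncSet w (Ico (c + 1) b)) :
    #(insert (a, c) (E₁ ∪ E₂)) = #E₁ + #E₂ + 1 := by
  have hb₁ := (mem_ncSet_Ico.1 h₁).2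
  have hb₂ := (mem_ncSet_Ico.1 h₂).2
  have hlt₂ := (mem_ncSet_Ico.1 h₂).1.isEdge
  rw [card_insert_of_notMem, card_union_of_disjoint]
  · refine disjoint_left.2 fun e he₁ he₂ => ?_
    have := hb₁ e he₁; have := hb₂ e he₂; have := (hlt₂ e he₂).1
    omega
  · rw [mem_union]
    rintro (h | h)
    · have := hb₁ _ h
      simp at this
    · have := hb₂ _ h; have := (hlt₂ _ h).1
      simp only at *
      omega

theorem card_filter_mem_ncSet_Ico (hac : IsContractionEdge w (a, c)) (hcb : c < b) (m : ℕ) :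
    #{E ∈ ncSet w (Ico a b) | (a, c) ∈ E ∧ #E = m + 1} =
      #{p ∈ ncSet w (Ico (a + 1) c) ×ˢ ncSet w (Ico (c + 1) b) | #p.1 + #p.2 = m} := by
  apply card_nbij' (fun E => (E.filter (·.2 < c), E.filter (c < ·.1)))
    (fun p => insert (a, c) (p.1 ∪ p.2))
  · intro E hE
    obtain ⟨hE, hacE, hcard⟩ := mem_filter.1 hE
    have h₁ := filter_snd_lt_mem_ncSet_Ico hE hacE
    have h₂ := filter_lt_fst_mem_ncSet_Ico (c := c) hE
    refine mem_filter.2 ⟨mem_product.2 ⟨h₁, h₂⟩, ?_⟩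
    have := card_insert_union h₁ h₂
    rw [insert_filter_union_filter hE hacE] at this
    simp only
    omega
  · rintro ⟨E₁, E₂⟩ hp
    obtain ⟨hp, hcard⟩ := mem_filter.1 hp
    obtain ⟨h₁, h₂⟩ := mem_product.1 hp
    refine mem_filter.2 ⟨insert_union_mem_ncSet_Ico h₁ h₂ hac hcb, mem_insert_self _ _, ?_⟩
    rw [card_insert_union h₁ h₂, ← hcard]
  · intro E hE
    obtain ⟨hE, hacE, -⟩ := mem_filter.1 hE
    exact insert_filter_union_filter hE hacE
  · rintro ⟨E₁, E₂⟩ hp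
    obtain ⟨h₁, h₂⟩ := mem_product.1 (mem_filter.1 hp).1
    exact Prod.ext (filter_snd_lt_insert_union h₁ h₂) (filter_lt_fst_insert_union h₁ h₂ hac.1)

theorem ncCard_Ico_succ_of_white_head (ha : w a = false) (m : ℕ) :
    ncCard w (Ico a b) (m + 1) = ncCard w (Ico (a + 1) b) (m + 1) +
      ∑ c ∈ Ioo a b with w c = true, ∑ q ∈ antidiagonal m,
        ncCard w (Ico (a + 1) c) q.1 * ncCard w (Ico (c + 1) b) q.2 := by
  set S := {E ∈ ncSet w (Ico a b) | #E = m + 1}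
  have hunmatched : #{E ∈ S | ∀ e ∈ E, e.1 ≠ a} = ncCard w (Ico (a + 1) b) (m + 1) := by
    rw [ncCard, ← filter_ncSet_Ico_unmatched, filter_filter, filter_filter]
    simp only [and_comm]
  have hmatched : {E ∈ S | ¬ ∀ e ∈ E, e.1 ≠ a} = {c ∈ Ioo a b | w c = true}.biUnion
      fun c => {E ∈ ncSet w (Ico a b) | (a, c) ∈ E ∧ #E = m + 1} := by
    ext E
    simp only [S, mem_filter, mem_biUnion, mem_Ioo]
    constructor
    · rintro ⟨⟨hE, hcard⟩, h⟩
      obtain ⟨e, he, rfl⟩ : ∃ e ∈ E, e.1 = a := by simpa using h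
      obtain ⟨hlt, -, hblack⟩ := (mem_ncSet_Ico.1 hE).1.isEdge e he
      exact ⟨e.2, ⟨⟨hlt, ((mem_ncSet_Ico.1 hE).2 e he).2⟩, hblack⟩, hE, he, hcard⟩
    · rintro ⟨c, -, hE, hac, hcard⟩
      exact ⟨⟨hE, hcard⟩, fun h => h _ hac rfl⟩
  have hdisj : (({c ∈ Ioo a b | w c = true} : Finset ℕ) : Set ℕ).PairwiseDisjoint
      fun c => {E ∈ ncSet w (Ico a b) | (a, c) ∈ E ∧ #E = m + 1} := by
    intro c _ c' _ hcc'
    refine disjoint_left.2 fun E hE hE' => ?_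
    obtain ⟨hE, hac, -⟩ := mem_filter.1 hE
    have hne : (a, c) ≠ (a, c') := fun h => hcc' (congrArg Prod.snd h)
    exact ((mem_ncSet_Ico.1 hE).1.pairwise hac (mem_filter.1 hE').2.1 hne).1.1 rfl
  rw [ncCard, ← card_filter_add_card_filter_not (s := S) (fun E => ∀ e ∈ E, e.1 ≠ a),
    hunmatched, hmatched, card_biUnion hdisj]
  congr 1
  refine sum_congr rfl fun c hc => ?_
  obtain ⟨hc, hwc⟩ := mem_filter.1 hc
  obtain ⟨hac, hcb⟩ := mem_Ioo.1 hc
  rw [card_filter_mem_ncSet_Ico ⟨hac, ha, hwc⟩ hcb, card_filter_add_eq]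
  rfl

end Interval

/-- The infinite word `(a^r a†)^∞`, of which `wordRA r n` is the prefix of length `(r + 1) n`. -/
def blockWord (r i : ℕ) : Bool := decide (i % (r + 1) = r)

/-- `B_d` of the header: the number of noncrossing contractions with `m` edges of `(a^r a†)^n`
with its first `d` letters deleted (the empty word if `(r + 1) n ≤ d`). -/
def blockCount (r d n m : ℕ) : ℕ := ncCard (blockWord r) (Ico d ((r + 1) * n)) m

section BlockWord

variable {r : ℕ}

theorem blockWord_add_mul (r i j : ℕ) : blockWord r (i + (r + 1) * j) = blockWord r i := by
  simp [blockWord]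

theorem blockWord_eq_true_iff {i : ℕ} : blockWord r i = true ↔ i % (r + 1) = r := by
  simp [blockWord]

theorem blockWord_of_lt {i : ℕ} (h : i < r) : blockWord r i = false := by
  simp [blockWord, Nat.mod_eq_of_lt (Nat.lt_succ_of_lt h), h.ne]

theorem blockWord_self (r : ℕ) : blockWord r r = true :=
  blockWord_eq_true_iff.2 (Nat.mod_eq_of_lt (Nat.lt_succ_self r))

theorem ncCard_blockWord_add_mul (a b j m : ℕ) :
    ncCard (blockWord r) (Ico (a + (r + 1) * j) (b + (r + 1) * j)) m =
      ncCard (blockWord r) (Ico a b) m := by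
  simp only [ncCard_Ico_add, blockWord_add_mul]

theorem filter_blockWord_Ioo {d : ℕ} (hd : d < r) (n : ℕ) :
    {c ∈ Ioo d ((r + 1) * (n + 1)) | blockWord r c = true} =
      (range (n + 1)).image fun j => (r + 1) * j + r := by
  ext c
  simp only [mem_filter, mem_Ioo, mem_image, mem_range, blockWord_eq_true_iff]
  constructor
  · rintro ⟨⟨-, hc⟩, hcr⟩
    refine ⟨c / (r + 1), Nat.div_lt_of_lt_mul hc, ?_⟩
    have := Nat.div_add_mod c (r + 1)
    omega
  · rintro ⟨j, hj, rfl⟩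
    refine ⟨⟨by nlinarith, by nlinarith⟩, ?_⟩
    rw [add_comm, Nat.add_mul_mod_self_left, Nat.mod_eq_of_lt (Nat.lt_succ_self r)]

theorem blockCount_zero_succ (r d m : ℕ) : blockCount r d 0 (m + 1) = 0 := by
  rw [blockCount, mul_zero, Ico_eq_empty_of_le (Nat.zero_le d), ncCard_empty_succ]

theorem blockCount_self_succ (r n m : ℕ) : blockCount r r (n + 1) m = blockCount r 0 n m := by
  rw [blockCount, ncCard_Ico_of_black_head (blockWord_self r), blockCount,
    ← ncCard_blockWord_add_mul 0 ((r + 1) * n) 1]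
  congr 2 <;> ring

theorem blockCount_succ_succ {d : ℕ} (hd : d < r) (n m : ℕ) :
    blockCount r d (n + 1) (m + 1) = blockCount r (d + 1) (n + 1) (m + 1) +
      ∑ q ∈ antidiagonal n, ∑ p ∈ antidiagonal m,
        blockCount r (d + 1) q.1 p.1 * blockCount r 0 q.2 p.2 := by
  rw [blockCount, ncCard_Ico_succ_of_white_head (blockWord_of_lt hd), filter_blockWord_Ioo hd,
    sum_image fun j _ j' _ h => by simpa using h, Nat.sum_antidiagonal_eq_sum_range_succ_mk]
  refine congrArg₂ (· + ·) rfl (sum_congr rfl fun j hj => sum_congr rfl fun p _ => ?_)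
  obtain ⟨k, rfl⟩ := Nat.exists_eq_add_of_le (Nat.lt_succ_iff.1 (mem_range.1 hj))
  have hinner : ncCard (blockWord r) (Ico (d + 1) ((r + 1) * j + r)) p.1 =
      blockCount r (d + 1) j p.1 := by
    refine ncCard_Ico_of_white_tail (by omega) (fun i hi => ?_) p.1
    obtain ⟨t, rfl⟩ := Nat.exists_eq_add_of_le (mem_Ico.1 hi).1
    rw [add_comm, blockWord_add_mul]
    exact blockWord_of_lt (by have := (mem_Ico.1 hi).2; omega)
  have houter : ncCard (blockWord r) (Ico ((r + 1) * j + r + 1) ((r + 1) * (j + k + 1))) p.2 =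
      blockCount r 0 k p.2 := by
    rw [blockCount, ← ncCard_blockWord_add_mul 0 ((r + 1) * k) (j + 1)]
    congr 2 <;> ring
  rw [hinner, houter, Nat.add_sub_cancel_left]

end BlockWord

open MvPowerSeries

noncomputable abbrev bideg (n m : ℕ) : Fin 2 →₀ ℕ := Finsupp.single 0 n + Finsupp.single 1 m

section Coefficients

variable {σ R : Type*} [CommSemiring R]

theorem coeff_single_add_X_mul (i : σ) (u : σ →₀ ℕ) (φ : MvPowerSeries σ R) :
    coeff (Finsupp.single i 1 + u) (X i * φ) = coeff u φ := by
  rw [X_def, coeff_add_monomial_mul, one_mul]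

theorem coeff_X_mul_of_eq_zero {i : σ} {u : σ →₀ ℕ} (h : u i = 0) (φ : MvPowerSeries σ R) :
    coeff u (X i * φ) = 0 := by
  rw [X_def, coeff_monomial_mul, if_neg]
  simp [Finsupp.single_le_iff, h]

theorem bideg_succ_left (n m : ℕ) : bideg (n + 1) m = Finsupp.single 0 1 + bideg n m := by
  rw [bideg, add_comm n, Finsupp.single_add, add_assoc]

theorem bideg_succ_right (n m : ℕ) : bideg n (m + 1) = Finsupp.single 1 1 + bideg n m := by
  rw [bideg, add_comm m, Finsupp.single_add, add_left_comm]

theorem ext_bideg {φ ψ : MvPowerSeries (Fin 2) R}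
    (h : ∀ n m, coeff (bideg n m) φ = coeff (bideg n m) ψ) : φ = ψ := by
  ext u
  have hu : u = bideg (u 0) (u 1) := by
    ext i
    fin_cases i <;> simp
  rw [hu]
  exact h _ _

theorem coeff_one_bideg (n m : ℕ) :
    coeff (bideg n m) (1 : MvPowerSeries (Fin 2) R) = if n = 0 ∧ m = 0 then 1 else 0 := by
  rw [coeff_one]
  congr 1
  simp [bideg, Finsupp.ext_iff, Fin.forall_fin_two]

theorem coeff_bideg_mul (φ ψ : MvPowerSeries (Fin 2) R) (n m : ℕ) :
    coeff (bideg n m) (φ * ψ) = ∑ q ∈ antidiagonal n, ∑ p ∈ antidiagonal m,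
      coeff (bideg q.1 p.1) φ * coeff (bideg q.2 p.2) ψ := by
  rw [coeff_mul, ← sum_product']
  symm
  apply sum_nbij' (fun x => (bideg x.1.1 x.2.1, bideg x.1.2 x.2.2))
    (fun u => ((u.1 0, u.2 0), (u.1 1, u.2 1)))
  · rintro ⟨⟨i, j⟩, ⟨k, l⟩⟩ h
    simp only [mem_product, HasAntidiagonal.mem_antidiagonal] at h ⊢
    rw [← h.1, ← h.2]
    simp only [bideg, Finsupp.single_add]
    abel
  · rintro ⟨u, v⟩ h
    rw [HasAntidiagonal.mem_antidiagonal] at h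
    simp only [mem_product, HasAntidiagonal.mem_antidiagonal]
    exact ⟨by simpa using congrArg (· 0) h, by simpa using congrArg (· 1) h⟩
  · rintro ⟨⟨i, j⟩, ⟨k, l⟩⟩ -
    simp
  · rintro ⟨u, v⟩ -
    ext i <;> fin_cases i <;> simp
  · rintro ⟨⟨i, j⟩, ⟨k, l⟩⟩ -
    rfl

end Coefficients

def blockSeries (r d : ℕ) : MvPowerSeries (Fin 2) ℤ := fun u => blockCount r d (u 0) (u 1)

section BlockSeries

variable {r : ℕ}

theorem coeff_blockSeries (r d n m : ℕ) :
    coeff (bideg n m) (blockSeries r d) = blockCount r d n m := by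
  simp [blockSeries, coeff_apply]

theorem blockSeries_self (r : ℕ) : blockSeries r r = 1 + X 0 * blockSeries r 0 := by
  refine ext_bideg fun n m => ?_
  rw [map_add, coeff_one_bideg, coeff_blockSeries]
  rcases n with _ | n
  · rw [coeff_X_mul_of_eq_zero (by simp)]
    rcases m with _ | m
    · simp [blockCount, ncCard_zero]
    · simp [blockCount_zero_succ]
  · rw [bideg_succ_left, coeff_single_add_X_mul, coeff_blockSeries, blockCount_self_succ]
    simp

theorem blockSeries_of_lt {d : ℕ} (hd : d < r) :
    blockSeries r d = blockSeries r (d + 1) * (1 + X 0 * X 1 * blockSeries r 0) := by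
  rw [mul_one_add, mul_left_comm, mul_assoc]
  refine ext_bideg fun n m => ?_
  rw [map_add, coeff_blockSeries, coeff_blockSeries]
  rcases n with _ | n
  · rw [coeff_X_mul_of_eq_zero (by simp)]
    rcases m with _ | m
    · simp [blockCount, ncCard_zero]
    · simp [blockCount_zero_succ]
  rw [bideg_succ_left, coeff_single_add_X_mul]
  rcases m with _ | m
  · rw [coeff_X_mul_of_eq_zero (by simp)]
    simp [blockCount, ncCard_zero]
  rw [bideg_succ_right, coeff_single_add_X_mul, coeff_bideg_mul, blockCount_succ_succ hd]
  push_cast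
  simp only [coeff_blockSeries]

theorem blockSeries_zero (r : ℕ) :
    blockSeries r 0 = (1 + X 0 * blockSeries r 0) * (1 + X 0 * X 1 * blockSeries r 0) ^ r := by
  have h : ∀ k ≤ r, blockSeries r (r - k) =
      blockSeries r r * (1 + X 0 * X 1 * blockSeries r 0) ^ k := by
    intro k
    induction k with
    | zero => simp
    | succ k ih =>
      intro hk
      rw [blockSeries_of_lt (by omega), show r - (k + 1) + 1 = r - k by omega, ih (by omega),
        pow_succ, mul_assoc]
  simpa [blockSeries_self] using h r le_rfl

end BlockSeries

theorem stmt0_general (r : ℕ) (B : MvPowerSeries (Fin 2) ℤ)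
    (hB : ∀ n m : ℕ,
      MvPowerSeries.coeff (Finsupp.single 0 n + Finsupp.single 1 m) B
        = (ncCount (wordRA r n) m : ℤ)) :
    B = (1 + MvPowerSeries.X 0 * B) * (1 + MvPowerSeries.X 0 * MvPowerSeries.X 1 * B) ^ r := by
  obtain rfl : B = blockSeries r 0 := ext_bideg fun n m => by
    rw [hB, coeff_blockSeries, blockCount, ← ncCount_comp_val]
    rfl
  exact blockSeries_zero r

theorem stmt0 (r : ℕ) (hr : 1 ≤ r) (B : MvPowerSeries (Fin 2) ℤ)
    (hB : ∀ n m : ℕ,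
      MvPowerSeries.coeff (Finsupp.single 0 n + Finsupp.single 1 m) B
        = (ncCount (wordRA r n) m : ℤ)) :
    B = (1 + MvPowerSeries.X 0 * B) * (1 + MvPowerSeries.X 0 * MvPowerSeries.X 1 * B) ^ r :=
  stmt0_general r B hB
end

section
/- Fix an integer r ≥ 1. For all integers n ≥ 0 and 0 ≤ j ≤ n, the number of noncrossing contractions with exactly j edges of the word (a^r a†)^n satisfies (n+1) · #{noncrossing contractions of (a^r a†)^n with j edges} = C(n+1, j+1) · C(rn+r, j), where C denotes the binomial coefficient. -/
/-!
A noncrossing contraction is determined by its sets `W` of matched `a`s and `B` of matched `a†`s,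
and a pair `(W, B)` of equal size arises this way exactly when every prefix of the word contains
at least as many points of `W` as of `B`.

Appending one block `a^r a†` with its `a†` selected turns these ballot pairs into the selections
of `j` `a`s and `j + 1` `a†`s of `(a^r a†)^(n+1)` whose `±1` walk stays nonnegative until the last
step. By the cycle lemma every selection of `j` `a`s and `j + 1` `a†`s has exactly one rotation with
this property, and it is a rotation by whole blocks; so the `n + 1` block rotations multiply the
ballot pairs into all `C(r(n+1), j) · C(n+1, j+1)` selections.
-/

open Finset

section Contractions

variable {N : ℕ} {w : Fin N → Bool}

def IsSelection (w : Fin N → Bool) (a b : ℕ) (Q : Finset (Fin N) × Finset (Fin N)) : Prop :=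
  (∀ x ∈ Q.1, w x = false) ∧ (∀ y ∈ Q.2, w y = true) ∧ #Q.1 = a ∧ #Q.2 = b

def IsBallot (Q : Finset (Fin N) × Finset (Fin N)) : Prop :=
  ∀ p : ℕ, #{y ∈ Q.2 | y.val < p} ≤ #{x ∈ Q.1 | x.val < p}

lemma isBallot_iff_forall_lt {m : ℕ} (P : Finset (Fin N) × Finset (Fin N)) (hm : N < m) :
    IsBallot P ↔ ∀ p < m, #{y ∈ P.2 | y.val < p} ≤ #{x ∈ P.1 | x.val < p} := by
  refine ⟨fun h p _ => h p, fun h p => ?_⟩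
  by_cases hp : p < m
  · exact h p hp
  · have hfull : ∀ S : Finset (Fin N), {x ∈ S | x.val < p} = {x ∈ S | x.val < N} := fun S =>
      filter_congr fun x _ => iff_of_true (by omega) x.isLt
    rw [hfull, hfull]
    exact h N hm

lemma IsBallot.exists_fst_le {P : Finset (Fin N) × Finset (Fin N)} (hP : IsBallot P)
    {y : Fin N} (hy : y ∈ P.2) : ∃ x ∈ P.1, x ≤ y := by
  obtain ⟨x, hx⟩ := card_pos.1 ((card_pos.2 ⟨y, mem_filter.2 ⟨hy, Nat.lt_succ_self _⟩⟩).trans_le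
    (hP (y.val + 1)))
  rw [mem_filter] at hx
  exact ⟨x, hx.1, Fin.le_def.2 (Nat.lt_succ_iff.1 hx.2)⟩

lemma IsBallot.erase {P : Finset (Fin N) × Finset (Fin N)} (hP : IsBallot P) {x y : Fin N}
    (hx : x ∈ P.1) (hy : y ∈ P.2) (hxy : x < y) (hymin : ∀ y' ∈ P.2, y ≤ y') :
    IsBallot (P.1.erase x, P.2.erase y) := by
  intro p
  simp only [filter_erase]
  by_cases hp : p ≤ y.val
  · have : {y' ∈ P.2 | y'.val < p} = ∅ :=
      filter_eq_empty_iff.2 fun y' hy' hy'p => by have := hymin y' hy'; omega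
    simp [this]
  · rw [card_erase_of_mem (mem_filter.2 ⟨hy, by omega⟩),
      card_erase_of_mem (mem_filter.2 ⟨hx, by have : x.val < y.val := hxy; omega⟩)]
    exact Nat.sub_le_sub_right (hP p) 1

lemma IsNoncrossing.mono {E F : Finset (Fin N × Fin N)} (hE : IsNoncrossing E) (h : F ⊆ E) :
    IsNoncrossing F :=
  fun e he f hf => hE e (h he) f (h hf)

namespace IsContraction

variable {E F : Finset (Fin N × Fin N)}

lemma mono (hE : IsContraction w E) (h : F ⊆ E) : IsContraction w F :=
  ⟨fun e he => hE.1 e (h he), fun e he f hf hne => hE.2 e (h he) f (h hf) hne⟩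

lemma injOn_fst (hE : IsContraction w E) : Set.InjOn Prod.fst (E : Set (Fin N × Fin N)) :=
  fun e he f hf hef => by_contra fun hne => (hE.2 e he f hf hne).1 hef

lemma injOn_snd (hE : IsContraction w E) : Set.InjOn Prod.snd (E : Set (Fin N × Fin N)) :=
  fun e he f hf hef => by_contra fun hne => (hE.2 e he f hf hne).2.2.2 hef

lemma image_fst_erase (hE : IsContraction w E) {e : Fin N × Fin N} (he : e ∈ E) :
    (E.erase e).image Prod.fst = (E.image Prod.fst).erase e.1 := by
  ext x
  simp only [mem_image, mem_erase]
  constructor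
  · rintro ⟨f, ⟨hfe, hf⟩, rfl⟩
    exact ⟨(hE.2 f hf e he hfe).1, f, hf, rfl⟩
  · rintro ⟨hx, f, hf, rfl⟩
    exact ⟨f, ⟨by rintro rfl; exact hx rfl, hf⟩, rfl⟩

lemma image_snd_erase (hE : IsContraction w E) {e : Fin N × Fin N} (he : e ∈ E) :
    (E.erase e).image Prod.snd = (E.image Prod.snd).erase e.2 := by
  ext x
  simp only [mem_image, mem_erase]
  constructor
  · rintro ⟨f, ⟨hfe, hf⟩, rfl⟩
    exact ⟨(hE.2 f hf e he hfe).2.2.2, f, hf, rfl⟩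
  · rintro ⟨hx, f, hf, rfl⟩
    exact ⟨f, ⟨by rintro rfl; exact hx rfl, hf⟩, rfl⟩

lemma isSelection (hE : IsContraction w E) :
    IsSelection w #E #E (E.image Prod.fst, E.image Prod.snd) := by
  refine ⟨?_, ?_, card_image_of_injOn hE.injOn_fst, card_image_of_injOn hE.injOn_snd⟩
  · simp only [mem_image]
    rintro _ ⟨e, he, rfl⟩
    exact (hE.1 e he).2.1
  · simp only [mem_image]
    rintro _ ⟨e, he, rfl⟩
    exact (hE.1 e he).2.2

/-- The edges ending before `p` also start before `p`. -/
lemma isBallot (hE : IsContraction w E) : IsBallot (E.image Prod.fst, E.image Prod.snd) := by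
  intro p
  set Eₚ := E.filter (·.2.val < p)
  have hsub : Eₚ ⊆ E := filter_subset _ _
  calc #{y ∈ E.image Prod.snd | y.val < p} = #(Eₚ.image Prod.snd) := by rw [filter_image]
    _ = #(Eₚ.image Prod.fst) := by
      rw [card_image_of_injOn (hE.injOn_snd.mono hsub),
        card_image_of_injOn (hE.injOn_fst.mono hsub)]
    _ ≤ #{x ∈ E.image Prod.fst | x.val < p} := by
      refine card_le_card ?_
      simp only [Eₚ, subset_iff, mem_image, mem_filter]
      rintro _ ⟨e, ⟨he, hep⟩, rfl⟩
      exact ⟨⟨e, he, rfl⟩, lt_trans (hE.1 e he).1 hep⟩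

lemma fst_le_of_snd_min (hE : IsContraction w E) (hnc : IsNoncrossing E) {e : Fin N × Fin N}
    (he : e ∈ E) (hmin : ∀ f ∈ E, e.2 ≤ f.2) {u : Fin N} (hu : u ∈ E.image Prod.fst)
    (hue : u < e.2) : u ≤ e.1 := by
  obtain ⟨f, hf, rfl⟩ := mem_image.1 hu
  by_contra! hlt
  have hfe : f ≠ e := by rintro rfl; exact lt_irrefl _ hlt
  have hef : e.2 < f.2 := lt_of_le_of_ne (hmin f hf) (hE.2 f hf e he hfe).2.2.2.symm
  exact hnc e he f hf (Or.inl ⟨hlt, hue, hef⟩)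

theorem eq_of_image_eq (hE : IsContraction w E) (hF : IsContraction w F)
    (hncE : IsNoncrossing E) (hncF : IsNoncrossing F)
    (hfst : E.image Prod.fst = F.image Prod.fst) (hsnd : E.image Prod.snd = F.image Prod.snd) :
    E = F := by
  induction h : #E generalizing E F with
  | zero =>
    rw [card_eq_zero] at h
    subst h
    rw [image_empty, eq_comm, image_eq_empty] at hsnd
    exact hsnd.symm
  | succ k ih =>
    obtain ⟨e, he, hemin⟩ := E.exists_min_image (·.2) (card_pos.1 (by omega))
    obtain ⟨f, hf, hfe⟩ := mem_image.1 (hsnd ▸ mem_image_of_mem Prod.snd he)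
    have hfmin : ∀ g ∈ F, f.2 ≤ g.2 := fun g hg => by
      obtain ⟨g', hg', hg'g⟩ := mem_image.1 (hsnd ▸ mem_image_of_mem Prod.snd hg)
      exact hfe ▸ hg'g ▸ hemin g' hg'
    have hfe1 : f.1 ≤ e.1 := hE.fst_le_of_snd_min hncE he hemin
      (hfst ▸ mem_image_of_mem Prod.fst hf) (hfe ▸ (hF.1 f hf).1)
    have hef1 : e.1 ≤ f.1 := hF.fst_le_of_snd_min hncF hf hfmin
      (hfst.symm ▸ mem_image_of_mem Prod.fst he) (hfe.symm ▸ (hE.1 e he).1)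
    obtain rfl : e = f := Prod.ext (le_antisymm hef1 hfe1) hfe.symm
    have herase : E.erase e = F.erase e :=
      ih (hE.mono (erase_subset _ _)) (hF.mono (erase_subset _ _))
        (hncE.mono (erase_subset _ _)) (hncF.mono (erase_subset _ _))
        (by rw [hE.image_fst_erase he, hF.image_fst_erase hf, hfst])
        (by rw [hE.image_snd_erase he, hF.image_snd_erase hf, hsnd])
        (by rw [card_erase_of_mem he, h]; rfl)
    rw [← insert_erase he, herase, insert_erase hf]

lemma insert {e : Fin N × Fin N} (hE : IsContraction w E)
    (he : e.1 < e.2 ∧ w e.1 = false ∧ w e.2 = true)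
    (hdisj : ∀ f ∈ E, e.1 ≠ f.1 ∧ e.1 ≠ f.2 ∧ e.2 ≠ f.1 ∧ e.2 ≠ f.2) :
    IsContraction w (insert e E) := by
  refine ⟨fun f hf => ?_, fun f hf g hg hfg => ?_⟩
  · rcases mem_insert.1 hf with rfl | hf
    exacts [he, hE.1 f hf]
  · rcases mem_insert.1 hf with rfl | hfE <;> rcases mem_insert.1 hg with rfl | hgE
    · exact absurd rfl hfg
    · exact hdisj g hgE
    · obtain ⟨h1, h2, h3, h4⟩ := hdisj f hfE
      exact ⟨h1.symm, h3.symm, h2.symm, h4.symm⟩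
    · exact hE.2 f hfE g hgE hfg

end IsContraction

lemma crosses_comm {N : ℕ} {e f : Fin N × Fin N} : Crosses e f ↔ Crosses f e := by
  unfold Crosses
  tauto

lemma not_crosses_self {N : ℕ} (e : Fin N × Fin N) : ¬ Crosses e e := by
  rintro (⟨h, -, -⟩ | ⟨h, -, -⟩) <;> exact lt_irrefl _ h

lemma IsNoncrossing.insert {E : Finset (Fin N × Fin N)} {e : Fin N × Fin N}
    (hE : IsNoncrossing E) (he : ∀ f ∈ E, ¬ Crosses e f) : IsNoncrossing (insert e E) := by
  intro f hf g hg
  rcases mem_insert.1 hf with rfl | hfE <;> rcases mem_insert.1 hg with rfl | hgE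
  · exact not_crosses_self _
  · exact he g hgE
  · exact fun h => he f hfE (crosses_comm.1 h)
  · exact hE f hfE g hgE

/-- Match the leftmost `a†` with the rightmost `a` before it, and recurse. -/
theorem exists_contraction_of_isBallot {k : ℕ} {P : Finset (Fin N) × Finset (Fin N)}
    (hP : IsSelection w k k P) (hb : IsBallot P) :
    ∃ E, IsContraction w E ∧ IsNoncrossing E ∧
      E.image Prod.fst = P.1 ∧ E.image Prod.snd = P.2 := by
  induction k generalizing P with
  | zero =>
    obtain ⟨-, -, h1, h2⟩ := hP
    refine ⟨∅, ⟨by simp, by simp⟩, by simp [IsNoncrossing], ?_, ?_⟩ <;>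
      simp [card_eq_zero.1 h1, card_eq_zero.1 h2]
  | succ k ih =>
    obtain ⟨hW, hB, hWk, hBk⟩ := hP
    have hBne : P.2.Nonempty := card_pos.1 (by omega)
    set b := P.2.min' hBne
    have hbB : b ∈ P.2 := P.2.min'_mem hBne
    have hbmin : ∀ y ∈ P.2, b ≤ y := fun y hy => P.2.min'_le y hy
    have hWbne : {x ∈ P.1 | x < b}.Nonempty := by
      obtain ⟨x, hx, hxb⟩ := hb.exists_fst_le hbB
      have hxb' : x ≠ b := ne_of_apply_ne w (by rw [hW x hx, hB b hbB]; decide)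
      exact ⟨x, mem_filter.2 ⟨hx, lt_of_le_of_ne hxb hxb'⟩⟩
    set u := {x ∈ P.1 | x < b}.max' hWbne
    obtain ⟨huW, hub⟩ := mem_filter.1 ({x ∈ P.1 | x < b}.max'_mem hWbne)
    have humax : ∀ x ∈ P.1, x < b → x ≤ u := fun x hx hxb =>
      le_max' _ x (mem_filter.2 ⟨hx, hxb⟩)
    obtain ⟨E, hE, hnc, hfst, hsnd⟩ := ih
      ⟨fun x hx => hW x (mem_of_mem_erase hx), fun y hy => hB y (mem_of_mem_erase hy),
        by rw [card_erase_of_mem huW, hWk]; rfl, by rw [card_erase_of_mem hbB, hBk]; rfl⟩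
      (hb.erase huW hbB hub hbmin)
    dsimp only at hfst hsnd
    have hf1 : ∀ f ∈ E, f.1 ∈ P.1.erase u := fun f hf => hfst ▸ mem_image_of_mem _ hf
    have hf2 : ∀ f ∈ E, f.2 ∈ P.2.erase b := fun f hf => hsnd ▸ mem_image_of_mem _ hf
    have hbf : ∀ f ∈ E, b < f.2 := fun f hf =>
      lt_of_le_of_ne (hbmin _ (mem_of_mem_erase (hf2 f hf))) (ne_of_mem_erase (hf2 f hf)).symm
    have hfu : ∀ f ∈ E, f.1 < b → f.1 < u := fun f hf hfb =>
      lt_of_le_of_ne (humax _ (mem_of_mem_erase (hf1 f hf)) hfb) (ne_of_mem_erase (hf1 f hf))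
    refine ⟨insert (u, b) E, hE.insert ⟨hub, hW u huW, hB b hbB⟩ fun f hf => ⟨?_, ?_, ?_, ?_⟩,
      hnc.insert fun f hf => ?_, by rw [image_insert, hfst, insert_erase huW],
      by rw [image_insert, hsnd, insert_erase hbB]⟩
    · exact (ne_of_mem_erase (hf1 f hf)).symm
    · exact ne_of_apply_ne w (by rw [hW u huW, (hE.1 f hf).2.2]; decide)
    · exact ne_of_apply_ne w (by rw [hB b hbB, (hE.1 f hf).2.1]; decide)
    · exact (hbf f hf).ne
    · rintro (⟨h1, h2, -⟩ | ⟨-, -, h3⟩)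
      · exact lt_asymm h1 (hfu f hf h2)
      · exact lt_asymm h3 (hbf f hf)

theorem ncCount_eq_card_isBallot (w : Fin N → Bool) (j : ℕ) :
    ncCount w j = Nat.card {P // IsSelection w j j P ∧ IsBallot P} := by
  refine Nat.card_congr (Equiv.ofBijective
    (fun E => ⟨(E.1.image Prod.fst, E.1.image Prod.snd), ?_⟩) ⟨?_, ?_⟩)
  · obtain ⟨E, hE, -, rfl⟩ := E
    exact ⟨hE.isSelection, hE.isBallot⟩
  · intro ⟨E, hE, hncE, _⟩ ⟨F, hF, hncF, _⟩ h
    simp only [Subtype.mk.injEq, Prod.mk.injEq] at h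
    exact Subtype.ext (hE.eq_of_image_eq hF hncE hncF h.1 h.2)
  · rintro ⟨P, hP, hb⟩
    obtain ⟨E, hE, hnc, hfst, hsnd⟩ := exists_contraction_of_isBallot hP hb
    have hcard : #E = j := by rw [← card_image_of_injOn hE.injOn_fst, hfst, hP.2.2.1]
    exact ⟨⟨E, hE, hnc, hcard⟩, by simp [hfst, hsnd]⟩

end Contractions

section CycleLemma

def IsGoodCut (S : ℕ → ℤ) (m c : ℕ) : Prop := ∀ k < m, S c ≤ S (c + k)

variable {S : ℕ → ℤ} {m : ℕ}

lemma IsGoodCut.not_of_lt (hS : ∀ p, S (p + m) = S p - 1) {c c' : ℕ} (hcc' : c < c')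
    (hc' : c' < m) (hc : IsGoodCut S m c) : ¬ IsGoodCut S m c' := fun hgood' => by
  have h₁ := hc (c' - c) (by omega)
  have h₂ := hgood' (c + m - c') (by omega)
  rw [Nat.add_sub_cancel' hcc'.le] at h₁
  rw [Nat.add_sub_cancel' (by omega), hS] at h₂
  omega

/-- The cycle lemma. The good cut is the first minimum of `S` on `[0, m)`. -/
theorem existsUnique_isGoodCut (hm : 0 < m) (hS : ∀ p, S (p + m) = S p - 1) :
    ∃! c, c < m ∧ IsGoodCut S m c := by
  classical
  have hmin : ∃ c, c < m ∧ ∀ s < m, S c ≤ S s := by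
    obtain ⟨c, hc, hcmin⟩ := (range m).exists_min_image S (nonempty_range_iff.2 hm.ne')
    exact ⟨c, mem_range.1 hc, fun s hs => hcmin s (mem_range.2 hs)⟩
  set c := Nat.find hmin
  obtain ⟨hcm, hcmin⟩ : c < m ∧ ∀ s < m, S c ≤ S s := Nat.find_spec hmin
  have hbefore : ∀ s < c, S c < S s := fun s hs => by
    have := Nat.find_min hmin hs
    simp only [not_and, not_forall, not_le] at this
    obtain ⟨t, ht, hts⟩ := this (hs.trans hcm)
    exact (hcmin t ht).trans_lt hts
  have hgood : IsGoodCut S m c := fun k hk => by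
    by_cases hck : c + k < m
    · exact hcmin _ hck
    · obtain ⟨s, hs⟩ : ∃ s, c + k = s + m := ⟨_, (Nat.sub_add_cancel (not_lt.1 hck)).symm⟩
      rw [hs, hS]
      linarith [hbefore s (by omega)]
  refine ⟨c, ⟨hcm, hgood⟩, fun c' ⟨hc', hgood'⟩ => ?_⟩
  rcases lt_trichotomy c' c with h | h | h
  · exact absurd hgood (hgood'.not_of_lt hS h hcm)
  · exact h
  · exact absurd hgood' (hgood.not_of_lt hS h hc')

end CycleLemma

section Rotation

open Fin.NatCast

variable {M : ℕ} [NeZero M]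

def step (Q : Finset (Fin M) × Finset (Fin M)) (x : Fin M) : ℤ :=
  (if x ∈ Q.1 then 1 else 0) - (if x ∈ Q.2 then 1 else 0)

/-- The height profile of the periodic `±1` walk that steps up at `Q.1` and down at `Q.2`. -/
def height (Q : Finset (Fin M) × Finset (Fin M)) (p : ℕ) : ℤ :=
  ∑ i ∈ range p, step Q i

variable (Q : Finset (Fin M) × Finset (Fin M))

lemma height_zero : height Q 0 = 0 := sum_range_zero _

lemma height_succ (p : ℕ) : height Q (p + 1) = height Q p + step Q p := sum_range_succ _ p

lemma height_add (p k : ℕ) :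
    height Q (p + k) = height Q p + ∑ i ∈ range k, step Q ↑(p + i) :=
  sum_range_add _ p k

lemma height_add_period (p : ℕ) : height Q (p + M) = height Q p + (#Q.1 - #Q.2) := by
  have hsum : ∑ x, step Q x = #Q.1 - #Q.2 := by
    simp only [step, sum_sub_distrib, sum_boole, filter_univ_mem]
  rw [height_add, ← hsum, ← Fin.sum_univ_eq_sum_range (fun i => step Q ↑(p + i))]
  simp only [Nat.cast_add, Fin.cast_val_eq_self]
  exact congrArg _ (Equiv.sum_comp (Equiv.addLeft (p : Fin M)) (step Q))

lemma card_range_filter_natCast_mem (S : Finset (Fin M)) {p : ℕ} (hp : p ≤ M) :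
    #{i ∈ range p | ((i : ℕ) : Fin M) ∈ S} = #{x ∈ S | x.val < p} := by
  rw [← card_map Fin.valEmbedding]
  congr 1
  ext i
  simp only [mem_filter, mem_range, mem_map, Fin.valEmbedding_apply]
  constructor
  · rintro ⟨hi, hiS⟩
    exact ⟨i, ⟨hiS, by rwa [Fin.val_natCast, Nat.mod_eq_of_lt (hi.trans_le hp)]⟩,
      by rw [Fin.val_natCast, Nat.mod_eq_of_lt (hi.trans_le hp)]⟩
  · rintro ⟨x, ⟨hxS, hxp⟩, rfl⟩
    exact ⟨hxp, by rwa [Fin.cast_val_eq_self]⟩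

lemma height_of_le {p : ℕ} (hp : p ≤ M) :
    height Q p = #{x ∈ Q.1 | x.val < p} - #{y ∈ Q.2 | y.val < p} := by
  simp only [height, step, sum_sub_distrib, sum_boole, card_range_filter_natCast_mem _ hp]

omit [NeZero M] in
lemma mem_snd_of_step_neg {x : Fin M} (hx : step Q x < 0) : x ∈ Q.2 := by
  by_contra h
  simp only [step, h, if_false] at hx
  split_ifs at hx <;> omega

def rotate (c : Fin M) (Q : Finset (Fin M) × Finset (Fin M)) :
    Finset (Fin M) × Finset (Fin M) :=
  (Q.1.map (Equiv.addRight c).toEmbedding, Q.2.map (Equiv.addRight c).toEmbedding)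

lemma step_rotate (c x : Fin M) : step (rotate c Q) x = step Q (x - c) := by
  simp [step, rotate, mem_map_equiv, sub_eq_add_neg]

lemma height_rotate_add (c k : ℕ) :
    height (rotate c Q) (c + k) = height (rotate c Q) c + height Q k := by
  rw [height_add]
  congr 1
  refine sum_congr rfl fun i _ => ?_
  rw [step_rotate, Nat.cast_add, add_sub_cancel_left]

lemma isGoodCut_rotate_iff (c : ℕ) :
    IsGoodCut (height (rotate c Q)) M c ↔ IsGoodCut (height Q) M 0 := by
  simp only [IsGoodCut, height_rotate_add, le_add_iff_nonneg_right, height_zero, zero_add]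

lemma rotate_rotate (c d : Fin M) : rotate c (rotate d Q) = rotate (d + c) Q := by
  simp only [rotate, map_map]
  congr 1 <;> congr 1 <;> ext x <;> simp [add_assoc]

lemma rotate_zero : rotate 0 Q = Q := by
  ext x <;> simp only [rotate, mem_map_equiv, Equiv.addRight_symm_apply, neg_zero, add_zero]

lemma rotate_injective (c : Fin M) : Function.Injective (rotate c) := fun Q Q' h => by
  simp only [rotate, Prod.mk.injEq, map_inj] at h
  exact Prod.ext h.1 h.2

lemma isSelection_rotate_iff {w : Fin M → Bool} {a b : ℕ} {c : Fin M}
    (hw : ∀ x, w (x + c) = w x) : IsSelection w a b (rotate c Q) ↔ IsSelection w a b Q := by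
  simp only [IsSelection, rotate, forall_mem_map, card_map, Equiv.coe_toEmbedding,
    Equiv.coe_addRight, hw]

end Rotation

section Counting

lemma card_isSelection {N : ℕ} (w : Fin N → Bool) (a b : ℕ) :
    Nat.card {Q // IsSelection w a b Q} =
      (#{x | w x = false}).choose a * (#{y | w y = true}).choose b := by
  rw [← card_powersetCard, ← card_powersetCard, ← card_product, ← Nat.card_eq_finsetCard]
  refine Nat.card_congr (Equiv.subtypeEquivRight fun Q => ?_)
  simp only [IsSelection, mem_product, mem_powersetCard, subset_iff, mem_filter, mem_univ,
    true_and]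
  tauto

lemma card_filter_val_eq_count (K : ℕ) (p : ℕ → Prop) [DecidablePred p] :
    #{i : Fin K | p i.val} = Nat.count p K := by
  rw [Nat.count_eq_card_filter_range, ← card_map Fin.valEmbedding]
  congr 1
  ext x
  simp only [mem_map, mem_filter, mem_univ, true_and, Fin.valEmbedding_apply, mem_range]
  exact ⟨by rintro ⟨i, hi, rfl⟩; exact ⟨i.isLt, hi⟩, fun ⟨hx, hp⟩ => ⟨⟨x, hx⟩, hp, rfl⟩⟩

lemma card_wordRA_true (r m : ℕ) : #{y | wordRA r m y = true} = m := by
  have hmod : (· % (r + 1) = r) = (· ≡ r [MOD r + 1]) := by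
    funext x
    rw [Nat.ModEq, Nat.mod_eq_of_lt (Nat.lt_succ_self r)]
  simp only [wordRA, decide_eq_true_eq]
  rw [card_filter_val_eq_count _ (· % (r + 1) = r)]
  simp only [hmod]
  rw [Nat.count_modEq_card _ (Nat.succ_pos r)]
  simp

lemma card_wordRA_false (r m : ℕ) : #{x | wordRA r m x = false} = r * m := by
  have h := card_filter_add_card_filter_not (s := univ) (fun y => wordRA r m y = true)
  simp only [Bool.not_eq_true, card_wordRA_true, card_univ, Fintype.card_fin] at h
  linarith

end Counting

section BlockRotation

open Fin.NatCast

lemma wordRA_natCast (r m i : ℕ) [NeZero ((r + 1) * m)] :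
    wordRA r m (i : Fin ((r + 1) * m)) = decide (i % (r + 1) = r) := by
  simp only [wordRA, Fin.val_natCast, Nat.mod_mod_of_dvd _ (dvd_mul_right _ _)]

lemma wordRA_add_natCast_mul (r m t : ℕ) [NeZero ((r + 1) * m)] (x : Fin ((r + 1) * m)) :
    wordRA r m (x + ((r + 1) * t : ℕ)) = wordRA r m x := by
  rw [← Fin.cast_val_eq_self x, ← Nat.cast_add, wordRA_natCast, Fin.cast_val_eq_self,
    Nat.add_mul_mod_self_left]
  rfl

variable {r n j : ℕ} {Q : Finset (Fin ((r + 1) * (n + 1))) × Finset (Fin ((r + 1) * (n + 1)))}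

lemma IsSelection.height_add_period (hQ : IsSelection (wordRA r (n + 1)) j (j + 1) Q) (p : ℕ) :
    height Q (p + (r + 1) * (n + 1)) = height Q p - 1 := by
  rw [_root_.height_add_period, hQ.2.2.1, hQ.2.2.2]
  push_cast
  ring

/-- Just before a good cut the walk steps down, at an `a†`, which ends a block. -/
lemma IsSelection.dvd_of_isGoodCut (hQ : IsSelection (wordRA r (n + 1)) j (j + 1) Q) {c : ℕ}
    (hc : IsGoodCut (height Q) ((r + 1) * (n + 1)) c) : r + 1 ∣ c := by
  have hM : 0 < (r + 1) * (n + 1) := by positivity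
  have hdown : height Q (c + ((r + 1) * (n + 1) - 1) + 1) <
      height Q (c + ((r + 1) * (n + 1) - 1)) := by
    rw [show c + ((r + 1) * (n + 1) - 1) + 1 = c + (r + 1) * (n + 1) by omega,
      hQ.height_add_period]
    linarith [hc ((r + 1) * (n + 1) - 1) (by omega)]
  rw [height_succ] at hdown
  have hcol := hQ.2.1 _ (mem_snd_of_step_neg Q (by linarith))
  rw [wordRA_natCast, decide_eq_true_eq] at hcol
  have hdvd : r + 1 ∣ c + (r + 1) * (n + 1) := by
    rw [show c + (r + 1) * (n + 1) = c + ((r + 1) * (n + 1) - 1) + 1 by omega]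
    generalize c + ((r + 1) * (n + 1) - 1) = a at hcol ⊢
    have := Nat.div_add_mod a (r + 1)
    exact ⟨a / (r + 1) + 1, by rw [mul_add_one]; omega⟩
  exact (Nat.dvd_add_left (dvd_mul_right (r + 1) (n + 1))).1 hdvd

variable (r n j) in
/-- Rotating by whole blocks is a free action whose orbits each contain exactly one configuration
with its good cut at `0`. -/
theorem card_isSelection_eq_mul :
    Nat.card {Q // IsSelection (wordRA r (n + 1)) j (j + 1) Q} =
      (n + 1) * Nat.card {Q // IsSelection (wordRA r (n + 1)) j (j + 1) Q ∧
        IsGoodCut (height Q) ((r + 1) * (n + 1)) 0} := by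
  have hM : 0 < (r + 1) * (n + 1) := by positivity
  have hblocks : ∀ t : Fin (n + 1), (r + 1) * (t : ℕ) < (r + 1) * (n + 1) := fun t =>
    Nat.mul_lt_mul_of_pos_left t.isLt (Nat.succ_pos r)
  suffices e : Fin (n + 1) × {Q // IsSelection (wordRA r (n + 1)) j (j + 1) Q ∧
      IsGoodCut (height Q) ((r + 1) * (n + 1)) 0} ≃
      {Q // IsSelection (wordRA r (n + 1)) j (j + 1) Q} by
    rw [← Nat.card_congr e, Nat.card_prod, Nat.card_fin]
  refine (Equiv.ofBijective (fun x => ⟨rotate ((r + 1) * (x.1 : ℕ) : ℕ) x.2.1,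
    (isSelection_rotate_iff _ (wordRA_add_natCast_mul r (n + 1) _)).2 x.2.2.1⟩) ⟨?_, ?_⟩)
  · intro ⟨t, Q, hQ, hgood⟩ ⟨t', Q', hQ', hgood'⟩ h
    simp only [Subtype.mk.injEq] at h
    have hR := (isSelection_rotate_iff Q (wordRA_add_natCast_mul r (n + 1) t)).2 hQ
    have htt' : (r + 1) * (t : ℕ) = (r + 1) * t' :=
      (existsUnique_isGoodCut hM hR.height_add_period).unique
        ⟨hblocks t, (isGoodCut_rotate_iff Q _).2 hgood⟩
        ⟨hblocks t', h ▸ (isGoodCut_rotate_iff Q' _).2 hgood'⟩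
    obtain rfl : t = t' := Fin.ext (Nat.eq_of_mul_eq_mul_left (Nat.succ_pos r) htt')
    obtain rfl : Q = Q' := rotate_injective _ h
    rfl
  · intro ⟨R, hR⟩
    obtain ⟨c, ⟨hcM, hc⟩, -⟩ := existsUnique_isGoodCut hM hR.height_add_period
    obtain ⟨t, rfl⟩ := hR.dvd_of_isGoodCut hc
    set Q := rotate (-(((r + 1) * t : ℕ) : Fin ((r + 1) * (n + 1)))) R
    have hQR : rotate ((r + 1) * t : ℕ) Q = R := by
      rw [rotate_rotate, neg_add_cancel, rotate_zero]
    refine ⟨⟨⟨t, Nat.lt_of_mul_lt_mul_left hcM⟩, Q, ?_, ?_⟩, Subtype.ext hQR⟩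
    · exact (isSelection_rotate_iff Q (wordRA_add_natCast_mul r (n + 1) t)).1 (hQR ▸ hR)
    · exact (isGoodCut_rotate_iff Q _).1 (hQR ▸ hc)

end BlockRotation

section AppendBlock

variable (r n : ℕ)

lemma blocks_lt_succ : (r + 1) * n < (r + 1) * (n + 1) :=
  Nat.mul_lt_mul_of_pos_left n.lt_succ_self (Nat.succ_pos r)

def lastBlack : Fin ((r + 1) * (n + 1)) :=
  ⟨(r + 1) * n + r, by rw [mul_add_one]; omega⟩

def appendBlock (P : Finset (Fin ((r + 1) * n)) × Finset (Fin ((r + 1) * n))) :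
    Finset (Fin ((r + 1) * (n + 1))) × Finset (Fin ((r + 1) * (n + 1))) :=
  (P.1.map (Fin.castLEEmb (blocks_lt_succ r n).le),
    insert (lastBlack r n) (P.2.map (Fin.castLEEmb (blocks_lt_succ r n).le)))

variable {r n}

lemma lastBlack_notMem_map (S : Finset (Fin ((r + 1) * n))) :
    lastBlack r n ∉ S.map (Fin.castLEEmb (blocks_lt_succ r n).le) := by
  simp only [mem_map, Fin.castLEEmb_apply, lastBlack, Fin.ext_iff, Fin.val_castLE, not_exists,
    not_and]
  intro x _ hx
  omega

lemma wordRA_lastBlack : wordRA r (n + 1) (lastBlack r n) = true := by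
  simp [wordRA, lastBlack]

lemma eq_lastBlack_of_le {y : Fin ((r + 1) * (n + 1))} (hy : (r + 1) * n ≤ y.val)
    (hyc : wordRA r (n + 1) y = true) : y = lastBlack r n := by
  obtain ⟨d, hd⟩ := Nat.exists_eq_add_of_le hy
  have hdr : d < r + 1 := by
    have := y.isLt
    have := mul_add_one (r + 1) n
    omega
  simp only [wordRA, decide_eq_true_eq, hd, Nat.mul_add_mod, Nat.mod_eq_of_lt hdr] at hyc
  exact Fin.ext (by rw [hd, hyc]; rfl)

lemma appendBlock_injective : Function.Injective (appendBlock r n) := fun P P' h => by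
  simp only [appendBlock, Prod.mk.injEq, map_inj] at h
  refine Prod.ext h.1 (map_injective (Fin.castLEEmb (blocks_lt_succ r n).le) ?_)
  rw [← erase_insert (lastBlack_notMem_map P.2), h.2, erase_insert (lastBlack_notMem_map P'.2)]

lemma isSelection_appendBlock_iff {j : ℕ}
    {P : Finset (Fin ((r + 1) * n)) × Finset (Fin ((r + 1) * n))} :
    IsSelection (wordRA r (n + 1)) j (j + 1) (appendBlock r n P) ↔
      IsSelection (wordRA r n) j j P := by
  simp only [IsSelection, appendBlock, forall_mem_map, forall_mem_insert, Fin.castLEEmb_apply,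
    card_map, card_insert_of_notMem (lastBlack_notMem_map _), wordRA_lastBlack, true_and,
    add_left_inj]
  rfl

lemma isGoodCut_appendBlock_iff
    {P : Finset (Fin ((r + 1) * n)) × Finset (Fin ((r + 1) * n))} :
    IsGoodCut (height (appendBlock r n P)) ((r + 1) * (n + 1)) 0 ↔ IsBallot P := by
  rw [isBallot_iff_forall_lt P (blocks_lt_succ r n)]
  refine forall₂_congr fun p hp => ?_
  have hlast : ¬ (lastBlack r n).val < p := by
    simp only [lastBlack, not_lt]; rw [mul_add_one] at hp; omega
  rw [height_zero, zero_add, height_of_le _ hp.le, sub_nonneg, Nat.cast_le]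
  simp only [appendBlock, filter_insert, hlast, if_false, filter_map, card_map]
  rfl

lemma exists_map_castLEEmb {K M : ℕ} (h : K ≤ M) {S : Finset (Fin M)}
    (hS : ∀ x ∈ S, x.val < K) : ∃ T : Finset (Fin K), T.map (Fin.castLEEmb h) = S := by
  refine ⟨S.preimage (Fin.castLE h) (Fin.castLE_injective h).injOn, ?_⟩
  ext x
  simp only [mem_map, mem_preimage, Fin.castLEEmb_apply]
  exact ⟨by rintro ⟨y, hy, rfl⟩; exact hy, fun hx => ⟨⟨x, hS x hx⟩, hx, rfl⟩⟩

/-- The walk is back at height `0` when the last block starts, which forces every selected `a`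
into the first `n` blocks and the last `a†` into the selection. -/
lemma exists_appendBlock_eq {j : ℕ}
    {Q : Finset (Fin ((r + 1) * (n + 1))) × Finset (Fin ((r + 1) * (n + 1)))}
    (hQ : IsSelection (wordRA r (n + 1)) j (j + 1) Q)
    (hgood : IsGoodCut (height Q) ((r + 1) * (n + 1)) 0) : ∃ P, appendBlock r n P = Q := by
  have hballot := hgood _ (blocks_lt_succ r n)
  rw [height_zero, zero_add, height_of_le _ (blocks_lt_succ r n).le, sub_nonneg,
    Nat.cast_le] at hballot
  have hsub : Q.2 ⊆ insert (lastBlack r n) {y ∈ Q.2 | y.val < (r + 1) * n} := fun y hy => by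
    by_cases hyK : y.val < (r + 1) * n
    · exact mem_insert_of_mem (mem_filter.2 ⟨hy, hyK⟩)
    · exact mem_insert.2 (Or.inl (eq_lastBlack_of_le (not_lt.1 hyK) (hQ.2.1 y hy)))
  have hcard₂ := (card_le_card hsub).trans (card_insert_le _ _)
  have hcard₁ : #{x ∈ Q.1 | x.val < (r + 1) * n} ≤ #Q.1 := card_le_card (filter_subset _ _)
  obtain ⟨-, -, hj₁, hj₂⟩ := hQ
  have hQ₁ : {x ∈ Q.1 | x.val < (r + 1) * n} = Q.1 :=
    eq_of_subset_of_card_le (filter_subset _ _) (by omega)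
  have hQ₂ : Q.2 = insert (lastBlack r n) {y ∈ Q.2 | y.val < (r + 1) * n} :=
    eq_of_subset_of_card_le hsub ((card_insert_le _ _).trans (by omega))
  obtain ⟨T₁, hT₁⟩ := exists_map_castLEEmb (blocks_lt_succ r n).le (S := Q.1)
    fun x hx => by rw [← hQ₁] at hx; exact (mem_filter.1 hx).2
  obtain ⟨T₂, hT₂⟩ := exists_map_castLEEmb (blocks_lt_succ r n).le
    fun y (hy : y ∈ {y ∈ Q.2 | y.val < (r + 1) * n}) => (mem_filter.1 hy).2
  exact ⟨(T₁, T₂), Prod.ext hT₁ (by rw [appendBlock, hT₂]; exact hQ₂.symm)⟩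

variable (r n) in
theorem card_isBallot_eq_card_isGoodCut (j : ℕ) :
    Nat.card {P // IsSelection (wordRA r n) j j P ∧ IsBallot P} =
      Nat.card {Q // IsSelection (wordRA r (n + 1)) j (j + 1) Q ∧
        IsGoodCut (height Q) ((r + 1) * (n + 1)) 0} :=
  Nat.card_congr <| Equiv.ofBijective
    (fun P => ⟨appendBlock r n P, isSelection_appendBlock_iff.2 P.2.1,
      isGoodCut_appendBlock_iff.2 P.2.2⟩)
    ⟨fun _ _ h => Subtype.ext (appendBlock_injective (congrArg Subtype.val h)),
      fun ⟨Q, hQ, hgood⟩ => by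
        obtain ⟨P, rfl⟩ := exists_appendBlock_eq hQ hgood
        exact ⟨⟨P, isSelection_appendBlock_iff.1 hQ, isGoodCut_appendBlock_iff.1 hgood⟩, rfl⟩⟩

end AppendBlock

theorem stmt1_general (r : ℕ) (n j : ℕ) :
    (n + 1) * ncCount (wordRA r n) j
      = Nat.choose (n + 1) (j + 1) * Nat.choose (r * n + r) j := by
  rw [ncCount_eq_card_isBallot, card_isBallot_eq_card_isGoodCut, ← card_isSelection_eq_mul,
    card_isSelection, card_wordRA_false, card_wordRA_true, mul_add_one, mul_comm]

theorem stmt1 (r : ℕ) (hr : 1 ≤ r) (n j : ℕ) (hj : j ≤ n) :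
    (n + 1) * ncCount (wordRA r n) j
      = Nat.choose (n + 1) (j + 1) * Nat.choose (r * n + r) j :=
  stmt1_general r n j
end

section
/- Fix an integer r ≥ 1. For all integers n ≥ 0 and 0 ≤ j ≤ n, the number of noncrossing contractions with exactly j edges of the word (a (a†)^r)^n satisfies (n+1) · #{noncrossing contractions of (a (a†)^r)^n with j edges} = C(n+1, j+1) · C(rn+r, j), where C denotes the binomial coefficient. -/
/-- The word `(a (a†)^r)^n`, of length `(r+1)n`: `n` blocks, each consisting of one `a`
(`false`) followed by `r` copies of `a†` (`true`). -/
def wordAR (r n : ℕ) : Fin ((r + 1) * n) → Bool := fun i => decide (0 < i.val % (r + 1))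


open Finset


section
variable {M : ℕ}

lemma filter_lt_succ (C : Finset (Fin M)) (p : Fin M → Prop) [DecidablePred p] (t : ℕ) (ht : t < M) :
    (C.filter (fun i => p i ∧ i.val < t+1)).card
      = (C.filter (fun i => p i ∧ i.val < t)).card
        + (if (⟨t, ht⟩ : Fin M) ∈ C ∧ p ⟨t, ht⟩ then 1 else 0) := by
  by_cases hc : (⟨t, ht⟩ : Fin M) ∈ C ∧ p ⟨t, ht⟩
  · rw [if_pos hc]
    have h2 : C.filter (fun i => p i ∧ i.val < t+1) = insert ⟨t,ht⟩ (C.filter (fun i => p i ∧ i.val < t)) := by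
      ext x
      simp only [mem_filter, mem_insert]
      constructor
      · rintro ⟨hx, hp, hlt⟩
        rcases Nat.lt_succ_iff_lt_or_eq.mp hlt with h|h
        · exact Or.inr ⟨hx, hp, h⟩
        · exact Or.inl (Fin.ext h)
      · rintro (rfl|⟨hx,hp,hlt⟩)
        · exact ⟨hc.1, hc.2, Nat.lt_succ_self t⟩
        · exact ⟨hx, hp, Nat.lt_succ_of_lt hlt⟩
    rw [h2, card_insert_of_notMem (by simp)]
  · rw [if_neg hc, add_zero]
    congr 1
    ext x
    simp only [mem_filter]
    constructor
    · rintro ⟨hx,hp,hlt⟩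
      refine ⟨hx,hp,?_⟩
      rcases Nat.lt_succ_iff_lt_or_eq.mp hlt with h|h
      · exact h
      · exact absurd ⟨(Fin.ext h : x = ⟨t,ht⟩) ▸ hx, (Fin.ext h : x = ⟨t,ht⟩) ▸ hp⟩ hc
    · rintro ⟨hx,hp,hlt⟩; exact ⟨hx,hp,Nat.lt_succ_of_lt hlt⟩

lemma filter_lt_zero (C : Finset (Fin M)) (p : Fin M → Prop) [DecidablePred p] :
    (C.filter (fun i => p i ∧ i.val < 0)) = ∅ := by
  ext x; simp

lemma filter_lt_stable (C : Finset (Fin M)) (p : Fin M → Prop) [DecidablePred p] (t : ℕ) (ht : M ≤ t) :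
    (C.filter (fun i => p i ∧ i.val < t)) = (C.filter (fun i => p i ∧ i.val < M)) := by
  ext x
  simp only [mem_filter]
  have := x.isLt
  constructor
  · rintro ⟨hx,hp,_⟩; exact ⟨hx,hp,x.isLt⟩
  · rintro ⟨hx,hp,_⟩; exact ⟨hx,hp, lt_of_lt_of_le x.isLt ht⟩

end

def cntW (r : ℕ) {M : ℕ} (C : Finset (Fin M)) (t : ℕ) : ℕ :=
  (C.filter (fun i => i.val % (r+1) = 0 ∧ i.val < t)).card

def cntB (r : ℕ) {M : ℕ} (C : Finset (Fin M)) (t : ℕ) : ℕ :=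
  (C.filter (fun i => i.val % (r+1) ≠ 0 ∧ i.val < t)).card

lemma Lpos (r n : ℕ) : 0 < (r+1)*(n+1) := Nat.mul_pos (Nat.succ_pos r) (Nat.succ_pos n)

def wt (r n : ℕ) (C : Finset (Fin ((r+1)*(n+1)))) (p : ℕ) : ℤ :=
  if (⟨p % ((r+1)*(n+1)), Nat.mod_lt _ (Lpos r n)⟩ : Fin ((r+1)*(n+1))) ∈ C then
    (if p % (r+1) = 0 then 1 else -1) else 0

def Sx (r n : ℕ) (C : Finset (Fin ((r+1)*(n+1)))) (t : ℕ) : ℤ :=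
  ∑ u ∈ Finset.range t, wt r n C u

lemma wt_periodic (r n : ℕ) (C : Finset (Fin ((r+1)*(n+1)))) (p : ℕ) :
    wt r n C (p + (r+1)*(n+1)) = wt r n C p := by
  have h1 : (⟨(p + (r+1)*(n+1)) % ((r+1)*(n+1)), Nat.mod_lt _ (Lpos r n)⟩ : Fin ((r+1)*(n+1)))
      = ⟨p % ((r+1)*(n+1)), Nat.mod_lt _ (Lpos r n)⟩ := Fin.ext (Nat.add_mod_right _ _)
  unfold wt
  rw [h1, Nat.add_mul_mod_self_left]

lemma Sx_zero (r n : ℕ) (C : Finset (Fin ((r+1)*(n+1)))) : Sx r n C 0 = 0 := rfl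

lemma Sx_succ (r n : ℕ) (C : Finset (Fin ((r+1)*(n+1)))) (t : ℕ) :
    Sx r n C (t+1) = Sx r n C t + wt r n C t := Finset.sum_range_succ _ _

lemma Sx_shift (r n : ℕ) (C : Finset (Fin ((r+1)*(n+1)))) (a t : ℕ) :
    Sx r n C (a + t) = Sx r n C a + ∑ u ∈ Finset.range t, wt r n C (a + u) := by
  induction t with
  | zero => simp
  | succ t ih => rw [← Nat.add_assoc, Sx_succ, ih, Finset.sum_range_succ]; ring

lemma Sx_periodic (r n : ℕ) (C : Finset (Fin ((r+1)*(n+1)))) (t : ℕ) :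
    Sx r n C ((r+1)*(n+1) + t) = Sx r n C ((r+1)*(n+1)) + Sx r n C t := by
  rw [Sx_shift]
  congr 1
  apply Finset.sum_congr rfl
  intro u _
  rw [Nat.add_comm, wt_periodic]

lemma wt_lt (r n : ℕ) (C : Finset (Fin ((r+1)*(n+1)))) (t : ℕ) (ht : t < (r+1)*(n+1)) :
    wt r n C t = if (⟨t, ht⟩ : Fin ((r+1)*(n+1))) ∈ C then
      (if t % (r+1) = 0 then (1:ℤ) else -1) else 0 := by
  have h1 : (⟨t % ((r+1)*(n+1)), Nat.mod_lt _ (Lpos r n)⟩ : Fin ((r+1)*(n+1)))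
      = ⟨t, ht⟩ := Fin.ext (Nat.mod_eq_of_lt ht)
  unfold wt
  rw [h1]


lemma Sx_prefix (r n : ℕ) (C : Finset (Fin ((r+1)*(n+1)))) (t : ℕ) (ht : t ≤ (r+1)*(n+1)) :
    Sx r n C t = (cntW r C t : ℤ) - (cntB r C t : ℤ) := by
  induction t with
  | zero =>
    unfold cntW cntB
    rw [filter_lt_zero, filter_lt_zero]
    simp [Sx_zero]
  | succ t ih =>
    have htM : t < (r+1)*(n+1) := ht
    rw [Sx_succ, ih (le_of_lt htM), wt_lt r n C t htM]
    unfold cntW cntB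
    rw [filter_lt_succ C _ t htM, filter_lt_succ C _ t htM]
    by_cases hm : (⟨t, htM⟩ : Fin ((r+1)*(n+1))) ∈ C
    · by_cases hw : t % (r+1) = 0
      · rw [if_pos hm, if_pos hw, if_pos ⟨hm, hw⟩, if_neg (by simp [hw])]
        push_cast; ring
      · rw [if_pos hm, if_neg hw, if_neg (by simp [hw]), if_pos ⟨hm, hw⟩]
        push_cast; ring
    · rw [if_neg hm, if_neg (by simp [hm]), if_neg (by simp [hm])]
      push_cast; ring

/-- within a block, after the white, the partial sums only decrease -/
lemma Sx_block_dec (r n : ℕ) (C : Finset (Fin ((r+1)*(n+1)))) (c t1 t2 : ℕ)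
    (h1 : (r+1)*c < t1) (h2 : t1 ≤ t2) (h3 : t2 ≤ (r+1)*c + (r+1)) :
    Sx r n C t2 ≤ Sx r n C t1 := by
  induction t2 with
  | zero => omega
  | succ t2 ih =>
    rcases Nat.lt_or_ge t1 (t2+1) with h | h
    · have ht2 : Sx r n C t2 ≤ Sx r n C t1 := ih (by omega) (by omega)
      have hmod : t2 % (r+1) ≠ 0 := by
        have hc : t2 = (t2 - (r+1)*c) + (r+1)*c := by omega
        rw [hc, Nat.add_mul_mod_self_left, Nat.mod_eq_of_lt (by omega)]
        omega
      have hw : wt r n C t2 ≤ 0 := by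
        unfold wt
        split <;> simp [hmod]
      rw [Sx_succ]; omega
    · have ht : t1 = t2 + 1 := by omega
      rw [ht]

def Good (r n : ℕ) (C : Finset (Fin ((r+1)*(n+1)))) (b : ℕ) : Prop :=
  ∀ t, 0 < t → t ≤ (r+1)*(n+1) → Sx r n C ((r+1)*b) + 1 ≤ Sx r n C ((r+1)*b + t)

lemma Good_not_lt (r n : ℕ) (C : Finset (Fin ((r+1)*(n+1))))
    (hC : Sx r n C ((r+1)*(n+1)) = 1) (b b' : ℕ) (hb' : b' ≤ n)
    (hgb : Good r n C b) (hgb' : Good r n C b') (hlt : b < b') : False := by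
  have h1 : Sx r n C ((r+1)*b) + 1 ≤ Sx r n C ((r+1)*b') := by
    have e1 : (r+1)*b + (r+1)*(b'-b) = (r+1)*b' := by
      rw [← Nat.mul_add]; congr 1; omega
    have := hgb ((r+1)*(b'-b)) (Nat.mul_pos (by omega) (by omega))
      (Nat.mul_le_mul_left _ (by omega))
    rwa [e1] at this
  have h2 : Sx r n C ((r+1)*b') + 1 ≤ 1 + Sx r n C ((r+1)*b) := by
    have e2 : (r+1)*b' + (r+1)*(b+(n+1)-b') = (r+1)*(n+1) + (r+1)*b := by
      rw [← Nat.mul_add, ← Nat.mul_add]; congr 1; omega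
    have h3 := hgb' ((r+1)*(b+(n+1)-b')) (Nat.mul_pos (by omega) (by omega))
      (Nat.mul_le_mul_left _ (by omega))
    rw [e2, Sx_periodic, hC] at h3
    exact h3
  omega

lemma Good_exists (r n : ℕ) (C : Finset (Fin ((r+1)*(n+1))))
    (hC : Sx r n C ((r+1)*(n+1)) = 1) : ∃ b ≤ n, Good r n C b := by
  classical
  set V : ℕ → ℤ := fun c => Sx r n C ((r+1)*c) with hV
  have hTne : ((Finset.range (n+1)).image V).Nonempty := by
    apply Finset.Nonempty.image
    exact Finset.nonempty_range_iff.mpr (by omega)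
  set md := ((Finset.range (n+1)).image V).min' hTne with hmd
  have hFne : ((Finset.range (n+1)).filter (fun c => V c = md)).Nonempty := by
    obtain ⟨c, hc, hceq⟩ := Finset.mem_image.mp (Finset.min'_mem _ hTne)
    exact ⟨c, Finset.mem_filter.mpr ⟨hc, hceq⟩⟩
  set b0 := ((Finset.range (n+1)).filter (fun c => V c = md)).max' hFne with hb0def
  have hb0mem := Finset.max'_mem _ hFne
  rw [Finset.mem_filter, Finset.mem_range] at hb0mem
  have hb0n : b0 ≤ n := by omega
  have hb0val : V b0 = md := hb0mem.2
  have hmin : ∀ c, c ≤ n → md ≤ V c := by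
    intro c hc
    exact Finset.min'_le _ _ (Finset.mem_image_of_mem V (Finset.mem_range.mpr (by omega)))
  have hstrict : ∀ c, b0 < c → c ≤ n → md + 1 ≤ V c := by
    intro c hcb hcn
    have h1 : md ≤ V c := hmin c hcn
    have h2 : V c ≠ md := by
      intro he
      have : c ≤ b0 := Finset.le_max' _ _ (Finset.mem_filter.mpr ⟨Finset.mem_range.mpr (by omega), he⟩)
      omega
    omega
  refine ⟨b0, hb0n, ?_⟩
  intro t ht1 ht2
  set u := (r+1)*b0 + t with hu
  set q := (u-1)/(r+1) with hq
  have hdm := Nat.div_add_mod (u-1) (r+1)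
  rw [← hq] at hdm
  have hmlt : (u-1) % (r+1) < r+1 := Nat.mod_lt _ (by omega)
  have hqlow : (r+1)*q ≤ u - 1 := by omega
  have hu1 : 1 ≤ u := by omega
  have hqup : u ≤ (r+1)*q + (r+1) := by omega
  have hqlt : (r+1)*q < u := by omega
  -- b0 ≤ q
  have hb0q : b0 ≤ q := by
    by_contra hcon
    push_neg at hcon
    have : (r+1)*(q+1) ≤ (r+1)*b0 := Nat.mul_le_mul_left _ (by omega)
    have : (r+1)*q + (r+1) ≤ (r+1)*b0 := by rw [← Nat.mul_succ]; exact this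
    omega
  -- q + 1 ≤ b0 + (n+1)
  have hqhigh : q + 1 ≤ b0 + (n+1) := by
    by_contra hcon
    push_neg at hcon
    have h5 : (r+1)*(b0+(n+1)) ≤ (r+1)*q := Nat.mul_le_mul_left _ (by omega)
    rw [Nat.mul_add] at h5
    omega
  have hdec : Sx r n C ((r+1)*q + (r+1)) ≤ Sx r n C u :=
    Sx_block_dec r n C q u ((r+1)*q + (r+1)) hqlt hqup (le_refl _)
  have hblockend : (r+1)*q + (r+1) = (r+1)*(q+1) := by rw [Nat.mul_succ]
  have hkey : md + 1 ≤ Sx r n C ((r+1)*(q+1)) := by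
    rcases Nat.lt_or_ge (q+1) (n+1) with hcase | hcase
    · exact hstrict (q+1) (by omega) (by omega)
    · rcases Nat.eq_or_lt_of_le hcase with hcase2 | hcase2
      · rw [hcase2] at hC
        rw [hC]
        have h0 : md ≤ V 0 := hmin 0 (by omega)
        have : V 0 = 0 := by simp [hV, Sx_zero]
        omega
      · have hd : (q+1) - (n+1) ≤ b0 := by omega
        have hdpos : 1 ≤ (q+1) - (n+1) := by omega
        have he : (r+1)*(q+1) = (r+1)*(n+1) + (r+1)*((q+1)-(n+1)) := by
          rw [← Nat.mul_add]; congr 1; omega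
        rw [he, Sx_periodic, hC]
        have h9 := hmin ((q+1)-(n+1)) (by omega)
        simp only [hV] at h9
        omega
  rw [← hblockend] at hkey
  have : Sx r n C ((r+1)*b0) = md := hb0val
  rw [this]
  exact le_trans hkey hdec

def rot (r n : ℕ) (k : ℕ) (C : Finset (Fin ((r+1)*(n+1)))) : Finset (Fin ((r+1)*(n+1))) :=
  C.image (fun x => ⟨(x.val + k*(r+1)) % ((r+1)*(n+1)), Nat.mod_lt _ (Lpos r n)⟩)

lemma shift_inj (r n k : ℕ) : Function.Injective
    (fun x : Fin ((r+1)*(n+1)) => (⟨(x.val + k*(r+1)) % ((r+1)*(n+1)), Nat.mod_lt _ (Lpos r n)⟩ : Fin ((r+1)*(n+1)))) := by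
  intro a b h
  simp only [Fin.mk.injEq] at h
  have h2 : a.val ≡ b.val [MOD (r+1)*(n+1)] := by
    apply Nat.ModEq.add_right_cancel' (k*(r+1))
    exact h
  apply Fin.ext
  have := a.isLt; have := b.isLt
  calc a.val = a.val % ((r+1)*(n+1)) := (Nat.mod_eq_of_lt a.isLt).symm
  _ = b.val % ((r+1)*(n+1)) := h2
  _ = b.val := Nat.mod_eq_of_lt b.isLt

lemma shift_white (r n k x : ℕ) :
    ((x + k*(r+1)) % ((r+1)*(n+1))) % (r+1) = x % (r+1) := by
  rw [Nat.mod_mod_of_dvd _ (dvd_mul_right (r+1) (n+1)), Nat.add_mul_mod_self_right]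

lemma wt_rot (r n k : ℕ) (C : Finset (Fin ((r+1)*(n+1)))) (p : ℕ) :
    wt r n (rot r n k C) (p + k*(r+1)) = wt r n C p := by
  have hmem : ((⟨(p + k*(r+1)) % ((r+1)*(n+1)), Nat.mod_lt _ (Lpos r n)⟩ : Fin ((r+1)*(n+1))) ∈ rot r n k C)
      ↔ ((⟨p % ((r+1)*(n+1)), Nat.mod_lt _ (Lpos r n)⟩ : Fin ((r+1)*(n+1))) ∈ C) := by
    unfold rot
    rw [Finset.mem_image]
    constructor
    · rintro ⟨x, hx, hval⟩
      simp only [Fin.mk.injEq] at hval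
      have h2 : x.val ≡ p [MOD (r+1)*(n+1)] := by
        apply Nat.ModEq.add_right_cancel' (k*(r+1))
        exact hval
      have h3 : x.val = p % ((r+1)*(n+1)) := by
        rw [← Nat.mod_eq_of_lt x.isLt]; exact h2
      rwa [show (⟨p % ((r+1)*(n+1)), Nat.mod_lt _ (Lpos r n)⟩ : Fin ((r+1)*(n+1))) = x from Fin.ext h3.symm]
    · intro hp
      refine ⟨_, hp, ?_⟩
      simp only [Fin.mk.injEq]
      rw [Nat.mod_add_mod]
  have hcol : (p + k*(r+1)) % (r+1) = p % (r+1) := Nat.add_mul_mod_self_right p k (r+1)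
  unfold wt
  rw [hcol]
  by_cases h : (⟨p % ((r+1)*(n+1)), Nat.mod_lt _ (Lpos r n)⟩ : Fin ((r+1)*(n+1))) ∈ C
  · rw [if_pos (hmem.mpr h), if_pos h]
  · rw [if_neg (fun hc => h (hmem.mp hc)), if_neg h]

lemma Sx_rot (r n k : ℕ) (C : Finset (Fin ((r+1)*(n+1)))) (t : ℕ) :
    Sx r n (rot r n k C) (k*(r+1) + t) = Sx r n (rot r n k C) (k*(r+1)) + Sx r n C t := by
  rw [Sx_shift]
  congr 1
  apply Finset.sum_congr rfl
  intro u _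
  rw [Nat.add_comm (k*(r+1)) u, wt_rot]

lemma good_rot_iff (r n k : ℕ) (C : Finset (Fin ((r+1)*(n+1)))) :
    Good r n C 0 ↔ Good r n (rot r n k C) k := by
  unfold Good
  have hc : (r+1)*k = k*(r+1) := Nat.mul_comm _ _
  constructor
  · intro h t ht1 ht2
    rw [hc, Sx_rot]
    have := h t ht1 ht2
    rw [Nat.mul_zero, Nat.zero_add] at this
    rw [Sx_zero] at this
    omega
  · intro h t ht1 ht2
    have := h t ht1 ht2
    rw [hc, Sx_rot] at this
    rw [Nat.mul_zero, Nat.zero_add, Sx_zero]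
    omega

lemma rot_rot (r n a b : ℕ) (C : Finset (Fin ((r+1)*(n+1)))) :
    rot r n a (rot r n b C) = rot r n (a+b) C := by
  unfold rot
  rw [Finset.image_image]
  apply Finset.image_congr
  intro x _
  simp only [Function.comp_apply, Fin.mk.injEq]
  rw [Nat.mod_add_mod]
  congr 1
  ring

lemma rot_full (r n : ℕ) (C : Finset (Fin ((r+1)*(n+1)))) :
    rot r n (n+1) C = C := by
  unfold rot
  have : ∀ x : Fin ((r+1)*(n+1)),
      (⟨(x.val + (n+1)*(r+1)) % ((r+1)*(n+1)), Nat.mod_lt _ (Lpos r n)⟩ : Fin ((r+1)*(n+1))) = x := by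
    intro x
    apply Fin.ext
    simp only
    rw [Nat.mul_comm (n+1) (r+1), Nat.add_mod_right, Nat.mod_eq_of_lt x.isLt]
  calc C.image _ = C.image id := Finset.image_congr (fun x _ => this x)
  _ = C := Finset.image_id

lemma rot_inj (r n k : ℕ) (C C' : Finset (Fin ((r+1)*(n+1))))
    (h : rot r n k C = rot r n k C') : C = C' := by
  unfold rot at h
  exact (Finset.image_injective (shift_inj r n k)) h

lemma cntW_rot (r n k : ℕ) (C : Finset (Fin ((r+1)*(n+1)))) :
    cntW r (rot r n k C) ((r+1)*(n+1)) = cntW r C ((r+1)*(n+1)) := by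
  unfold cntW rot
  rw [Finset.filter_image, Finset.card_image_of_injective _ (shift_inj r n k)]
  congr 1
  apply Finset.filter_congr
  intro x _
  simp only [shift_white]
  constructor
  · rintro ⟨h1, _⟩; exact ⟨h1, x.isLt⟩
  · rintro ⟨h1, _⟩; exact ⟨h1, Nat.mod_lt _ (Lpos r n)⟩

lemma cntB_rot (r n k : ℕ) (C : Finset (Fin ((r+1)*(n+1)))) :
    cntB r (rot r n k C) ((r+1)*(n+1)) = cntB r C ((r+1)*(n+1)) := by
  unfold cntB rot
  rw [Finset.filter_image, Finset.card_image_of_injective _ (shift_inj r n k)]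
  congr 1
  apply Finset.filter_congr
  intro x _
  simp only [shift_white]
  constructor
  · rintro ⟨h1, _⟩; exact ⟨h1, x.isLt⟩
  · rintro ⟨h1, _⟩; exact ⟨h1, Nat.mod_lt _ (Lpos r n)⟩

def IsBal (r : ℕ) {M : ℕ} (C : Finset (Fin M)) : Prop :=
  ∀ t, cntB r C t ≤ cntW r C t

open Classical in
noncomputable def BalSet (r n j : ℕ) : Finset (Finset (Fin ((r+1)*n))) :=
  univ.filter (fun C => cntW r C ((r+1)*n) = j ∧ cntB r C ((r+1)*n) = j ∧ IsBal r C)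

lemma card_whites (r m : ℕ) :
    ((univ : Finset (Fin ((r+1)*m))).filter (fun i => i.val % (r+1) = 0)).card = m := by
  have : ((univ : Finset (Fin ((r+1)*m))).filter (fun i => i.val % (r+1) = 0)).card
      = (univ : Finset (Fin m)).card := by
    refine Finset.card_bij (fun (i : Fin ((r+1)*m)) _ => (⟨i.val / (r+1), by
      have := i.isLt; exact Nat.div_lt_of_lt_mul (by omega)⟩ : Fin m)) ?_ ?_ ?_
    · intro a ha; exact mem_univ _
    · intro a ha b hb h
      simp only [mem_filter, mem_univ, true_and] at ha hb
      have hv : a.val / (r+1) = b.val / (r+1) := congrArg Fin.val h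
      apply Fin.ext
      rw [← Nat.div_add_mod a.val (r+1), ← Nat.div_add_mod b.val (r+1), ha, hb, hv]
    · intro b _
      refine ⟨⟨(r+1) * b.val, by
        have h1 := b.isLt
        calc (r+1) * b.val + 1 ≤ (r+1) * b.val + (r+1) := by omega
        _ = (r+1) * (b.val+1) := by ring
        _ ≤ (r+1)*m := Nat.mul_le_mul_left _ (by omega)⟩, ?_, ?_⟩
      · simp [Nat.mul_mod_right]
      · apply Fin.ext; simp [Nat.mul_div_cancel_left _ (show 0 < r+1 by omega)]
  simpa using this

lemma card_blacks (r m : ℕ) :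
    ((univ : Finset (Fin ((r+1)*m))).filter (fun i => i.val % (r+1) ≠ 0)).card = r * m := by
  have h1 := card_whites r m
  have h2 : ((univ : Finset (Fin ((r+1)*m))).filter (fun i => i.val % (r+1) = 0)).card +
      ((univ : Finset (Fin ((r+1)*m))).filter (fun i => ¬ (i.val % (r+1) = 0))).card
      = (r+1) * m := by
    rw [Finset.card_filter_add_card_filter_not]
    simp
  have h3 : (r+1)*m = m + r*m := by ring
  simp only [ne_eq]
  omega

lemma filter_lt_top {M : ℕ} (C : Finset (Fin M)) (p : Fin M → Prop) [DecidablePred p] :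
    (C.filter (fun i => p i ∧ i.val < M)) = C.filter p := by
  ext x
  simp only [Finset.mem_filter]
  exact ⟨fun ⟨h1,h2,_⟩ => ⟨h1,h2⟩, fun ⟨h1,h2⟩ => ⟨h1,h2,x.isLt⟩⟩

lemma cntW_top {M : ℕ} (r : ℕ) (C : Finset (Fin M)) (t : ℕ) (ht : M ≤ t) :
    cntW r C t = (C.filter (fun i => i.val % (r+1) = 0)).card := by
  unfold cntW
  rw [filter_lt_stable C _ t ht, filter_lt_top]

lemma cntB_top {M : ℕ} (r : ℕ) (C : Finset (Fin M)) (t : ℕ) (ht : M ≤ t) :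
    cntB r C t = (C.filter (fun i => ¬(i.val % (r+1) = 0))).card := by
  unfold cntB
  rw [filter_lt_stable C _ t ht, filter_lt_top]

open Classical in
noncomputable def ASet (r n j : ℕ) : Finset (Finset (Fin ((r+1)*(n+1)))) :=
  Finset.univ.filter (fun C => cntW r C ((r+1)*(n+1)) = j+1 ∧ cntB r C ((r+1)*(n+1)) = j)

open Classical in
noncomputable def GSet (r n j : ℕ) : Finset (Finset (Fin ((r+1)*(n+1)))) :=
  (ASet r n j).filter (fun C => Good r n C 0)

lemma Sx_L_of_mem (r n j : ℕ) (C : Finset (Fin ((r+1)*(n+1)))) (hC : C ∈ ASet r n j) :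
    Sx r n C ((r+1)*(n+1)) = 1 := by
  unfold ASet at hC
  rw [Finset.mem_filter] at hC
  rw [Sx_prefix r n C _ (le_refl _), hC.2.1, hC.2.2]
  push_cast; ring

lemma orbit_count (r n j : ℕ) : (ASet r n j).card = (n+1) * (GSet r n j).card := by
  classical
  have key : ((Finset.range (n+1)) ×ˢ (GSet r n j)).card = (ASet r n j).card := by
    refine Finset.card_bij (fun p _ => rot r n p.1 p.2) ?_ ?_ ?_
    · rintro ⟨k, C⟩ hp
      rw [Finset.mem_product] at hp
      have hC : C ∈ ASet r n j := Finset.mem_of_mem_filter _ hp.2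
      unfold ASet at hC ⊢
      rw [Finset.mem_filter] at hC ⊢
      refine ⟨Finset.mem_univ _, ?_, ?_⟩
      · rw [cntW_rot]; exact hC.2.1
      · rw [cntB_rot]; exact hC.2.2
    · rintro ⟨k, C⟩ hp ⟨k', C'⟩ hp' heq
      rw [Finset.mem_product, Finset.mem_range] at hp hp'
      have hgC : Good r n C 0 := (Finset.mem_filter.mp hp.2).2
      have hgC' : Good r n C' 0 := (Finset.mem_filter.mp hp'.2).2
      have hCA : C ∈ ASet r n j := Finset.mem_of_mem_filter _ hp.2
      simp only at heq
      have hSx : Sx r n (rot r n k C) ((r+1)*(n+1)) = 1 := by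
        apply Sx_L_of_mem r n j
        unfold ASet
        rw [Finset.mem_filter]
        refine ⟨Finset.mem_univ _, ?_, ?_⟩
        · rw [cntW_rot]; exact (Finset.mem_filter.mp (Finset.mem_filter.mp hp.2 |>.1)).2.1
        · rw [cntB_rot]; exact (Finset.mem_filter.mp (Finset.mem_filter.mp hp.2 |>.1)).2.2
      have hg1 : Good r n (rot r n k C) k := (good_rot_iff r n k C).mp hgC
      have hg2 : Good r n (rot r n k C) k' := by
        rw [heq]; exact (good_rot_iff r n k' C').mp hgC'
      have hkk : k = k' := by
        rcases Nat.lt_trichotomy k k' with h|h|h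
        · exact absurd (Good_not_lt r n _ hSx k k' (by omega) hg1 hg2 h) (fun x => x)
        · exact h
        · exact absurd (Good_not_lt r n _ hSx k' k (by omega) hg2 hg1 h) (fun x => x)
      subst hkk
      have : C = C' := rot_inj r n k C C' heq
      simp [this]
    · intro D hD
      have hSx : Sx r n D ((r+1)*(n+1)) = 1 := Sx_L_of_mem r n j D hD
      obtain ⟨b, hbn, hgb⟩ := Good_exists r n D hSx
      set C := rot r n ((n+1)-b) D with hCdef
      have hrotbC : rot r n b C = D := by
        rw [hCdef, rot_rot]
        have : b + ((n+1) - b) = n+1 := by omega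
        rw [this, rot_full]
      have hgC : Good r n C 0 := by
        rw [good_rot_iff r n b C, hrotbC]
        exact hgb
      have hCA : C ∈ ASet r n j := by
        unfold ASet at hD ⊢
        rw [Finset.mem_filter] at hD ⊢
        refine ⟨Finset.mem_univ _, ?_, ?_⟩
        · rw [hCdef, cntW_rot]; exact hD.2.1
        · rw [hCdef, cntB_rot]; exact hD.2.2
      refine ⟨(b, C), ?_, ?_⟩
      · rw [Finset.mem_product, Finset.mem_range]
        exact ⟨by omega, Finset.mem_filter.mpr ⟨hCA, hgC⟩⟩
      · exact hrotbC
  rw [Finset.card_product, Finset.card_range] at key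
  omega

lemma card_ASet (r n j : ℕ) :
    (ASet r n j).card = Nat.choose (n+1) (j+1) * Nat.choose (r*(n+1)) j := by
  classical
  set Wh := (Finset.univ : Finset (Fin ((r+1)*(n+1)))).filter (fun i => i.val % (r+1) = 0) with hWh
  set Bl := (Finset.univ : Finset (Fin ((r+1)*(n+1)))).filter (fun i => ¬(i.val % (r+1) = 0)) with hBl
  have key : ((Finset.powersetCard (j+1) Wh) ×ˢ (Finset.powersetCard j Bl)).card = (ASet r n j).card := by
    refine Finset.card_bij (fun p _ => p.1 ∪ p.2) ?_ ?_ ?_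
    · rintro ⟨P, Q⟩ hp
      rw [Finset.mem_product, Finset.mem_powersetCard, Finset.mem_powersetCard] at hp
      obtain ⟨⟨hPs, hPc⟩, ⟨hQs, hQc⟩⟩ := hp
      have hPw : ∀ x ∈ P, x.val % (r+1) = 0 := fun x hx => (Finset.mem_filter.mp (hPs hx)).2
      have hQb : ∀ x ∈ Q, ¬(x.val % (r+1) = 0) := fun x hx => (Finset.mem_filter.mp (hQs hx)).2
      unfold ASet
      rw [Finset.mem_filter]
      refine ⟨Finset.mem_univ _, ?_, ?_⟩
      · rw [cntW_top r _ _ (le_refl _), Finset.filter_union,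
          Finset.filter_true_of_mem hPw, Finset.filter_false_of_mem hQb, Finset.union_empty]
        exact hPc
      · rw [cntB_top r _ _ (le_refl _), Finset.filter_union,
          Finset.filter_false_of_mem (fun x hx h => h (hPw x hx)),
          Finset.filter_true_of_mem hQb, Finset.empty_union]
        exact hQc
    · rintro ⟨P, Q⟩ hp ⟨P', Q'⟩ hp' heq
      rw [Finset.mem_product, Finset.mem_powersetCard, Finset.mem_powersetCard] at hp hp'
      simp only at heq
      have hPw : ∀ x ∈ P, x.val % (r+1) = 0 := fun x hx => (Finset.mem_filter.mp (hp.1.1 hx)).2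
      have hQb : ∀ x ∈ Q, ¬(x.val % (r+1) = 0) := fun x hx => (Finset.mem_filter.mp (hp.2.1 hx)).2
      have hPw' : ∀ x ∈ P', x.val % (r+1) = 0 := fun x hx => (Finset.mem_filter.mp (hp'.1.1 hx)).2
      have hQb' : ∀ x ∈ Q', ¬(x.val % (r+1) = 0) := fun x hx => (Finset.mem_filter.mp (hp'.2.1 hx)).2
      have h1 : (P ∪ Q).filter (fun i => i.val % (r+1) = 0) = P := by
        rw [Finset.filter_union, Finset.filter_true_of_mem hPw, Finset.filter_false_of_mem hQb,
          Finset.union_empty]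
      have h2 : (P' ∪ Q').filter (fun i => i.val % (r+1) = 0) = P' := by
        rw [Finset.filter_union, Finset.filter_true_of_mem hPw', Finset.filter_false_of_mem hQb',
          Finset.union_empty]
      have h3 : (P ∪ Q).filter (fun i => ¬(i.val % (r+1) = 0)) = Q := by
        rw [Finset.filter_union, Finset.filter_false_of_mem (fun x hx h => h (hPw x hx)),
          Finset.filter_true_of_mem hQb, Finset.empty_union]
      have h4 : (P' ∪ Q').filter (fun i => ¬(i.val % (r+1) = 0)) = Q' := by
        rw [Finset.filter_union, Finset.filter_false_of_mem (fun x hx h => h (hPw' x hx)),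
          Finset.filter_true_of_mem hQb', Finset.empty_union]
      have : P = P' := by rw [← h1, ← h2, heq]
      have : Q = Q' := by rw [← h3, ← h4, heq]
      simp_all
    · intro D hD
      unfold ASet at hD
      rw [Finset.mem_filter] at hD
      refine ⟨(D.filter (fun i => i.val % (r+1) = 0), D.filter (fun i => ¬(i.val % (r+1) = 0))), ?_, ?_⟩
      · rw [Finset.mem_product, Finset.mem_powersetCard, Finset.mem_powersetCard]
        refine ⟨⟨?_, ?_⟩, ?_, ?_⟩
        · intro x hx
          rw [hWh, Finset.mem_filter]
          exact ⟨Finset.mem_univ _, (Finset.mem_filter.mp hx).2⟩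
        · rw [← cntW_top r D _ (le_refl _)]; exact hD.2.1
        · intro x hx
          rw [hBl, Finset.mem_filter]
          exact ⟨Finset.mem_univ _, (Finset.mem_filter.mp hx).2⟩
        · rw [← cntB_top r D _ (le_refl _)]; exact hD.2.2
      · exact Finset.filter_union_filter_not_eq _ D
  rw [Finset.card_product, Finset.card_powersetCard, Finset.card_powersetCard] at key
  rw [hWh] at key
  rw [hBl] at key
  rw [card_whites r (n+1), card_blacks r (n+1)] at key
  omega

def liftF (r n : ℕ) (i : Fin ((r+1)*n)) : Fin ((r+1)*(n+1)) :=
  ⟨i.val + (r+1), by have := i.isLt; rw [Nat.mul_add, Nat.mul_one]; omega⟩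

lemma liftF_inj (r n : ℕ) : Function.Injective (liftF r n) := by
  intro a b h
  apply Fin.ext
  have := congrArg Fin.val h
  simp only [liftF] at this
  omega

open Classical in
noncomputable def downC (r n : ℕ) (C : Finset (Fin ((r+1)*(n+1)))) : Finset (Fin ((r+1)*n)) :=
  Finset.univ.filter (fun i => liftF r n i ∈ C)

noncomputable def upC (r n : ℕ) (D : Finset (Fin ((r+1)*n))) : Finset (Fin ((r+1)*(n+1))) :=
  insert ⟨0, Lpos r n⟩ (D.image (liftF r n))

/-- structural hypotheses: 0 is chosen, positions 1..r are not chosen -/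
def Hd (r n : ℕ) (C : Finset (Fin ((r+1)*(n+1)))) : Prop :=
  (⟨0, Lpos r n⟩ ∈ C) ∧ ∀ q (hq : q < (r+1)*(n+1)), 1 ≤ q → q ≤ r → (⟨q, hq⟩ : Fin ((r+1)*(n+1))) ∉ C

lemma Hd_up (r n : ℕ) (D : Finset (Fin ((r+1)*n))) : Hd r n (upC r n D) := by
  constructor
  · exact Finset.mem_insert_self _ _
  · intro q hq h1 h2 hmem
    rw [upC, Finset.mem_insert] at hmem
    rcases hmem with h | h
    · have := congrArg Fin.val h; simp at this; omega
    · rw [Finset.mem_image] at h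
      obtain ⟨i, _, hi⟩ := h
      have := congrArg Fin.val hi
      simp only [liftF] at this
      omega

lemma down_up (r n : ℕ) (D : Finset (Fin ((r+1)*n))) : downC r n (upC r n D) = D := by
  ext i
  rw [downC, Finset.mem_filter, upC, Finset.mem_insert]
  constructor
  · rintro ⟨-, h | h⟩
    · exfalso
      have := congrArg Fin.val h
      simp only [liftF] at this
      omega
    · rw [Finset.mem_image] at h
      obtain ⟨x, hx, hxe⟩ := h
      rwa [← liftF_inj r n hxe]
  · intro h
    exact ⟨Finset.mem_univ _, Or.inr (Finset.mem_image_of_mem _ h)⟩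

lemma up_down (r n : ℕ) (C : Finset (Fin ((r+1)*(n+1)))) (h : Hd r n C) :
    upC r n (downC r n C) = C := by
  ext x
  rw [upC, Finset.mem_insert, Finset.mem_image]
  constructor
  · rintro (rfl | ⟨i, hi, rfl⟩)
    · exact h.1
    · rw [downC, Finset.mem_filter] at hi
      exact hi.2
  · intro hx
    rcases Nat.eq_zero_or_pos x.val with h0 | h0
    · exact Or.inl (Fin.ext h0.symm).symm
    · have hge : r+1 ≤ x.val := by
        by_contra hcon
        push_neg at hcon
        exact (h.2 x.val x.isLt h0 (by omega)) (by rwa [show (⟨x.val, x.isLt⟩ : Fin ((r+1)*(n+1))) = x from Fin.ext rfl])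
      refine Or.inr ⟨⟨x.val - (r+1), by have h9 := x.isLt; have h10 : (r+1)*(n+1) = (r+1)*n + (r+1) := Nat.mul_succ (r+1) n; omega⟩, ?_, ?_⟩
      · rw [downC, Finset.mem_filter]
        refine ⟨Finset.mem_univ _, ?_⟩
        have : liftF r n ⟨x.val - (r+1), by have h9 := x.isLt; have h10 : (r+1)*(n+1) = (r+1)*n + (r+1) := Nat.mul_succ (r+1) n; omega⟩ = x := by
          apply Fin.ext; simp only [liftF]; omega
        rwa [this]
      · apply Fin.ext; simp only [liftF]; omega

lemma filtW_ident (r n : ℕ) (C : Finset (Fin ((r+1)*(n+1)))) (h : Hd r n C) (t : ℕ) :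
    C.filter (fun x => x.val % (r+1) = 0 ∧ x.val < t + (r+1))
      = insert ⟨0, Lpos r n⟩
          (((downC r n C).filter (fun i => i.val % (r+1) = 0 ∧ i.val < t)).image (liftF r n)) := by
  ext x
  rw [Finset.mem_insert, Finset.mem_image]
  simp only [Finset.mem_filter]
  constructor
  · rintro ⟨hx, hw, hlt⟩
    rcases Nat.eq_zero_or_pos x.val with h0 | h0
    · exact Or.inl (Fin.ext h0.symm).symm
    · have hdvd : (r+1) ∣ x.val := Nat.dvd_of_mod_eq_zero hw
      have hge : r+1 ≤ x.val := Nat.le_of_dvd h0 hdvd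
      refine Or.inr ⟨⟨x.val - (r+1), by have h9 := x.isLt; have h10 : (r+1)*(n+1) = (r+1)*n + (r+1) := Nat.mul_succ (r+1) n; omega⟩, ⟨?_, ?_, ?_⟩, ?_⟩
      · rw [downC, Finset.mem_filter]
        refine ⟨Finset.mem_univ _, ?_⟩
        have he : liftF r n ⟨x.val - (r+1), by have h9 := x.isLt; have h10 : (r+1)*(n+1) = (r+1)*n + (r+1) := Nat.mul_succ (r+1) n; omega⟩ = x := by
          apply Fin.ext; simp only [liftF]; omega
        rwa [he]
      · simp only
        have hd2 : (r+1) ∣ (x.val - (r+1)) := Nat.dvd_sub hdvd dvd_rfl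
        omega
      · simp only; omega
      · apply Fin.ext; simp only [liftF]; omega
  · rintro (rfl | ⟨i, ⟨hi, hw, hlt⟩, rfl⟩)
    · exact ⟨h.1, by simp, by show (0:ℕ) < t + (r+1); omega⟩
    · rw [downC, Finset.mem_filter] at hi
      refine ⟨hi.2, ?_, ?_⟩
      · simp only [liftF]
        rw [Nat.add_mod_right]
        exact hw
      · simp only [liftF]; omega

lemma filtB_ident (r n : ℕ) (C : Finset (Fin ((r+1)*(n+1)))) (h : Hd r n C) (t : ℕ) :
    C.filter (fun x => ¬(x.val % (r+1) = 0) ∧ x.val < t + (r+1))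
      = ((downC r n C).filter (fun i => ¬(i.val % (r+1) = 0) ∧ i.val < t)).image (liftF r n) := by
  ext x
  rw [Finset.mem_image]
  simp only [Finset.mem_filter]
  constructor
  · rintro ⟨hx, hb, hlt⟩
    have h0 : 0 < x.val := by
      rcases Nat.eq_zero_or_pos x.val with h0 | h0
      · exfalso; apply hb; rw [h0]; simp
      · exact h0
    have hge : r+1 ≤ x.val := by
      by_contra hcon
      push_neg at hcon
      exact (h.2 x.val x.isLt h0 (by omega)) (by rwa [show (⟨x.val, x.isLt⟩ : Fin ((r+1)*(n+1))) = x from Fin.ext rfl])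
    refine ⟨⟨x.val - (r+1), by have h9 := x.isLt; have h10 : (r+1)*(n+1) = (r+1)*n + (r+1) := Nat.mul_succ (r+1) n; omega⟩, ⟨?_, ?_, ?_⟩, ?_⟩
    · rw [downC, Finset.mem_filter]
      refine ⟨Finset.mem_univ _, ?_⟩
      have he : liftF r n ⟨x.val - (r+1), by have h9 := x.isLt; have h10 : (r+1)*(n+1) = (r+1)*n + (r+1) := Nat.mul_succ (r+1) n; omega⟩ = x := by
        apply Fin.ext; simp only [liftF]; omega
      rwa [he]
    · simp only
      intro hcon
      apply hb
      rw [show x.val = (x.val - (r+1)) + (r+1) by omega, Nat.add_mod_right]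
      exact hcon
    · simp only; omega
    · apply Fin.ext; simp only [liftF]; omega
  · rintro ⟨i, ⟨hi, hb, hlt⟩, rfl⟩
    rw [downC, Finset.mem_filter] at hi
    refine ⟨hi.2, ?_, ?_⟩
    · simp only [liftF]
      rw [Nat.add_mod_right]
      exact hb
    · simp only [liftF]; omega

lemma cntW_ident (r n : ℕ) (C : Finset (Fin ((r+1)*(n+1)))) (h : Hd r n C) (t : ℕ) :
    cntW r C (t + (r+1)) = 1 + cntW r (downC r n C) t := by
  unfold cntW
  rw [filtW_ident r n C h t, Finset.card_insert_of_notMem, Finset.card_image_of_injective _ (liftF_inj r n)]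
  · omega
  · rw [Finset.mem_image]
    rintro ⟨i, _, hi⟩
    have := congrArg Fin.val hi
    simp only [liftF] at this
    omega

lemma cntB_ident (r n : ℕ) (C : Finset (Fin ((r+1)*(n+1)))) (h : Hd r n C) (t : ℕ) :
    cntB r C (t + (r+1)) = cntB r (downC r n C) t := by
  unfold cntB
  rw [filtB_ident r n C h t, Finset.card_image_of_injective _ (liftF_inj r n)]

lemma good_pos (r n : ℕ) (C : Finset (Fin ((r+1)*(n+1)))) (hg : Good r n C 0) :
    ∀ t, 0 < t → t ≤ (r+1)*(n+1) → 1 ≤ Sx r n C t := by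
  intro t h1 h2
  have := hg t h1 h2
  rw [Nat.mul_zero, Nat.zero_add, Sx_zero] at this
  omega

lemma rp1_le_L (r n : ℕ) : r + 1 ≤ (r+1)*(n+1) := Nat.le_mul_of_pos_right _ (by omega)

lemma good_block0 (r n : ℕ) (C : Finset (Fin ((r+1)*(n+1)))) (hg : Good r n C 0) :
    ((⟨0, Lpos r n⟩ : Fin ((r+1)*(n+1))) ∈ C) ∧
    ∀ q, q ≤ r → Sx r n C (q+1) = 1 ∧
      (1 ≤ q → ∀ hq : q < (r+1)*(n+1), (⟨q, hq⟩ : Fin ((r+1)*(n+1))) ∉ C) := by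
  have hgp := good_pos r n C hg
  have hL := rp1_le_L r n
  have base : ((⟨0, Lpos r n⟩ : Fin ((r+1)*(n+1))) ∈ C) ∧ Sx r n C 1 = 1 := by
    have h1 : 1 ≤ Sx r n C 1 := hgp 1 (by omega) (by omega)
    rw [Sx_succ, Sx_zero, zero_add] at h1 ⊢
    rw [wt_lt r n C 0 (Lpos r n)] at h1 ⊢
    simp only [Nat.zero_mod, if_pos rfl] at h1 ⊢
    by_cases hm : (⟨0, Lpos r n⟩ : Fin ((r+1)*(n+1))) ∈ C
    · rw [if_pos hm] at h1 ⊢; exact ⟨hm, rfl⟩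
    · rw [if_neg hm] at h1; omega
  refine ⟨base.1, ?_⟩
  intro q
  induction q with
  | zero =>
    intro _
    exact ⟨base.2, by omega⟩
  | succ q ih =>
    intro hq
    have ihq := ih (by omega)
    have hqL : q + 1 < (r+1)*(n+1) := by omega
    have hwt : wt r n C (q+1) = if (⟨q+1, hqL⟩ : Fin ((r+1)*(n+1))) ∈ C then (-1 : ℤ) else 0 := by
      rw [wt_lt r n C (q+1) hqL]
      have : ¬((q+1) % (r+1) = 0) := by
        rw [Nat.mod_eq_of_lt (by omega)]
        omega
      rw [if_neg this]
    have hS2 : 1 ≤ Sx r n C (q+1+1) := hgp (q+2) (by omega) (by omega)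
    rw [Sx_succ, ihq.1, hwt] at hS2
    by_cases hm : (⟨q+1, hqL⟩ : Fin ((r+1)*(n+1))) ∈ C
    · rw [if_pos hm] at hS2; omega
    · rw [if_neg hm] at hS2
      constructor
      · rw [Sx_succ, ihq.1, hwt, if_neg hm]; omega
      · intro _ hq2
        have : (⟨q+1, hq2⟩ : Fin ((r+1)*(n+1))) = ⟨q+1, hqL⟩ := rfl
        rw [this]
        exact hm

lemma Hd_of_good (r n : ℕ) (C : Finset (Fin ((r+1)*(n+1)))) (hg : Good r n C 0) : Hd r n C := by
  obtain ⟨h0, hrest⟩ := good_block0 r n C hg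
  refine ⟨h0, ?_⟩
  intro q hq h1 h2
  exact (hrest q h2).2 h1 hq

lemma down_mem_Bal (r n j : ℕ) (C : Finset (Fin ((r+1)*(n+1)))) (hC : C ∈ GSet r n j) :
    downC r n C ∈ BalSet r n j := by
  classical
  rw [GSet, Finset.mem_filter] at hC
  obtain ⟨hCA, hgood⟩ := hC
  rw [ASet, Finset.mem_filter] at hCA
  obtain ⟨-, hcW, hcB⟩ := hCA
  have hHd : Hd r n C := Hd_of_good r n C hgood
  have hmulsucc : (r+1)*n + (r+1) = (r+1)*(n+1) := (Nat.mul_succ (r+1) n).symm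
  have hW : cntW r (downC r n C) ((r+1)*n) = j := by
    have := cntW_ident r n C hHd ((r+1)*n)
    rw [hmulsucc, hcW] at this
    omega
  have hB : cntB r (downC r n C) ((r+1)*n) = j := by
    have := cntB_ident r n C hHd ((r+1)*n)
    rw [hmulsucc, hcB] at this
    omega
  have hbal_le : ∀ t, t ≤ (r+1)*n → cntB r (downC r n C) t ≤ cntW r (downC r n C) t := by
    intro t ht
    have h1 : 1 ≤ Sx r n C (t + (r+1)) := good_pos r n C hgood (t + (r+1)) (by omega) (by omega)
    rw [Sx_prefix r n C (t + (r+1)) (by omega)] at h1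
    rw [cntW_ident r n C hHd t, cntB_ident r n C hHd t] at h1
    push_cast at h1
    omega
  rw [BalSet, Finset.mem_filter]
  refine ⟨Finset.mem_univ _, hW, hB, ?_⟩
  intro t
  rcases le_or_gt t ((r+1)*n) with ht | ht
  · exact hbal_le t ht
  · have e1 : cntW r (downC r n C) t = cntW r (downC r n C) ((r+1)*n) := by
      unfold cntW; rw [filter_lt_stable _ _ t (by omega)]
    have e2 : cntB r (downC r n C) t = cntB r (downC r n C) ((r+1)*n) := by
      unfold cntB; rw [filter_lt_stable _ _ t (by omega)]
    rw [e1, e2]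
    exact hbal_le _ (le_refl _)

lemma up_mem_G (r n j : ℕ) (D : Finset (Fin ((r+1)*n))) (hD : D ∈ BalSet r n j) :
    upC r n D ∈ GSet r n j := by
  classical
  rw [BalSet, Finset.mem_filter] at hD
  obtain ⟨-, hcW, hcB, hbal⟩ := hD
  have hHd : Hd r n (upC r n D) := Hd_up r n D
  have hdu : downC r n (upC r n D) = D := down_up r n D
  have hmulsucc : (r+1)*n + (r+1) = (r+1)*(n+1) := (Nat.mul_succ (r+1) n).symm
  have hW : cntW r (upC r n D) ((r+1)*(n+1)) = j + 1 := by
    show cntW r (upC r n D) ((r+1)*n + (r+1)) = j + 1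
    rw [cntW_ident r n _ hHd, hdu, hcW]
    omega
  have hB : cntB r (upC r n D) ((r+1)*(n+1)) = j := by
    show cntB r (upC r n D) ((r+1)*n + (r+1)) = j
    rw [cntB_ident r n _ hHd, hdu, hcB]
  have hgood : Good r n (upC r n D) 0 := by
    intro t ht1 ht2
    rw [Nat.mul_zero, Nat.zero_add, Sx_zero]
    rw [Sx_prefix r n _ t ht2]
    rcases le_or_gt t (r+1) with hcase | hcase
    · have hB0 : cntB r (upC r n D) t = 0 := by
        unfold cntB
        rw [Finset.card_eq_zero]
        rw [Finset.eq_empty_iff_forall_notMem]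
        intro x hx
        rw [Finset.mem_filter] at hx
        obtain ⟨hxm, hxb, hxlt⟩ := hx
        have hx0 : 0 < x.val := by
          rcases Nat.eq_zero_or_pos x.val with h0 | h0
          · exfalso; apply hxb; rw [h0]; simp
          · exact h0
        have := hHd.2 x.val x.isLt hx0 (by omega)
        apply this
        rwa [show (⟨x.val, x.isLt⟩ : Fin ((r+1)*(n+1))) = x from Fin.ext rfl]
      have hW1 : 1 ≤ cntW r (upC r n D) t := by
        unfold cntW
        rw [Nat.succ_le_iff, Finset.card_pos]
        refine ⟨⟨0, Lpos r n⟩, ?_⟩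
        rw [Finset.mem_filter]
        exact ⟨hHd.1, by simp, by show (0:ℕ) < t; omega⟩
      rw [hB0]
      push_cast
      omega
    · set s := t - (r+1) with hs
      have hts : t = s + (r+1) := by omega
      rw [hts, cntW_ident r n _ hHd, cntB_ident r n _ hHd, hdu]
      have := hbal s
      push_cast
      omega
  rw [GSet, Finset.mem_filter, ASet, Finset.mem_filter]
  exact ⟨⟨Finset.mem_univ _, hW, hB⟩, hgood⟩

lemma G_Bal_card (r n j : ℕ) : (GSet r n j).card = (BalSet r n j).card := by
  classical
  refine Finset.card_bij (fun C _ => downC r n C) ?_ ?_ ?_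
  · intro C hC
    exact down_mem_Bal r n j C hC
  · intro C hC C' hC' heq
    have h1 : Hd r n C := Hd_of_good r n C (Finset.mem_filter.mp hC).2
    have h2 : Hd r n C' := Hd_of_good r n C' (Finset.mem_filter.mp hC').2
    rw [← up_down r n C h1, ← up_down r n C' h2, heq]
  · intro D hD
    exact ⟨upC r n D, up_mem_G r n j D hD, down_up r n D⟩


section step1
variable {N : ℕ} {w : Fin N → Bool}

lemma fst_injOn {E : Finset (Fin N × Fin N)} (hE : IsContraction w E) :
    ∀ e ∈ E, ∀ f ∈ E, e.1 = f.1 → e = f := by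
  intro e he f hf h
  by_contra hne
  exact (hE.2 e he f hf hne).1 h

lemma snd_injOn {E : Finset (Fin N × Fin N)} (hE : IsContraction w E) :
    ∀ e ∈ E, ∀ f ∈ E, e.2 = f.2 → e = f := by
  intro e he f hf h
  by_contra hne
  exact (hE.2 e he f hf hne).2.2.2 h

/-- interval equality of counts for a noncrossing contraction -/
lemma nc_count_eq {E : Finset (Fin N × Fin N)} (hE : IsContraction w E)
    (hN : IsNoncrossing E) {e : Fin N × Fin N} (he : e ∈ E) :
    ((E.image Prod.fst).filter (fun x => e.1 < x ∧ x < e.2)).card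
      = ((E.image Prod.snd).filter (fun x => e.1 < x ∧ x < e.2)).card := by
  classical
  have hFF : E.filter (fun f => e.1 < f.1 ∧ f.1 < e.2)
      = E.filter (fun f => e.1 < f.2 ∧ f.2 < e.2) := by
    ext f
    simp only [Finset.mem_filter]
    constructor
    · rintro ⟨hf, h1, h2⟩
      have hne : e ≠ f := by rintro rfl; exact absurd h1 (lt_irrefl _)
      have hd := hE.2 e he f hf hne
      have hlt : f.1 < f.2 := (hE.1 f hf).1
      refine ⟨hf, lt_trans h1 hlt, ?_⟩
      rcases Ne.lt_or_gt (Ne.symm hd.2.2.2) with h3 | h3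
      · exact h3
      · exact absurd (Or.inl ⟨h1, h2, h3⟩) (hN e he f hf)
    · rintro ⟨hf, h1, h2⟩
      have hne : e ≠ f := by rintro rfl; exact absurd h2 (lt_irrefl _)
      have hd := hE.2 e he f hf hne
      have hlt : f.1 < f.2 := (hE.1 f hf).1
      refine ⟨hf, ?_, lt_trans hlt h2⟩
      rcases Ne.lt_or_gt (Ne.symm hd.1) with h3 | h3
      · exact absurd (Or.inr ⟨h3, h1, h2⟩) (hN e he f hf)
      · exact h3
  have hWi : (E.image Prod.fst).filter (fun x => e.1 < x ∧ x < e.2)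
      = (E.filter (fun f => e.1 < f.1 ∧ f.1 < e.2)).image Prod.fst := by
    ext x
    simp only [Finset.mem_filter, Finset.mem_image]
    constructor
    · rintro ⟨⟨f, hf, rfl⟩, h1, h2⟩
      exact ⟨f, ⟨hf, h1, h2⟩, rfl⟩
    · rintro ⟨f, ⟨hf, h1, h2⟩, rfl⟩
      exact ⟨⟨f, hf, rfl⟩, h1, h2⟩
  have hBi : (E.image Prod.snd).filter (fun x => e.1 < x ∧ x < e.2)
      = (E.filter (fun f => e.1 < f.2 ∧ f.2 < e.2)).image Prod.snd := by
    ext x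
    simp only [Finset.mem_filter, Finset.mem_image]
    constructor
    · rintro ⟨⟨f, hf, rfl⟩, h1, h2⟩
      exact ⟨f, ⟨hf, h1, h2⟩, rfl⟩
    · rintro ⟨f, ⟨hf, h1, h2⟩, rfl⟩
      exact ⟨⟨f, hf, rfl⟩, h1, h2⟩
  rw [hWi, hBi, ← hFF]
  rw [Finset.card_image_of_injOn (fun a ha b hb hab =>
    fst_injOn hE a (Finset.mem_of_mem_filter _ ha) b (Finset.mem_of_mem_filter _ hb) hab)]
  rw [Finset.card_image_of_injOn (fun a ha b hb hab =>
    snd_injOn hE a (Finset.mem_of_mem_filter _ ha) b (Finset.mem_of_mem_filter _ hb) hab)]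

/-- strict inequality of counts before the partner -/
lemma nc_count_lt {E : Finset (Fin N × Fin N)} (hE : IsContraction w E)
    (hN : IsNoncrossing E) {e : Fin N × Fin N} (he : e ∈ E) {b' : Fin N}
    (hb' : b' ∈ E.image Prod.snd) (h1 : e.1 < b') (h2 : b' < e.2) :
    ((E.image Prod.snd).filter (fun x => e.1 < x ∧ x < b')).card
      < ((E.image Prod.fst).filter (fun x => e.1 < x ∧ x < b')).card := by
  classical
  set F2 := E.filter (fun f => e.1 < f.2 ∧ f.2 ≤ b') with hF2
  have hmemF2 : ∀ f ∈ F2, e.1 < f.1 ∧ f.1 < b' := by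
    intro f hf
    rw [hF2, Finset.mem_filter] at hf
    obtain ⟨hfE, hf1, hf2⟩ := hf
    have hne : e ≠ f := by
      rintro rfl
      exact absurd (lt_of_le_of_lt hf2 h2) (lt_irrefl _)
    have hd := hE.2 e he f hfE hne
    have hlt : f.1 < f.2 := (hE.1 f hfE).1
    constructor
    · rcases Ne.lt_or_gt (Ne.symm hd.1) with h3 | h3
      · exact absurd (Or.inr ⟨h3, hf1, lt_of_le_of_lt hf2 h2⟩) (hN e he f hfE)
      · exact h3
    · exact lt_of_lt_of_le hlt hf2
  have hBi : (E.image Prod.snd).filter (fun x => e.1 < x ∧ x ≤ b')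
      = F2.image Prod.snd := by
    ext x
    simp only [hF2, Finset.mem_filter, Finset.mem_image]
    constructor
    · rintro ⟨⟨f, hf, rfl⟩, ha, hb⟩
      exact ⟨f, ⟨hf, ha, hb⟩, rfl⟩
    · rintro ⟨f, ⟨hf, ha, hb⟩, rfl⟩
      exact ⟨⟨f, hf, rfl⟩, ha, hb⟩
  have hins : (E.image Prod.snd).filter (fun x => e.1 < x ∧ x ≤ b')
      = insert b' ((E.image Prod.snd).filter (fun x => e.1 < x ∧ x < b')) := by
    ext x
    simp only [Finset.mem_filter, Finset.mem_insert]
    constructor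
    · rintro ⟨hx, ha, hb⟩
      rcases lt_or_eq_of_le hb with hb | hb
      · exact Or.inr ⟨hx, ha, hb⟩
      · exact Or.inl hb
    · rintro (rfl | ⟨hx, ha, hb⟩)
      · exact ⟨hb', h1, le_refl _⟩
      · exact ⟨hx, ha, le_of_lt hb⟩
  have hcard1 : ((E.image Prod.snd).filter (fun x => e.1 < x ∧ x ≤ b')).card
      = ((E.image Prod.snd).filter (fun x => e.1 < x ∧ x < b')).card + 1 := by
    rw [hins, Finset.card_insert_of_notMem (by simp)]
  have hsub : F2.image Prod.fst ⊆ (E.image Prod.fst).filter (fun x => e.1 < x ∧ x < b') := by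
    intro x hx
    rw [Finset.mem_image] at hx
    obtain ⟨f, hf, rfl⟩ := hx
    rw [Finset.mem_filter]
    exact ⟨Finset.mem_image_of_mem _ (Finset.mem_of_mem_filter _ hf), hmemF2 f hf⟩
  have hc2 : (F2.image Prod.fst).card = F2.card :=
    Finset.card_image_of_injOn (fun a ha b hb hab =>
      fst_injOn hE a (Finset.mem_of_mem_filter _ ha) b (Finset.mem_of_mem_filter _ hb) hab)
  have hc3 : (F2.image Prod.snd).card = F2.card :=
    Finset.card_image_of_injOn (fun a ha b hb hab =>
      snd_injOn hE a (Finset.mem_of_mem_filter _ ha) b (Finset.mem_of_mem_filter _ hb) hab)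
  have := Finset.card_le_card hsub
  have hBic := congrArg Finset.card hBi
  omega

lemma nc_subset {E E' : Finset (Fin N × Fin N)}
    (hE : IsContraction w E) (hNE : IsNoncrossing E)
    (hE' : IsContraction w E') (hNE' : IsNoncrossing E')
    (hW : E.image Prod.fst = E'.image Prod.fst)
    (hB : E.image Prod.snd = E'.image Prod.snd) : E ⊆ E' := by
  intro e he
  have h1 : e.1 ∈ E'.image Prod.fst := by
    rw [← hW]; exact Finset.mem_image_of_mem _ he
  rw [Finset.mem_image] at h1
  obtain ⟨f, hf, hfe⟩ := h1
  have heq : e.2 = f.2 := by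
    by_contra hne
    rcases Ne.lt_or_gt hne with hlt | hlt
    · -- e.2 < f.2 : use strict count for E' at b' := e.2, equality for E at e
      have hb'' : (e.2 : Fin N) ∈ E'.image Prod.snd := by
        rw [← hB]; exact Finset.mem_image_of_mem _ he
      have hs := nc_count_lt hE' hNE' hf (b' := e.2) hb'' (by rw [hfe]; exact (hE.1 e he).1) hlt
      have heqc := nc_count_eq hE hNE he
      rw [hW, hB] at heqc
      rw [hfe] at hs
      omega
    · -- f.2 < e.2 : use strict count for E at b' := f.2, equality for E' at f
      have hb'' : (f.2 : Fin N) ∈ E.image Prod.snd := by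
        rw [hB]; exact Finset.mem_image_of_mem _ hf
      have hs := nc_count_lt hE hNE he (b' := f.2) hb'' (by rw [← hfe]; exact (hE'.1 f hf).1) hlt
      have heqc := nc_count_eq hE' hNE' hf
      rw [← hW, ← hB] at heqc
      rw [hfe] at heqc
      omega
  have : e = f := Prod.ext hfe.symm heq
  rw [this]
  exact hf

lemma nc_unique {E E' : Finset (Fin N × Fin N)}
    (hE : IsContraction w E) (hNE : IsNoncrossing E)
    (hE' : IsContraction w E') (hNE' : IsNoncrossing E')
    (hW : E.image Prod.fst = E'.image Prod.fst)
    (hB : E.image Prod.snd = E'.image Prod.snd) : E = E' :=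
  Finset.Subset.antisymm (nc_subset hE hNE hE' hNE' hW hB)
    (nc_subset hE' hNE' hE hNE hW.symm hB.symm)

end step1

lemma nc_exists {N : ℕ} (w : Fin N → Bool) : ∀ (k : ℕ) (W B : Finset (Fin N)),
    W.card = k → B.card = k →
    (∀ x ∈ W, w x = false) → (∀ x ∈ B, w x = true) →
    (∀ t : ℕ, (B.filter (fun x => x.val < t)).card ≤ (W.filter (fun x => x.val < t)).card) →
    ∃ E : Finset (Fin N × Fin N), IsContraction w E ∧ IsNoncrossing E ∧
      E.image Prod.fst = W ∧ E.image Prod.snd = B ∧ E.card = k := by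
  intro k
  induction k with
  | zero =>
    intro W B hW hB _ _ _
    rw [Finset.card_eq_zero] at hW hB
    subst hW; subst hB
    refine ⟨∅, ⟨?_, ?_⟩, ?_, ?_, ?_, ?_⟩ <;> simp [IsNoncrossing]
  | succ k ih =>
    intro W B hW hB hWc hBc hbal
    have hBne : B.Nonempty := Finset.card_pos.mp (by omega)
    set b := B.min' hBne with hbdef
    have hbB : b ∈ B := Finset.min'_mem _ _
    have hbmin : ∀ x ∈ B, b ≤ x := fun x hx => Finset.min'_le _ _ hx
    have h1 : 1 ≤ (B.filter (fun x => x.val < b.val + 1)).card := by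
      rw [Nat.succ_le_iff, Finset.card_pos]
      exact ⟨b, Finset.mem_filter.mpr ⟨hbB, by omega⟩⟩
    have hWne : (W.filter (fun x => x.val < b.val + 1)).Nonempty :=
      Finset.card_pos.mp (lt_of_lt_of_le (by omega) (hbal (b.val+1)))
    set w0 := (W.filter (fun x => x.val < b.val + 1)).max' hWne with hw0def
    have hw0mem := Finset.max'_mem _ hWne
    rw [Finset.mem_filter] at hw0mem
    obtain ⟨hw0W, hw0lt⟩ := hw0mem
    have hmax : ∀ x ∈ W, x.val < b.val + 1 → x.val ≤ w0.val := by
      intro x hx hxlt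
      exact Finset.le_max' _ x (Finset.mem_filter.mpr ⟨hx, hxlt⟩)
    have hw0b : w0 ≠ b := by
      intro h
      have := hWc w0 hw0W
      rw [h, hBc b hbB] at this
      exact absurd this (by simp)
    have hw0ltb : w0 < b := by
      rcases Ne.lt_or_gt hw0b with h | h
      · exact h
      · exact absurd h (by rw [Fin.lt_iff_val_lt_val]; omega)
    have hW' : (W.erase w0).card = k := by rw [Finset.card_erase_of_mem hw0W]; omega
    have hB' : (B.erase b).card = k := by rw [Finset.card_erase_of_mem hbB]; omega
    have hbal' : ∀ t : ℕ, ((B.erase b).filter (fun x => x.val < t)).card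
        ≤ ((W.erase w0).filter (fun x => x.val < t)).card := by
      intro t
      rcases le_or_gt t b.val with ht | ht
      · have : (B.erase b).filter (fun x => x.val < t) = ∅ := by
          rw [Finset.eq_empty_iff_forall_notMem]
          intro x hx
          rw [Finset.mem_filter, Finset.mem_erase] at hx
          have := hbmin x hx.1.2
          rw [Fin.le_iff_val_le_val] at this
          omega
        rw [this]
        simp
      · have e1 : (B.erase b).filter (fun x => x.val < t) = (B.filter (fun x => x.val < t)).erase b := by
          ext x
          rw [Finset.mem_filter, Finset.mem_erase, Finset.mem_erase, Finset.mem_filter]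
          tauto
        have e2 : (W.erase w0).filter (fun x => x.val < t) = (W.filter (fun x => x.val < t)).erase w0 := by
          ext x
          rw [Finset.mem_filter, Finset.mem_erase, Finset.mem_erase, Finset.mem_filter]
          tauto
        have m1 : b ∈ B.filter (fun x => x.val < t) := Finset.mem_filter.mpr ⟨hbB, ht⟩
        have m2 : w0 ∈ W.filter (fun x => x.val < t) := by
          refine Finset.mem_filter.mpr ⟨hw0W, ?_⟩
          rw [Fin.lt_iff_val_lt_val] at hw0ltb
          omega
        rw [e1, e2, Finset.card_erase_of_mem m1, Finset.card_erase_of_mem m2]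
        have := hbal t
        have := Finset.card_pos.mpr ⟨w0, m2⟩
        omega
    obtain ⟨E', hE', hNE', hif, his, hcard⟩ := ih (W.erase w0) (B.erase b) hW' hB'
      (fun x hx => hWc x (Finset.mem_of_mem_erase hx))
      (fun x hx => hBc x (Finset.mem_of_mem_erase hx)) hbal'
    have hfstE' : ∀ f ∈ E', f.1 ∈ W.erase w0 := by
      intro f hf; rw [← hif]; exact Finset.mem_image_of_mem _ hf
    have hsndE' : ∀ f ∈ E', f.2 ∈ B.erase b := by
      intro f hf; rw [← his]; exact Finset.mem_image_of_mem _ hf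
    have hnotin : (w0, b) ∉ E' := by
      intro h
      have := hfstE' _ h
      rw [Finset.mem_erase] at this
      exact this.1 rfl
    refine ⟨insert (w0, b) E', ⟨?_, ?_⟩, ?_, ?_, ?_, ?_⟩
    · intro e he
      rw [Finset.mem_insert] at he
      rcases he with rfl | he
      · exact ⟨hw0ltb, hWc w0 hw0W, hBc b hbB⟩
      · exact hE'.1 e he
    · intro e he f hf hne
      rw [Finset.mem_insert] at he hf
      have key : ∀ g ∈ E', (w0, b).1 ≠ g.1 ∧ (w0, b).1 ≠ g.2 ∧ (w0, b).2 ≠ g.1 ∧ (w0, b).2 ≠ g.2 := by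
        intro g hg
        have hg1 := hfstE' g hg
        have hg2 := hsndE' g hg
        rw [Finset.mem_erase] at hg1 hg2
        refine ⟨fun h => hg1.1 h.symm, ?_, ?_, fun h => hg2.1 h.symm⟩
        · intro h
          have c1 := hWc w0 hw0W
          have c2 := hBc g.2 hg2.2
          have h' : w0 = g.2 := h
          rw [h', c2] at c1
          exact absurd c1 (by simp)
        · intro h
          have c1 := hBc b hbB
          have c2 := hWc g.1 hg1.2
          have h' : b = g.1 := h
          rw [← h', c1] at c2
          exact absurd c2 (by simp)
      rcases he with rfl | he
      · rcases hf with rfl | hf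
        · exact absurd rfl hne
        · exact key f hf
      · rcases hf with rfl | hf
        · have := key e he
          exact ⟨fun h => this.1 h.symm, fun h => this.2.2.1 h.symm,
            fun h => this.2.1 h.symm, fun h => this.2.2.2 h.symm⟩
        · exact hE'.2 e he f hf hne
    · intro e he f hf
      rw [Finset.mem_insert] at he hf
      have key : ∀ g ∈ E', ¬ Crosses (w0, b) g := by
        intro g hg
        rintro (⟨h1, h2, h3⟩ | ⟨h1, h2, h3⟩) <;> dsimp only at h1 h2 h3
        · have hg1 := Finset.mem_of_mem_erase (hfstE' g hg)
          have := hmax g.1 hg1 (by rw [Fin.lt_iff_val_lt_val] at h2; omega)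
          rw [Fin.lt_iff_val_lt_val] at h1
          omega
        · have hg2 := Finset.mem_of_mem_erase (hsndE' g hg)
          have := hbmin g.2 hg2
          rw [Fin.le_iff_val_le_val] at this
          rw [Fin.lt_iff_val_lt_val] at h3
          omega
      have key2 : ∀ g ∈ E', ¬ Crosses g (w0, b) := by
        intro g hg
        rintro (⟨h1, h2, h3⟩ | ⟨h1, h2, h3⟩) <;> dsimp only at h1 h2 h3
        · have hg2 := Finset.mem_of_mem_erase (hsndE' g hg)
          have := hbmin g.2 hg2
          rw [Fin.le_iff_val_le_val] at this
          rw [Fin.lt_iff_val_lt_val] at h3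
          omega
        · have hg1 := Finset.mem_of_mem_erase (hfstE' g hg)
          have := hmax g.1 hg1 (by rw [Fin.lt_iff_val_lt_val] at h2; omega)
          rw [Fin.lt_iff_val_lt_val] at h1
          omega
      rcases he with rfl | he
      · rcases hf with rfl | hf
        · rintro (⟨h1, _, _⟩ | ⟨h1, _, _⟩) <;> exact absurd h1 (lt_irrefl _)
        · exact key f hf
      · rcases hf with rfl | hf
        · exact key2 e he
        · exact hNE' e he f hf
    · rw [Finset.image_insert, hif, Finset.insert_erase hw0W]
    · rw [Finset.image_insert, his, Finset.insert_erase hbB]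
    · rw [Finset.card_insert_of_notMem hnotin, hcard]

noncomputable def endpoints {N : ℕ} (E : Finset (Fin N × Fin N)) : Finset (Fin N) :=
  E.image Prod.fst ∪ E.image Prod.snd

lemma word_white (r n : ℕ) (i : Fin ((r+1)*n)) :
    wordAR r n i = false ↔ i.val % (r+1) = 0 := by
  simp only [wordAR, decide_eq_false_iff_not]
  omega

lemma word_black (r n : ℕ) (i : Fin ((r+1)*n)) :
    wordAR r n i = true ↔ ¬(i.val % (r+1) = 0) := by
  simp only [wordAR, decide_eq_true_eq]
  omega

section forward
variable {r n : ℕ} {E : Finset (Fin ((r+1)*n) × Fin ((r+1)*n))}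

lemma endpointsW (hE : IsContraction (wordAR r n) E) (t : ℕ) :
    (endpoints E).filter (fun x => x.val % (r+1) = 0 ∧ x.val < t)
      = (E.filter (fun e => e.1.val < t)).image Prod.fst := by
  classical
  ext x
  simp only [endpoints, Finset.mem_filter, Finset.mem_union, Finset.mem_image]
  constructor
  · rintro ⟨h1 | h1, hw, hlt⟩
    · obtain ⟨f, hf, rfl⟩ := h1
      exact ⟨f, ⟨hf, hlt⟩, rfl⟩
    · obtain ⟨f, hf, rfl⟩ := h1
      have := (word_black r n f.2).mp (hE.1 f hf).2.2
      exact absurd hw this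
  · rintro ⟨f, ⟨hf, hlt⟩, rfl⟩
    exact ⟨Or.inl ⟨f, hf, rfl⟩, (word_white r n f.1).mp (hE.1 f hf).2.1, hlt⟩

lemma endpointsB (hE : IsContraction (wordAR r n) E) (t : ℕ) :
    (endpoints E).filter (fun x => ¬(x.val % (r+1) = 0) ∧ x.val < t)
      = (E.filter (fun e => e.2.val < t)).image Prod.snd := by
  classical
  ext x
  simp only [endpoints, Finset.mem_filter, Finset.mem_union, Finset.mem_image]
  constructor
  · rintro ⟨h1 | h1, hw, hlt⟩
    · obtain ⟨f, hf, rfl⟩ := h1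
      have := (word_white r n f.1).mp (hE.1 f hf).2.1
      exact absurd this hw
    · obtain ⟨f, hf, rfl⟩ := h1
      exact ⟨f, ⟨hf, hlt⟩, rfl⟩
  · rintro ⟨f, ⟨hf, hlt⟩, rfl⟩
    exact ⟨Or.inr ⟨f, hf, rfl⟩, (word_black r n f.2).mp (hE.1 f hf).2.2, hlt⟩

lemma cntW_endpoints (hE : IsContraction (wordAR r n) E) (t : ℕ) :
    cntW r (endpoints E) t = (E.filter (fun e => e.1.val < t)).card := by
  unfold cntW
  rw [endpointsW hE t]
  exact Finset.card_image_of_injOn (fun a ha b hb hab =>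
    fst_injOn hE a (Finset.mem_of_mem_filter _ ha) b (Finset.mem_of_mem_filter _ hb) hab)

lemma cntB_endpoints (hE : IsContraction (wordAR r n) E) (t : ℕ) :
    cntB r (endpoints E) t = (E.filter (fun e => e.2.val < t)).card := by
  unfold cntB
  rw [endpointsB hE t]
  exact Finset.card_image_of_injOn (fun a ha b hb hab =>
    snd_injOn hE a (Finset.mem_of_mem_filter _ ha) b (Finset.mem_of_mem_filter _ hb) hab)

lemma endpoints_mem_Bal (hE : IsContraction (wordAR r n) E) {j : ℕ} (hcard : E.card = j) :
    endpoints E ∈ BalSet r n j := by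
  classical
  rw [BalSet, Finset.mem_filter]
  have hWfull : E.filter (fun e => e.1.val < (r+1)*n) = E :=
    Finset.filter_true_of_mem (fun e _ => e.1.isLt)
  have hBfull : E.filter (fun e => e.2.val < (r+1)*n) = E :=
    Finset.filter_true_of_mem (fun e _ => e.2.isLt)
  refine ⟨Finset.mem_univ _, ?_, ?_, ?_⟩
  · rw [cntW_endpoints hE, hWfull, hcard]
  · rw [cntB_endpoints hE, hBfull, hcard]
  · intro t
    rw [cntW_endpoints hE, cntB_endpoints hE]
    apply Finset.card_le_card
    intro e he
    rw [Finset.mem_filter] at he ⊢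
    have := (hE.1 e he.1).1
    rw [Fin.lt_iff_val_lt_val] at this
    exact ⟨he.1, by omega⟩

lemma image_fst_eq (hE : IsContraction (wordAR r n) E) :
    E.image Prod.fst = (endpoints E).filter (fun x => x.val % (r+1) = 0) := by
  classical
  have h := endpointsW hE ((r+1)*n)
  rw [filter_lt_top] at h
  rw [h, Finset.filter_true_of_mem (fun e _ => e.1.isLt)]

lemma image_snd_eq (hE : IsContraction (wordAR r n) E) :
    E.image Prod.snd = (endpoints E).filter (fun x => ¬(x.val % (r+1) = 0)) := by
  classical
  have h := endpointsB hE ((r+1)*n)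
  rw [filter_lt_top] at h
  rw [h, Finset.filter_true_of_mem (fun e _ => e.2.isLt)]

end forward

lemma ncCount_eq_Bal (r n j : ℕ) : ncCount (wordAR r n) j = (BalSet r n j).card := by
  classical
  rw [ncCount, ← Nat.card_eq_finsetCard (BalSet r n j)]
  apply Nat.card_eq_of_bijective
    (f := fun X => (⟨endpoints X.1, endpoints_mem_Bal X.2.1 X.2.2.2⟩ :
      {D : Finset (Fin ((r+1)*n)) // D ∈ BalSet r n j}))
  constructor
  · rintro ⟨E, hE, hNE, hcE⟩ ⟨E', hE', hNE', hcE'⟩ heq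
    simp only [Subtype.mk.injEq] at heq
    have hW : E.image Prod.fst = E'.image Prod.fst := by
      rw [image_fst_eq hE, image_fst_eq hE', heq]
    have hB : E.image Prod.snd = E'.image Prod.snd := by
      rw [image_snd_eq hE, image_snd_eq hE', heq]
    exact Subtype.ext (nc_unique hE hNE hE' hNE' hW hB)
  · rintro ⟨D, hD⟩
    rw [BalSet, Finset.mem_filter] at hD
    obtain ⟨-, hcW, hcB, hbal⟩ := hD
    have hWcard : (D.filter (fun x => x.val % (r+1) = 0)).card = j := by
      rw [← cntW_top r D ((r+1)*n) (le_refl _)]; exact hcW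
    have hBcard : (D.filter (fun x => ¬(x.val % (r+1) = 0))).card = j := by
      rw [← cntB_top r D ((r+1)*n) (le_refl _)]; exact hcB
    obtain ⟨E, hE, hNE, hif, his, hcE⟩ := nc_exists (wordAR r n) j
      (D.filter (fun x => x.val % (r+1) = 0)) (D.filter (fun x => ¬(x.val % (r+1) = 0)))
      hWcard hBcard
      (fun x hx => (word_white r n x).mpr (Finset.mem_filter.mp hx).2)
      (fun x hx => (word_black r n x).mpr (Finset.mem_filter.mp hx).2)
      (by
        intro t
        rw [Finset.filter_filter, Finset.filter_filter]
        exact hbal t)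
    refine ⟨⟨E, hE, hNE, hcE⟩, ?_⟩
    apply Subtype.ext
    simp only
    rw [endpoints, hif, his]
    exact Finset.filter_union_filter_not_eq _ D


theorem stmt2 (r : ℕ) (hr : 1 ≤ r) (n j : ℕ) (hj : j ≤ n) :
    (n + 1) * ncCount (wordAR r n) j
      = Nat.choose (n + 1) (j + 1) * Nat.choose (r * n + r) j := by
  have h1 : ncCount (wordAR r n) j = (BalSet r n j).card := ncCount_eq_Bal r n j
  have h2 := orbit_count r n j
  have h3 := G_Bal_card r n j
  have h4 := card_ASet r n j
  have h5 : r*(n+1) = r*n + r := by ring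
  rw [h5] at h4
  rw [h1, ← h3, ← h2, h4]
end

section
/- Fix an integer r ≥ 1. For all integers n ≥ 0 and 0 ≤ j ≤ n, the number of noncrossing contractions with exactly j edges of the word (a^r a†)^n equals the number of noncrossing contractions with exactly j edges of the word (a (a†)^r)^n. -/
/-!
Reading a word backwards while exchanging `a` and `a†` turns `(a^r a†)^n` into `(a (a†)^r)^n`.
Under this reversal the edge `(i, j)` becomes `(j.rev, i.rev)`, which is again an (`a`, `a†`)
pair of the new word; the map preserves disjointness and crossing of edges, so it is a bijection
between the noncrossing contractions of the two words with any given number of edges.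
-/

def reflectEdge {N : ℕ} : Equiv.Perm (Fin N × Fin N) :=
  Function.Involutive.toPerm (fun e => (e.2.rev, e.1.rev)) fun e => by simp

lemma reflectEdge_apply {N : ℕ} (e : Fin N × Fin N) : reflectEdge e = (e.2.rev, e.1.rev) := rfl

lemma reflectEdge_symm {N : ℕ} : (reflectEdge : Equiv.Perm (Fin N × Fin N)).symm = reflectEdge :=
  Function.Involutive.toPerm_symm _

lemma map_reflectEdge_map_reflectEdge {N : ℕ} (E : Finset (Fin N × Fin N)) :
    (E.map reflectEdge.toEmbedding).map reflectEdge.toEmbedding = E := by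
  rw [Finset.map_map, ← Equiv.trans_toEmbedding]
  nth_rewrite 1 [← reflectEdge_symm]
  rw [Equiv.symm_trans_self, Equiv.refl_toEmbedding, Finset.map_refl]

lemma crosses_reflectEdge {N : ℕ} (e f : Fin N × Fin N) :
    Crosses (reflectEdge e) (reflectEdge f) ↔ Crosses e f := by
  simp only [Crosses, reflectEdge_apply, Fin.rev_lt_rev]
  tauto

section Reflection

variable {N : ℕ} {w w' : Fin N → Bool} {E : Finset (Fin N × Fin N)}

lemma IsContraction.map_reflectEdge (hw : ∀ i, w' i.rev = !w i) (hE : IsContraction w E) :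
    IsContraction w' (E.map reflectEdge.toEmbedding) := by
  refine ⟨Finset.forall_mem_map.2 fun e he => ?_, Finset.forall_mem_map.2 fun e he =>
    Finset.forall_mem_map.2 fun f hf hef => ?_⟩
  · obtain ⟨hlt, h1, h2⟩ := hE.1 e he
    simpa [reflectEdge_apply, hw, h1, h2] using hlt
  · obtain ⟨h11, h12, h21, h22⟩ := hE.2 e he f hf (ne_of_apply_ne reflectEdge hef)
    simp only [Equiv.coe_toEmbedding, reflectEdge_apply, ne_eq, Fin.rev_inj]
    exact ⟨h22, h21, h12, h11⟩

lemma IsNoncrossing.map_reflectEdge (hE : IsNoncrossing E) :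
    IsNoncrossing (E.map reflectEdge.toEmbedding) := by
  simpa only [IsNoncrossing, Finset.forall_mem_map, Equiv.coe_toEmbedding, crosses_reflectEdge]
    using hE

theorem ncCount_eq_of_rev (hw : ∀ i, w' i.rev = !w i) (m : ℕ) :
    ncCount w m = ncCount w' m := by
  have hw' : ∀ i, w i.rev = !w' i := fun i => by
    rw [← Bool.not_not (w i.rev), ← hw, Fin.rev_rev]
  refine Nat.card_congr (Equiv.subtypeEquiv reflectEdge.finsetCongr fun E => ?_)
  rw [Equiv.finsetCongr_apply]
  refine ⟨fun ⟨hC, hNC, hm⟩ => ⟨hC.map_reflectEdge hw, hNC.map_reflectEdge, by simpa using hm⟩,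
    fun ⟨hC, hNC, hm⟩ => ?_⟩
  rw [← map_reflectEdge_map_reflectEdge E]
  exact ⟨hC.map_reflectEdge hw', hNC.map_reflectEdge, by simpa using hm⟩

end Reflection

lemma Nat.mul_sub_succ_mod {d n i : ℕ} (hi : i < d * n) :
    (d * n - (i + 1)) % d = d - 1 - i % d := by
  have hd : 0 < d := Nat.pos_of_ne_zero (by rintro rfl; simp at hi)
  have hq : i / d < n := Nat.div_lt_of_lt_mul hi
  obtain ⟨k, rfl⟩ : ∃ k, n = i / d + 1 + k := ⟨n - (i / d + 1), by omega⟩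
  have hi' := Nat.div_add_mod i d
  have ht := Nat.mod_lt i hd
  have hsplit : d * (i / d + 1 + k) - (i + 1) = d * k + (d - 1 - i % d) := by
    rw [Nat.mul_add, Nat.mul_add_one]
    omega
  rw [hsplit, Nat.mul_add_mod, Nat.mod_eq_of_lt (by omega)]

lemma wordAR_rev (r n : ℕ) (i : Fin ((r + 1) * n)) : wordAR r n i.rev = !wordRA r n i := by
  have hmod := Nat.mul_sub_succ_mod i.isLt
  have hlt : i.val % (r + 1) < r + 1 := Nat.mod_lt _ r.succ_pos
  simp only [wordAR, wordRA, Fin.val_rev, hmod, Nat.add_sub_cancel]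
  rcases eq_or_ne (i.val % (r + 1)) r with h | h
  · simp [h]
  · have hpos : 0 < r - i.val % (r + 1) := by omega
    simp [h, hpos]

theorem stmt3_general (r : ℕ) (n j : ℕ) :
    ncCount (wordRA r n) j = ncCount (wordAR r n) j :=
  ncCount_eq_of_rev (wordAR_rev r n) j

theorem stmt3 (r : ℕ) (hr : 1 ≤ r) (n j : ℕ) (hj : j ≤ n) :
    ncCount (wordRA r n) j = ncCount (wordAR r n) j :=
  stmt3_general r n j
end

section
/- Fix an integer s ≥ 1. Let A be the formal power series in three commuting variables X, Y, Z with integer coefficients whose coefficient of X^n Y^j Z^i is the number of pairs (c, E) where c : Fin n → Bool is a choice with exactly i indices k satisfying c k = false, and E is a noncrossing contraction with exactly j edges of the word of (a + (a†)^s)^n associated to c. Then A satisfies the functional equation A = 1 + X·Z·A + X·A·(1 + X·Y·Z·A)^s. -/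
/-- The word of `(a + (a†)^s)^n` associated to a choice `c : Fin n → Bool`: block `k` consists of
the single letter `a` (`false`) if `c k = false`, and of `s` copies of `a†` (`true`) otherwise. -/
def wordChoiceAS (s : ℕ) {n : ℕ} (c : Fin n → Bool) : List Bool :=
  (List.ofFn c).flatMap (fun b => if b then List.replicate s true else [false])

/-- The number of pairs `(c, E)` where `c` is a choice for `(a + (a†)^s)^n` with exactly `i`
indices `k` satisfying `c k = false`, and `E` is a noncrossing contraction of the associated
word with exactly `j` edges. -/
noncomputable def pairCountAS (s n j i : ℕ) : ℕ :=
  Nat.card {p : Σ c : Fin n → Bool,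
      Finset (Fin (wordChoiceAS s c).length × Fin (wordChoiceAS s c).length) //
    (Finset.univ.filter (fun k => p.1 k = false)).card = i ∧
    IsContraction (wordChoiceAS s p.1).get p.2 ∧ IsNoncrossing p.2 ∧ p.2.card = j}

open Finset

namespace BosonWord

section Words

variable {M : Type*} [AddCommMonoid M]

def falsePositions (w : List Bool) : Finset ℕ :=
  (range w.length).filter fun i => w[i]? = some false

theorem mem_falsePositions {w : List Bool} {i : ℕ} : i ∈ falsePositions w ↔ w[i]? = some false := by
  simp only [falsePositions, mem_filter, mem_range, and_iff_right_iff_imp]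
  intro h
  exact (List.getElem?_eq_some_iff.1 h).1

theorem eq_take_append_false_cons_drop {w : List Bool} {i : ℕ} (h : w[i]? = some false) :
    w = w.take i ++ false :: w.drop (i + 1) := by
  obtain ⟨hi, hw⟩ := List.getElem?_eq_some_iff.1 h
  conv_lhs => rw [← List.take_append_drop i w]
  rw [List.drop_eq_getElem_cons hi, hw]

/-- The sum of `F u v` over all factorizations `w = u ++ false :: v`. -/
def falseSplitSum (F : List Bool → List Bool → M) (w : List Bool) : M :=
  ∑ i ∈ falsePositions w, F (w.take i) (w.drop (i + 1))

theorem falsePositions_append (u v : List Bool) :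
    falsePositions (u ++ v) =
      falsePositions u ∪ (falsePositions v).map (addLeftEmbedding u.length) := by
  ext i
  simp only [mem_union, mem_map, mem_falsePositions, addLeftEmbedding_apply]
  rcases lt_or_ge i u.length with hi | hi
  · rw [List.getElem?_append_left hi]
    refine ⟨Or.inl, ?_⟩
    rintro (h | ⟨j, -, rfl⟩)
    · exact h
    · omega
  · rw [List.getElem?_append_right hi]
    refine ⟨fun h => Or.inr ⟨i - u.length, h, by omega⟩, ?_⟩
    rintro (h | ⟨j, h, rfl⟩)
    · simp [List.getElem?_eq_none hi] at h
    · simpa using h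

theorem falseSplitSum_append (F : List Bool → List Bool → M) (u v : List Bool) :
    falseSplitSum F (u ++ v) =
      falseSplitSum (fun u' v' => F u' (v' ++ v)) u +
        falseSplitSum (fun u' v' => F (u ++ u') v') v := by
  have hdisj :
      Disjoint (falsePositions u) ((falsePositions v).map (addLeftEmbedding u.length)) := by
    rw [disjoint_left]
    intro i hu hv
    obtain ⟨j, -, rfl⟩ := mem_map.1 hv
    have := (List.getElem?_eq_some_iff.1 (mem_falsePositions.1 hu)).1
    simp at this
  rw [falseSplitSum, falsePositions_append, sum_union hdisj, sum_map]
  congr 1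
  · refine sum_congr rfl fun i hi => ?_
    have := (List.getElem?_eq_some_iff.1 (mem_falsePositions.1 hi)).1
    rw [List.take_append_of_le_length this.le, List.drop_append_of_le_length this]
  · refine sum_congr rfl fun i _ => ?_
    rw [addLeftEmbedding_apply, List.take_length_add_append, add_assoc,
      List.drop_length_add_append]

theorem falseSplitSum_replicate_true (F : List Bool → List Bool → M) (k : ℕ) :
    falseSplitSum F (List.replicate k true) = 0 := by
  refine sum_eq_zero fun i hi => ?_
  simp [mem_falsePositions, List.getElem?_replicate] at hi

theorem falseSplitSum_singleton_false (F : List Bool → List Bool → M) :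
    falseSplitSum F [false] = F [] [] := by
  have : falsePositions [false] = {0} := by
    ext i
    rw [mem_falsePositions, mem_singleton]
    rcases i with _ | i <;> simp
  simp [falseSplitSum, this]

def blockWord (s : ℕ) (l : List Bool) : List Bool :=
  l.flatMap fun b => if b then List.replicate s true else [false]

theorem falseSplitSum_blockWord (s : ℕ) (F : List Bool → List Bool → M) (l : List Bool) :
    falseSplitSum F (blockWord s l) =
      falseSplitSum (fun u v => F (blockWord s u) (blockWord s v)) l := by
  induction l generalizing F with
  | nil => simp [falseSplitSum, falsePositions, blockWord]
  | cons b l ih =>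
    have hcons : b :: l = [b] ++ l := rfl
    rw [hcons, falseSplitSum_append, show blockWord s ([b] ++ l) =
      (if b then List.replicate s true else [false]) ++ blockWord s l by simp [blockWord],
      falseSplitSum_append, ih]
    cases b
    · simp [falseSplitSum_singleton_false, blockWord]
    · rw [if_pos rfl, falseSplitSum_replicate_true, show [true] = List.replicate 1 true from rfl,
        falseSplitSum_replicate_true]
      simp [blockWord]

end Words

section Contractions

variable {R : Type*} [CommSemiring R]

/-- For arcs with `e.1 < e.2` and `f.1 < f.2`: distinct endpoints and no crossing, i.e. the two arcs
are side by side or nested. -/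
def ArcsCompatible (e f : ℕ × ℕ) : Prop :=
  e.2 < f.1 ∨ f.2 < e.1 ∨ (e.1 < f.1 ∧ f.2 < e.2) ∨ (f.1 < e.1 ∧ e.2 < f.2)

/-- `IsContraction` and `IsNoncrossing` with positions in `ℕ` instead of `Fin w.length`, so that
words can be cut and arcs shifted. -/
structure IsNCContraction (w : List Bool) (E : Finset (ℕ × ℕ)) : Prop where
  arc : ∀ e ∈ E, e.1 < e.2 ∧ w[e.1]? = some false ∧ w[e.2]? = some true
  pairwise : (E : Set (ℕ × ℕ)).Pairwise ArcsCompatible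

def shiftArcs (k : ℕ) (E : Finset (ℕ × ℕ)) : Finset (ℕ × ℕ) :=
  E.map ((addLeftEmbedding k).prodMap (addLeftEmbedding k))

theorem mem_shiftArcs {k : ℕ} {E : Finset (ℕ × ℕ)} {x : ℕ × ℕ} :
    x ∈ shiftArcs k E ↔ ∃ e ∈ E, (k + e.1, k + e.2) = x := by
  simp [shiftArcs, Prod.exists]

theorem shiftArcs_injective (k : ℕ) : Function.Injective (shiftArcs k) :=
  map_injective _

theorem shiftArcs_image_sub {k : ℕ} {S : Finset (ℕ × ℕ)} (hS : ∀ e ∈ S, k ≤ e.1 ∧ k ≤ e.2) :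
    shiftArcs k (S.image fun e => (e.1 - k, e.2 - k)) = S := by
  ext x
  simp only [mem_shiftArcs, mem_image]
  constructor
  · rintro ⟨_, ⟨f, hf, rfl⟩, rfl⟩
    have := hS f hf
    convert hf using 1
    ext <;> simp only <;> omega
  · intro hx
    have := hS x hx
    exact ⟨_, ⟨x, hx, rfl⟩, by ext <;> simp only <;> omega⟩

namespace IsNCContraction

variable {w u v : List Bool} {E F : Finset (ℕ × ℕ)}

theorem mono (h : IsNCContraction w E) (hFE : F ⊆ E) : IsNCContraction w F :=
  ⟨fun e he => h.arc e (hFE he), h.pairwise.mono (coe_subset.2 hFE)⟩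

theorem snd_lt_length (h : IsNCContraction w E) {e : ℕ × ℕ} (he : e ∈ E) : e.2 < w.length :=
  (List.getElem?_eq_some_iff.1 (h.arc e he).2.2).1

theorem append (h : IsNCContraction u E) : IsNCContraction (u ++ v) E := by
  refine ⟨fun e he => ?_, h.pairwise⟩
  obtain ⟨hlt, h₁, h₂⟩ := h.arc e he
  have := h.snd_lt_length he
  rw [List.getElem?_append_left (by omega), List.getElem?_append_left this]
  exact ⟨hlt, h₁, h₂⟩

theorem of_append (h : IsNCContraction (u ++ v) E) (hE : ∀ e ∈ E, e.2 < u.length) :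
    IsNCContraction u E := by
  refine ⟨fun e he => ?_, h.pairwise⟩
  obtain ⟨hlt, h₁, h₂⟩ := h.arc e he
  have := hE e he
  rw [List.getElem?_append_left (by omega)] at h₁
  rw [List.getElem?_append_left this] at h₂
  exact ⟨hlt, h₁, h₂⟩

theorem take_iff {p : ℕ} :
    IsNCContraction (w.take p) E ↔ IsNCContraction w E ∧ ∀ e ∈ E, e.2 < p := by
  constructor
  · intro h
    refine ⟨List.take_append_drop p w ▸ h.append, fun e he => ?_⟩
    have := h.snd_lt_length he
    simp only [List.length_take] at this
    omega
  · rintro ⟨h, hp⟩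
    have hw : ∀ e ∈ E, e.2 < w.length := fun e he => h.snd_lt_length he
    rw [← List.take_append_drop p w] at h
    refine h.of_append fun e he => ?_
    have := hp e he
    have := hw e he
    simp only [List.length_take]
    omega

theorem drop_iff {k : ℕ} : IsNCContraction (w.drop k) E ↔ IsNCContraction w (shiftArcs k E) := by
  have hcompat : Function.onFun ArcsCompatible
      ((addLeftEmbedding k).prodMap (addLeftEmbedding k)) = ArcsCompatible := by
    ext e f
    simp only [Function.onFun, Function.Embedding.coe_prodMap, Prod.map, addLeftEmbedding_apply,
      ArcsCompatible]
    omega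
  have hpair : ((shiftArcs k E : Finset (ℕ × ℕ)) : Set (ℕ × ℕ)).Pairwise ArcsCompatible ↔
      (E : Set (ℕ × ℕ)).Pairwise ArcsCompatible := by
    rw [shiftArcs, coe_map, (Function.Embedding.injective _).injOn.pairwise_image, hcompat]
  have harc : (∀ e ∈ shiftArcs k E, e.1 < e.2 ∧ w[e.1]? = some false ∧ w[e.2]? = some true) ↔
      ∀ e ∈ E, e.1 < e.2 ∧ (w.drop k)[e.1]? = some false ∧ (w.drop k)[e.2]? = some true := by
    simp only [shiftArcs, forall_mem_map, Function.Embedding.coe_prodMap, Prod.map,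
      addLeftEmbedding_apply, List.getElem?_drop, add_lt_add_iff_left]
  exact ⟨fun h => ⟨harc.2 h.arc, hpair.2 h.pairwise⟩, fun h => ⟨harc.1 h.arc, hpair.1 h.pairwise⟩⟩

theorem lt_of_take {p : ℕ} (h : IsNCContraction (w.take p) E) {e : ℕ × ℕ} (he : e ∈ E) :
    e.1 < e.2 ∧ e.2 < p :=
  ⟨(h.arc e he).1, (take_iff.1 h).2 e he⟩

theorem lt_of_mem_shiftArcs {k : ℕ} (h : IsNCContraction (w.drop k) E) {e : ℕ × ℕ}
    (he : e ∈ shiftArcs k E) : k ≤ e.1 ∧ e.1 < e.2 ∧ e.2 < w.length := by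
  have h' := drop_iff.1 h
  obtain ⟨f, -, rfl⟩ := mem_shiftArcs.1 he
  exact ⟨Nat.le_add_right _ _, (h'.arc _ he).1, h'.snd_lt_length he⟩

end IsNCContraction

def glueArcs (p N : ℕ) (E₁ E₂ : Finset (ℕ × ℕ)) : Finset (ℕ × ℕ) :=
  insert (p, N) (E₁ ∪ shiftArcs (p + 1) E₂)

section glueArcs

variable {w : List Bool} {p : ℕ} {E₁ E₂ : Finset (ℕ × ℕ)}

theorem isNCContraction_glueArcs (hp : w[p]? = some false)
    (h₁ : IsNCContraction (w.take p) E₁) (h₂ : IsNCContraction (w.drop (p + 1)) E₂) :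
    IsNCContraction (w ++ [true]) (glueArcs p w.length E₁ E₂) := by
  have hpN := (List.getElem?_eq_some_iff.1 hp).1
  have hw₁ := (IsNCContraction.take_iff.1 h₁).1.append (v := [true])
  have hw₂ := (IsNCContraction.drop_iff.1 h₂).append (v := [true])
  refine ⟨fun e he => ?_, ?_⟩
  · rcases mem_insert.1 he with rfl | he
    · exact ⟨hpN, by rw [List.getElem?_append_left hpN, hp], by simp⟩
    · rcases mem_union.1 he with he | he
      exacts [hw₁.arc e he, hw₂.arc e he]
  · rw [glueArcs, coe_insert, coe_union, Set.pairwise_insert, Set.pairwise_union]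
    refine ⟨⟨hw₁.pairwise, hw₂.pairwise, fun e he f hf _ => ?_⟩, fun f hf _ => ?_⟩
    · have := h₁.lt_of_take he
      have := h₂.lt_of_mem_shiftArcs hf
      simp only [ArcsCompatible]
      omega
    · rcases hf with hf | hf
      · have := h₁.lt_of_take hf
        simp only [ArcsCompatible]
        omega
      · have := h₂.lt_of_mem_shiftArcs hf
        simp only [ArcsCompatible]
        omega

theorem card_glueArcs (h₁ : IsNCContraction (w.take p) E₁)
    (h₂ : IsNCContraction (w.drop (p + 1)) E₂) :
    (glueArcs p w.length E₁ E₂).card = E₁.card + E₂.card + 1 := by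
  have hdisj : Disjoint E₁ (shiftArcs (p + 1) E₂) := by
    refine disjoint_left.2 fun e he he' => ?_
    have := h₁.lt_of_take he
    have := h₂.lt_of_mem_shiftArcs he'
    omega
  have hnot : (p, w.length) ∉ E₁ ∪ shiftArcs (p + 1) E₂ := by
    intro h
    rcases mem_union.1 h with h | h
    · have := h₁.lt_of_take h
      simp only at this
      have := (IsNCContraction.take_iff.1 h₁).1.snd_lt_length h
      omega
    · have := h₂.lt_of_mem_shiftArcs h
      simp only at this
      omega
  rw [glueArcs, card_insert_of_notMem hnot, card_union_of_disjoint hdisj, shiftArcs, card_map]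

theorem glueArcs_filter_snd_lt {N : ℕ} (hpN : p ≤ N) (h₁ : ∀ e ∈ E₁, e.2 < p) :
    (glueArcs p N E₁ E₂).filter (·.2 < p) = E₁ := by
  ext e
  simp only [glueArcs, mem_filter, mem_insert, mem_union, mem_shiftArcs]
  constructor
  · rintro ⟨rfl | he | ⟨f, -, rfl⟩, hlt⟩
    · simp only at hlt; omega
    · exact he
    · simp only at hlt; omega
  · exact fun he => ⟨Or.inr (Or.inl he), h₁ e he⟩

theorem glueArcs_filter_lt_fst {N : ℕ} (h₁ : ∀ e ∈ E₁, e.1 < p) :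
    (glueArcs p N E₁ E₂).filter (p < ·.1) = shiftArcs (p + 1) E₂ := by
  ext e
  simp only [glueArcs, mem_filter, mem_insert, mem_union]
  constructor
  · rintro ⟨rfl | he | he, hlt⟩
    · simp only at hlt; omega
    · have := h₁ e he; omega
    · exact he
  · intro he
    obtain ⟨f, -, rfl⟩ := mem_shiftArcs.1 he
    exact ⟨Or.inr (Or.inr he), by simp only; omega⟩

theorem glueArcs_inj {q : ℕ} {F₁ F₂ : Finset (ℕ × ℕ)}
    (h₁ : IsNCContraction (w.take p) E₁) (hq : w[q]? = some false)
    (h₁' : IsNCContraction (w.take q) F₁) (h₂' : IsNCContraction (w.drop (q + 1)) F₂)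
    (heq : glueArcs p w.length E₁ E₂ = glueArcs q w.length F₁ F₂) :
    p = q ∧ E₁ = F₁ ∧ E₂ = F₂ := by
  have hqN := (List.getElem?_eq_some_iff.1 hq).1
  have hp : (p, w.length) ∈ glueArcs q w.length F₁ F₂ := heq ▸ mem_insert_self _ _
  obtain rfl : p = q := by
    rcases mem_insert.1 hp with h | h
    · exact (Prod.ext_iff.1 h).1
    rcases mem_union.1 h with h | h
    · have := h₁'.lt_of_take h
      simp only at this
      omega
    · have := h₂'.lt_of_mem_shiftArcs h
      simp only at this
      omega
  have hE₁ : ∀ e ∈ E₁, e.2 < p := fun e he => (h₁.lt_of_take he).2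
  have hF₁ : ∀ e ∈ F₁, e.2 < p := fun e he => (h₁'.lt_of_take he).2
  refine ⟨rfl, ?_, shiftArcs_injective (p + 1) ?_⟩
  · rw [← glueArcs_filter_snd_lt hqN.le hE₁, heq, glueArcs_filter_snd_lt hqN.le hF₁]
  · have hE₁' : ∀ e ∈ E₁, e.1 < p := fun e he => (h₁.lt_of_take he).1.trans (hE₁ e he)
    have hF₁' : ∀ e ∈ F₁, e.1 < p := fun e he => (h₁'.lt_of_take he).1.trans (hF₁ e he)
    rw [← glueArcs_filter_lt_fst (E₂ := E₂) (N := w.length) hE₁', heq,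
      glueArcs_filter_lt_fst hF₁']

end glueArcs

theorem IsNCContraction.exists_glueArcs_eq {w : List Bool} {E : Finset (ℕ × ℕ)} {p : ℕ}
    (h : IsNCContraction (w ++ [true]) E) (hp : (p, w.length) ∈ E) :
    w[p]? = some false ∧ ∃ E₁ E₂, IsNCContraction (w.take p) E₁ ∧
      IsNCContraction (w.drop (p + 1)) E₂ ∧ glueArcs p w.length E₁ E₂ = E := by
  obtain ⟨hpN, hpw, -⟩ := h.arc _ hp
  simp only at hpN hpw
  rw [List.getElem?_append_left hpN] at hpw
  have hsplit : ∀ f ∈ E, f ≠ (p, w.length) → f.2 < p ∨ (p < f.1 ∧ f.2 < w.length) := by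
    intro f hf hne
    have hc := h.pairwise hp hf hne.symm
    have := (h.arc f hf).1
    have := h.snd_lt_length hf
    simp only [ArcsCompatible, List.length_append, List.length_singleton] at hc this
    omega
  set S := E.filter (p < ·.1)
  have hS : shiftArcs (p + 1) (S.image fun e => (e.1 - (p + 1), e.2 - (p + 1))) = S := by
    refine shiftArcs_image_sub fun e he => ?_
    obtain ⟨he, hpe⟩ := mem_filter.1 he
    have := (h.arc e he).1
    omega
  refine ⟨hpw, E.filter (·.2 < p), S.image fun e => (e.1 - (p + 1), e.2 - (p + 1)), ?_, ?_, ?_⟩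
  · refine IsNCContraction.take_iff.2 ⟨(h.mono (filter_subset _ _)).of_append fun e he => ?_,
      fun e he => (mem_filter.1 he).2⟩
    have := (mem_filter.1 he).2
    omega
  · rw [IsNCContraction.drop_iff, hS]
    refine (h.mono (filter_subset _ _)).of_append fun e he => ?_
    obtain ⟨he, hpe⟩ := mem_filter.1 he
    have := (h.arc e he).1
    rcases hsplit e he (by rintro rfl; simp at hpe) with h' | h' <;> omega
  · ext x
    rw [glueArcs, hS]
    simp only [mem_insert, mem_union, S, mem_filter]
    constructor
    · rintro (rfl | ⟨hx, -⟩ | ⟨hx, -⟩) <;> assumption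
    · intro hx
      by_cases hne : x = (p, w.length)
      · exact Or.inl hne
      · rcases hsplit x hx hne with h' | h'
        exacts [Or.inr (Or.inl ⟨hx, h'⟩), Or.inr (Or.inr ⟨hx, h'.1⟩)]

open scoped Classical in
noncomputable def ncContractions (w : List Bool) : Finset (Finset (ℕ × ℕ)) :=
  ((range w.length ×ˢ range w.length).powerset).filter (IsNCContraction w)

theorem mem_ncContractions {w : List Bool} {E : Finset (ℕ × ℕ)} :
    E ∈ ncContractions w ↔ IsNCContraction w E := by
  classical
  rw [ncContractions, mem_filter, mem_powerset, and_iff_right_iff_imp]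
  intro h e he
  have := (h.arc e he).1
  have := h.snd_lt_length he
  exact mem_product.2 ⟨mem_range.2 (by omega), mem_range.2 this⟩

noncomputable def ncWeight (y : R) (w : List Bool) : R :=
  ∑ E ∈ ncContractions w, y ^ E.card

theorem ncWeight_nil (y : R) : ncWeight y [] = 1 := by
  have : ncContractions [] = {∅} := by
    ext E
    rw [mem_ncContractions, mem_singleton]
    refine ⟨fun h => eq_empty_of_forall_notMem fun e he => ?_, ?_⟩
    · simpa using h.snd_lt_length he
    · rintro rfl
      exact ⟨by simp, by simp⟩
  simp [ncWeight, this]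

theorem ncWeight_append_false (y : R) (w : List Bool) :
    ncWeight y (w ++ [false]) = ncWeight y w := by
  have : ncContractions (w ++ [false]) = ncContractions w := by
    ext E
    simp only [mem_ncContractions]
    refine ⟨fun h => h.of_append fun e he => ?_, IsNCContraction.append⟩
    have hlt := h.snd_lt_length he
    have htrue := (h.arc e he).2.2
    simp only [List.length_append, List.length_singleton] at hlt
    by_contra hge
    rw [show e.2 = w.length by omega] at htrue
    simp at htrue
  rw [ncWeight, this, ncWeight]

theorem ncContractions_append_true_filter_free (w : List Bool) :
    (ncContractions (w ++ [true])).filter (fun E => ∀ e ∈ E, e.2 ≠ w.length) =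
      ncContractions w := by
  ext E
  simp only [mem_filter, mem_ncContractions]
  refine ⟨fun ⟨h, hE⟩ => h.of_append fun e he => ?_,
    fun h => ⟨h.append, fun e he => (h.snd_lt_length he).ne⟩⟩
  have := h.snd_lt_length he
  have := hE e he
  simp only [List.length_append, List.length_singleton] at *
  omega

theorem sum_ncContractions_append_true_filter_not_free (y : R) (w : List Bool) :
    ∑ E ∈ (ncContractions (w ++ [true])).filter (fun E => ¬ ∀ e ∈ E, e.2 ≠ w.length),
        y ^ E.card =
      ∑ x ∈ (falsePositions w).sigma
          (fun p => ncContractions (w.take p) ×ˢ ncContractions (w.drop (p + 1))),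
        y ^ (x.2.1.card + x.2.2.card + 1) := by
  symm
  refine sum_bij (fun x _ => glueArcs x.1 w.length x.2.1 x.2.2) ?_ ?_ ?_ ?_
  · rintro ⟨p, E₁, E₂⟩ hx
    simp only [mem_sigma, mem_product, mem_falsePositions, mem_ncContractions] at hx
    simp only [mem_filter, mem_ncContractions, not_forall, not_not]
    exact ⟨isNCContraction_glueArcs hx.1 hx.2.1 hx.2.2, _, mem_insert_self _ _, rfl⟩
  · rintro ⟨p, E₁, E₂⟩ hx ⟨q, F₁, F₂⟩ hy heq
    simp only [mem_sigma, mem_product, mem_falsePositions, mem_ncContractions] at hx hy heq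
    obtain ⟨rfl, rfl, rfl⟩ := glueArcs_inj hx.2.1 hy.1 hy.2.1 hy.2.2 heq
    rfl
  · intro E hE
    simp only [mem_filter, mem_ncContractions, not_forall, not_not] at hE
    obtain ⟨h, ⟨p, N⟩, he, rfl⟩ := hE
    obtain ⟨hp, E₁, E₂, h₁, h₂, rfl⟩ := h.exists_glueArcs_eq he
    refine ⟨⟨p, E₁, E₂⟩, ?_, rfl⟩
    simp only [mem_sigma, mem_product, mem_falsePositions, mem_ncContractions]
    exact ⟨hp, h₁, h₂⟩
  · rintro ⟨p, E₁, E₂⟩ hx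
    simp only [mem_sigma, mem_product, mem_ncContractions] at hx
    rw [card_glueArcs hx.2.1 hx.2.2]

theorem ncWeight_append_true (y : R) (w : List Bool) :
    ncWeight y (w ++ [true]) =
      ncWeight y w + y * falseSplitSum (fun u v => ncWeight y u * ncWeight y v) w := by
  have hsplit : y * falseSplitSum (fun u v => ncWeight y u * ncWeight y v) w =
      ∑ x ∈ (falsePositions w).sigma
          (fun p => ncContractions (w.take p) ×ˢ ncContractions (w.drop (p + 1))),
        y ^ (x.2.1.card + x.2.2.card + 1) := by
    rw [sum_sigma, falseSplitSum, mul_sum]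
    refine sum_congr rfl fun p _ => ?_
    rw [ncWeight, ncWeight, sum_mul_sum, sum_product, mul_sum]
    refine sum_congr rfl fun _ _ => ?_
    rw [mul_sum]
    exact sum_congr rfl fun _ _ => by ring
  rw [ncWeight, ← sum_filter_add_sum_filter_not _ (fun E => ∀ e ∈ E, e.2 ≠ w.length),
    ncContractions_append_true_filter_free, sum_ncContractions_append_true_filter_not_free,
    hsplit, ncWeight]

end Contractions

section Series

open PowerSeries

variable {R : Type*} [CommSemiring R]

def choices (n : ℕ) : Finset (List Bool) :=
  (univ : Finset (Fin n → Bool)).map ⟨List.ofFn, List.ofFn_injective⟩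

theorem mem_choices {n : ℕ} {l : List Bool} : l ∈ choices n ↔ l.length = n := by
  simp only [choices, mem_map, mem_univ, true_and, Function.Embedding.coeFn_mk]
  constructor
  · rintro ⟨f, rfl⟩
    exact List.length_ofFn
  · rintro rfl
    exact ⟨fun i => l[i], List.ofFn_getElem⟩

theorem choices_zero : choices 0 = {[]} := by
  ext l
  rw [mem_choices, mem_singleton, List.length_eq_zero_iff]

theorem sum_choices_succ {M : Type*} [AddCommMonoid M] (f : List Bool → M) (n : ℕ) :
    ∑ l ∈ choices (n + 1), f l = ∑ l ∈ choices n, (f (l ++ [false]) + f (l ++ [true])) := by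
  rw [choices, choices, sum_map, sum_map, ← (Fin.snocEquiv fun _ => Bool).sum_comp,
    Fintype.sum_prod_type, Fintype.sum_bool, ← sum_add_distrib]
  refine sum_congr rfl fun g _ => ?_
  simp only [Fin.snocEquiv, Equiv.coe_fn_mk, Function.Embedding.coeFn_mk, List.ofFn_succ',
    Fin.snoc_castSucc, Fin.snoc_last, List.concat_eq_append, add_comm]

noncomputable def choiceSeries (z : R) : (List Bool → R) →ₗ[R] PowerSeries R where
  toFun f := mk fun n => ∑ l ∈ choices n, z ^ l.count false * f l
  map_add' f g := by
    ext n
    simp [mul_add, sum_add_distrib]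
  map_smul' a f := by
    ext n
    simp [mul_sum, mul_left_comm]

theorem coeff_choiceSeries (z : R) (f : List Bool → R) (n : ℕ) :
    coeff n (choiceSeries z f) = ∑ l ∈ choices n, z ^ l.count false * f l := by
  simp [choiceSeries]

theorem choiceSeries_eq (z : R) (f : List Bool → R) :
    choiceSeries z f = C (f []) + X * (C z * choiceSeries z (fun l => f (l ++ [false])) +
      choiceSeries z (fun l => f (l ++ [true]))) := by
  ext (_ | n)
  · simp [coeff_choiceSeries, choices_zero]
  · rw [map_add, coeff_C, if_neg n.succ_ne_zero, zero_add, coeff_succ_X_mul, map_add, coeff_C_mul,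
      coeff_choiceSeries, coeff_choiceSeries, coeff_choiceSeries, sum_choices_succ, mul_sum,
      ← sum_add_distrib]
    refine sum_congr rfl fun l _ => ?_
    rw [List.count_append, List.count_append, show [false].count false = 1 from rfl,
      show [true].count false = 0 from rfl, add_zero, pow_succ]
    ring

theorem count_false_eq_of_getElem? {l : List Bool} {p : ℕ} (h : l[p]? = some false) :
    l.count false = (l.take p).count false + 1 + (l.drop (p + 1)).count false := by
  conv_lhs => rw [eq_take_append_false_cons_drop h]
  rw [List.count_append, List.count_cons_self, add_assoc, add_comm 1]

theorem sum_choices_succ_falseSplitSum {M : Type*} [AddCommMonoid M]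
    (F : List Bool → List Bool → M) (n : ℕ) :
    ∑ l ∈ choices (n + 1), falseSplitSum F l =
      ∑ x ∈ antidiagonal n, ∑ u ∈ choices x.1, ∑ v ∈ choices x.2, F u v := by
  simp only [falseSplitSum, ← sum_product']
  rw [sum_sigma', sum_sigma']
  refine sum_nbij' (fun x => ⟨(x.2, n - x.2), (x.1.take x.2, x.1.drop (x.2 + 1))⟩)
    (fun x => ⟨x.2.1 ++ false :: x.2.2, x.2.1.length⟩) ?_ ?_ ?_ ?_ ?_
  · rintro ⟨l, p⟩ hx
    simp only [mem_sigma, mem_choices, mem_falsePositions] at hx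
    have := (List.getElem?_eq_some_iff.1 hx.2).1
    simp only [mem_sigma, HasAntidiagonal.mem_antidiagonal, mem_product, mem_choices,
      List.length_take, List.length_drop]
    omega
  · rintro ⟨⟨a, b⟩, u, v⟩ hx
    simp only [mem_sigma, HasAntidiagonal.mem_antidiagonal, mem_product, mem_choices] at hx
    simp only [mem_sigma, mem_choices, mem_falsePositions, List.length_append, List.length_cons]
    refine ⟨by omega, ?_⟩
    rw [List.getElem?_append_right le_rfl, Nat.sub_self, List.getElem?_cons_zero]
  · rintro ⟨l, p⟩ hx
    simp only [mem_sigma, mem_falsePositions] at hx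
    have := (List.getElem?_eq_some_iff.1 hx.2).1
    exact Sigma.ext (eq_take_append_false_cons_drop hx.2).symm
      (heq_of_eq (by simp only [List.length_take]; omega))
  · rintro ⟨⟨a, b⟩, u, v⟩ hx
    simp only [mem_sigma, HasAntidiagonal.mem_antidiagonal, mem_product, mem_choices] at hx
    refine Sigma.ext ?_ (heq_of_eq ?_)
    · simp only [Prod.mk.injEq]
      omega
    · simp [List.drop_length_add_append]
  · exact fun _ _ => rfl

theorem choiceSeries_falseSplitSum (z : R) (f g : List Bool → R) :
    choiceSeries z (falseSplitSum fun u v => f u * g v) =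
      X * C z * choiceSeries z f * choiceSeries z g := by
  have hweight : ∀ l, z ^ l.count false * falseSplitSum (fun u v => f u * g v) l =
      falseSplitSum (fun u v => z * (z ^ u.count false * f u) * (z ^ v.count false * g v)) l := by
    intro l
    rw [falseSplitSum, falseSplitSum, mul_sum]
    refine sum_congr rfl fun p hp => ?_
    rw [count_false_eq_of_getElem? (mem_falsePositions.1 hp), pow_add, pow_add, pow_one]
    ring
  ext (_ | n)
  · simp [coeff_choiceSeries, choices_zero, falseSplitSum, falsePositions]
  · rw [mul_assoc, mul_assoc, coeff_succ_X_mul, coeff_C_mul, coeff_mul, coeff_choiceSeries]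
    simp only [hweight, sum_choices_succ_falseSplitSum]
    rw [mul_sum]
    refine sum_congr rfl fun x _ => ?_
    rw [coeff_choiceSeries, coeff_choiceSeries, sum_mul_sum, mul_sum]
    refine sum_congr rfl fun u _ => ?_
    rw [mul_sum]
    exact sum_congr rfl fun v _ => by ring

variable (s : ℕ) (y z : R)

/-- For `k = 0`, the generating series of the theorem in one variable over `R`, with `y` marking
edges and `z` marking letters `a`. -/
noncomputable def paddedSeries (k : ℕ) : PowerSeries R :=
  choiceSeries z fun l => ncWeight y (blockWord s l ++ List.replicate k true)

theorem paddedSeries_succ (k : ℕ) :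
    paddedSeries s y z (k + 1) =
      paddedSeries s y z k * (1 + X * C y * C z * paddedSeries s y z 0) := by
  have hw : (fun l => ncWeight y (blockWord s l ++ List.replicate (k + 1) true)) =
      (fun l => ncWeight y (blockWord s l ++ List.replicate k true)) + y • falseSplitSum
        (fun u v => ncWeight y (blockWord s u ++ List.replicate 0 true) *
          ncWeight y (blockWord s v ++ List.replicate k true)) := by
    ext l
    rw [List.replicate_succ', ← List.append_assoc, ncWeight_append_true, falseSplitSum_append,
      falseSplitSum_replicate_true, add_zero, falseSplitSum_blockWord]
    simp
  rw [paddedSeries, hw, map_add, map_smul, choiceSeries_falseSplitSum, smul_eq_C_mul]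
  simp only [paddedSeries]
  ring

theorem paddedSeries_eq_mul_pow (k : ℕ) :
    paddedSeries s y z k =
      paddedSeries s y z 0 * (1 + X * C y * C z * paddedSeries s y z 0) ^ k := by
  induction k with
  | zero => rw [pow_zero, mul_one]
  | succ k ih => rw [paddedSeries_succ, ih, pow_succ, mul_assoc]

theorem paddedSeries_zero_eq :
    paddedSeries s y z 0 = 1 + X * (C z * paddedSeries s y z 0 + paddedSeries s y z s) := by
  have hnil : ncWeight y (blockWord s [] ++ List.replicate 0 true) = 1 := ncWeight_nil y
  have hfalse : (fun l => ncWeight y (blockWord s (l ++ [false]) ++ List.replicate 0 true)) =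
      fun l => ncWeight y (blockWord s l ++ List.replicate 0 true) := by
    ext l
    simp [blockWord, ncWeight_append_false]
  have htrue : (fun l => ncWeight y (blockWord s (l ++ [true]) ++ List.replicate 0 true)) =
      fun l => ncWeight y (blockWord s l ++ List.replicate s true) := by
    ext l
    simp [blockWord]
  conv_lhs => rw [paddedSeries, choiceSeries_eq, hnil, hfalse, htrue, map_one]
  rfl

theorem paddedSeries_functional_equation :
    paddedSeries s y z 0 = 1 + X * C z * paddedSeries s y z 0 +
      X * paddedSeries s y z 0 * (1 + X * C y * C z * paddedSeries s y z 0) ^ s := by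
  conv_lhs => rw [paddedSeries_zero_eq, paddedSeries_eq_mul_pow s y z s]
  ring

end Series

section Transfer

open MvPowerSeries

theorem card_filter_eq_count_ofFn {α : Type*} [DecidableEq α] {n : ℕ} (f : Fin n → α) (a : α) :
    #{k | f k = a} = (List.ofFn f).count a := by
  induction n with
  | zero => simp
  | succ n ih =>
    rw [List.ofFn_succ, List.count_cons, ← ih (fun k => f k.succ), Fin.univ_succ, filter_cons]
    split_ifs <;> simp_all [filter_map, card_map]

def finArcEmbedding (N : ℕ) : Fin N × Fin N ↪ ℕ × ℕ :=
  Fin.valEmbedding.prodMap Fin.valEmbedding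

theorem isNCContraction_map_iff (w : List Bool) (E : Finset (Fin w.length × Fin w.length)) :
    IsNCContraction w (E.map (finArcEmbedding w.length)) ↔
      IsContraction w.get E ∧ IsNoncrossing E := by
  have harc : (∀ e ∈ E.map (finArcEmbedding w.length),
        e.1 < e.2 ∧ w[e.1]? = some false ∧ w[e.2]? = some true) ↔
      ∀ e ∈ E, e.1 < e.2 ∧ w.get e.1 = false ∧ w.get e.2 = true := by
    simp only [forall_mem_map, finArcEmbedding, Function.Embedding.coe_prodMap, Prod.map_fst,
      Prod.map_snd, Fin.valEmbedding_apply, Fin.lt_def, List.getElem?_eq_getElem (Fin.is_lt _),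
      Option.some.injEq, List.get_eq_getElem]
  have hpair : ((E.map (finArcEmbedding w.length) : Finset (ℕ × ℕ)) : Set (ℕ × ℕ)).Pairwise
      ArcsCompatible ↔ ∀ e ∈ E, ∀ f ∈ E, e ≠ f →
        ArcsCompatible (e.1.val, e.2.val) (f.1.val, f.2.val) := by
    rw [coe_map, (Function.Embedding.injective _).injOn.pairwise_image]
    rfl
  constructor
  · rintro ⟨h₁, h₂⟩
    have h₁ := harc.1 h₁
    have h₂ := hpair.1 h₂
    refine ⟨⟨h₁, fun e he f hf hne => ?_⟩, fun e he f hf => ?_⟩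
    · have := h₂ e he f hf hne
      have := (h₁ e he).1
      have := (h₁ f hf).1
      simp only [ArcsCompatible, ne_eq, Fin.ext_iff, Fin.lt_def] at *
      omega
    · have := (h₁ e he).1
      have := (h₁ f hf).1
      rcases eq_or_ne e f with rfl | hne
      · simp only [Crosses, Fin.lt_def]
        omega
      · have := h₂ e he f hf hne
        simp only [ArcsCompatible, Crosses, Fin.lt_def] at this ⊢
        omega
  · rintro ⟨⟨h₁, h₂⟩, h₃⟩
    refine ⟨harc.2 h₁, hpair.2 fun e he f hf hne => ?_⟩
    have := (h₁ e he).1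
    have := (h₁ f hf).1
    have := h₂ e he f hf hne
    have := h₃ e he f hf
    simp only [ArcsCompatible, Crosses, ne_eq, Fin.ext_iff, Fin.lt_def] at *
    omega

open scoped Classical in
theorem natCard_contractions (w : List Bool) (Q : Prop) [Decidable Q] (j : ℕ) :
    Nat.card {E : Finset (Fin w.length × Fin w.length) //
        Q ∧ IsContraction w.get E ∧ IsNoncrossing E ∧ E.card = j} =
      #{E ∈ ncContractions w | Q ∧ E.card = j} := by
  rw [Nat.card_eq_fintype_card, Fintype.card_subtype]
  refine card_bij (fun E _ => E.map (finArcEmbedding w.length)) (fun E hE => ?_)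
    (fun _ _ _ _ h => map_injective _ h) (fun F hF => ?_)
  · simp only [mem_filter, mem_univ, true_and] at hE
    rw [mem_filter, mem_ncContractions, isNCContraction_map_iff, card_map]
    exact ⟨⟨hE.2.1, hE.2.2.1⟩, hE.1, hE.2.2.2⟩
  · rw [mem_filter, mem_ncContractions] at hF
    have hsub : F ⊆ univ.map (finArcEmbedding w.length) := fun e he => by
      have := (hF.1.arc e he).1
      have := hF.1.snd_lt_length he
      exact mem_map.2 ⟨(⟨e.1, by omega⟩, ⟨e.2, this⟩), mem_univ _, rfl⟩
    obtain ⟨E, -, rfl⟩ := subset_map_iff.1 hsub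
    rw [isNCContraction_map_iff, card_map] at hF
    exact ⟨E, by simpa using ⟨hF.2.1, hF.1.1, hF.1.2, hF.2.2⟩, rfl⟩

theorem natCard_subtype_sigma {α : Type*} [Fintype α] {β : α → Type*} [∀ a, Finite (β a)]
    (P : Sigma β → Prop) : Nat.card {x // P x} = ∑ a, Nat.card {b // P ⟨a, b⟩} := by
  rw [← Nat.card_sigma]
  exact Nat.card_congr ⟨fun x => ⟨x.1.1, x.1.2, x.2⟩, fun x => ⟨⟨x.1, x.2.1⟩, x.2.2⟩,
    fun _ => rfl, fun _ => rfl⟩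

theorem pairCountAS_eq_sum (s n j i : ℕ) :
    pairCountAS s n j i =
      ∑ l ∈ choices n, #{E ∈ ncContractions (blockWord s l) | l.count false = i ∧ E.card = j} := by
  rw [pairCountAS, natCard_subtype_sigma, choices, sum_map]
  refine sum_congr rfl fun f _ => ?_
  rw [Function.Embedding.coeFn_mk, ← card_filter_eq_count_ofFn]
  exact natCard_contractions (blockWord s (List.ofFn f)) (#{k | f k = false} = i) j

theorem coeff_X_pow_mul_X_pow {R : Type*} [CommSemiring R] (x : Fin 2 →₀ ℕ) (a b : ℕ) :
    coeff x (X 1 ^ a * X 0 ^ b : MvPowerSeries (Fin 2) R) = if a = x 1 ∧ b = x 0 then 1 else 0 := by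
  rw [X_pow_eq, X_pow_eq, monomial_mul_monomial, coeff_monomial, one_mul]
  congr 1
  refine propext ⟨fun h => by simp [h], fun ⟨ha, hb⟩ => ?_⟩
  ext k
  fin_cases k <;> simp [ha, hb]

theorem coeff_coeff_paddedSeries (s n : ℕ) (x : Fin 2 →₀ ℕ) :
    coeff x (PowerSeries.coeff n
        (paddedSeries s (X 0) (X 1) 0 : PowerSeries (MvPowerSeries (Fin 2) ℤ))) =
      pairCountAS s n (x 0) (x 1) := by
  rw [paddedSeries, coeff_choiceSeries, map_sum, pairCountAS_eq_sum, Nat.cast_sum]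
  refine sum_congr rfl fun l _ => ?_
  rw [List.replicate_zero, List.append_nil, ncWeight, mul_sum, map_sum]
  simp_rw [coeff_X_pow_mul_X_pow]
  rw [sum_boole]

theorem cons_eq_single_add_single_add_single (n : ℕ) (x : Fin 2 →₀ ℕ) :
    Finsupp.cons n x = Finsupp.single 0 n + Finsupp.single 1 (x 0) + Finsupp.single 2 (x 1) := by
  ext k
  fin_cases k
  · simp
  · simpa using Finsupp.cons_succ (0 : Fin 2) n x
  · simpa using Finsupp.cons_succ (1 : Fin 2) n x

theorem finSuccEquiv_eq_paddedSeries (s : ℕ) {A : MvPowerSeries (Fin 3) ℤ}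
    (hA : ∀ n j i : ℕ, coeff (Finsupp.single 0 n + Finsupp.single 1 j + Finsupp.single 2 i) A =
      (pairCountAS s n j i : ℤ)) :
    finSuccEquiv ℤ 2 A = paddedSeries s (X 0) (X 1) 0 := by
  ext n x
  rw [coeff_coeff_finSuccEquiv, cons_eq_single_add_single_add_single, hA, coeff_coeff_paddedSeries]

end Transfer

end BosonWord

theorem stmt6_general (s : ℕ) (A : MvPowerSeries (Fin 3) ℤ)
    (hA : ∀ n j i : ℕ,
      MvPowerSeries.coeff
          (Finsupp.single 0 n + Finsupp.single 1 j + Finsupp.single 2 i) A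
        = (pairCountAS s n j i : ℤ)) :
    A = 1 + MvPowerSeries.X 0 * MvPowerSeries.X 2 * A
        + MvPowerSeries.X 0 * A
            * (1 + MvPowerSeries.X 0 * MvPowerSeries.X 1 * MvPowerSeries.X 2 * A) ^ s := by
  apply (MvPowerSeries.finSuccEquiv ℤ 2).injective
  have hX₁ : (MvPowerSeries.X 1 : MvPowerSeries (Fin 3) ℤ) = MvPowerSeries.X (Fin.succ 0) := rfl
  have hX₂ : (MvPowerSeries.X 2 : MvPowerSeries (Fin 3) ℤ) = MvPowerSeries.X (Fin.succ 1) := rfl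
  simp only [map_add, map_mul, map_pow, map_one, hX₁, hX₂, MvPowerSeries.finSuccEquiv_X_zero,
    MvPowerSeries.finSuccEquiv_X_succ, BosonWord.finSuccEquiv_eq_paddedSeries s hA]
  exact BosonWord.paddedSeries_functional_equation s _ _

theorem stmt6 (s : ℕ) (hs : 1 ≤ s) (A : MvPowerSeries (Fin 3) ℤ)
    (hA : ∀ n j i : ℕ,
      MvPowerSeries.coeff
          (Finsupp.single 0 n + Finsupp.single 1 j + Finsupp.single 2 i) A
        = (pairCountAS s n j i : ℤ)) :
    A = 1 + MvPowerSeries.X 0 * MvPowerSeries.X 2 * A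
        + MvPowerSeries.X 0 * A
            * (1 + MvPowerSeries.X 0 * MvPowerSeries.X 1 * MvPowerSeries.X 2 * A) ^ s :=
  stmt6_general s A hA
end

section
/- For all natural numbers n, i, j with j ≤ i ≤ n−j, the binomial-coefficient identity (j+1) · C(n+1, j+1) · C(n−j, n−i) · C(n−i, j) = (n+1) · C(2j, j) · C(n, i+j) · C(i+j, 2j) holds, where C denotes the binomial coefficient. (Equivalently, (1/(n+1))·C(n+1,j+1)·C(n−j,n−i)·C(n−i,j) = c_j·C(n,i+j)·C(i+j,2j), where c_j = C(2j,j)/(j+1) is the j-th Catalan number.) -/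
/-!
Both sides are `n + 1` times the number of ways to choose, from `n` objects, two disjoint
`j`-sets (ordered) and a disjoint `(i - j)`-set: on the left, absorb `j + 1` via
`(j + 1) C(n+1, j+1) = (n + 1) C(n, j)`; on each side, `Nat.choose_mul` rewrites the
product of binomials into the trinomial form `C(n, j) C(n - j, j) C(n - 2j, i - j)`.
-/

namespace Nat

theorem choose_mul_choose_sub_mul_choose_sub {n i j : ℕ} (hji : j ≤ i) (hijn : i + j ≤ n) :
    n.choose j * (n - j).choose (n - i) * (n - i).choose j
      = n.choose (i + j) * (i + j).choose (2 * j) * (2 * j).choose j := by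
  have hsymm : (n - j - j).choose (n - i - j) = (n - 2 * j).choose (i + j - 2 * j) := by
    rw [show n - j - j = n - 2 * j by omega]
    exact choose_symm_of_eq_add (by omega)
  calc n.choose j * (n - j).choose (n - i) * (n - i).choose j
      = n.choose j * (n - j).choose j * (n - j - j).choose (n - i - j) := by
        rw [mul_assoc, choose_mul (by omega), mul_assoc]
    _ = n.choose (2 * j) * (2 * j).choose j * (n - 2 * j).choose (i + j - 2 * j) := by
        rw [choose_mul (by omega), show 2 * j - j = j by omega, hsymm]
    _ = n.choose (i + j) * (i + j).choose (2 * j) * (2 * j).choose j := by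
        rw [choose_mul (by omega : 2 * j ≤ i + j)]
        ring

end Nat

theorem stmt9 (n i j : ℕ) (hji : j ≤ i) (hin : i ≤ n - j) :
    (j + 1) * Nat.choose (n + 1) (j + 1) * Nat.choose (n - j) (n - i) * Nat.choose (n - i) j
      = (n + 1) * Nat.choose (2 * j) j * Nat.choose n (i + j)
          * Nat.choose (i + j) (2 * j) := by
  have hijn : i + j ≤ n := by omega
  calc (j + 1) * Nat.choose (n + 1) (j + 1) * Nat.choose (n - j) (n - i) * Nat.choose (n - i) j
      = (n + 1) * (n.choose j * (n - j).choose (n - i) * (n - i).choose j) := by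
        rw [mul_comm (j + 1), ← Nat.add_one_mul_choose_eq]
        ring
    _ = (n + 1) * Nat.choose (2 * j) j * Nat.choose n (i + j) * Nat.choose (i + j) (2 * j) := by
        rw [Nat.choose_mul_choose_sub_mul_choose_sub hji hijn]
        ring
end
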